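/- arXiv:1708.07639 — 6 statements merged into one kernel-verified Lean document; each statement's English description precedes it below -/
import Mathlib

section
/- Assume (G1): there exist γ > 0 and C₁ ≥ 0 such that ⟨g(v), v⟩ ≥ γ |j v|_H² − C₁ for all v ∈ V; and (G2): there exist K > 0 and C₂ ≥ 0 such that ‖g(v)‖_{V′} ≤ C₂ + K ⟨g(v), v⟩ for all v ∈ V. Let h : [0,∞) → H be continuous with ‖h‖_{S²} < ∞. Then every strong solution u of ü + A u + g(u̇) = h is bounded on [0,∞), in the sense that sup_{t≥0} (|j u̇(t)|_H² + ‖u(t)‖_V²) < ∞. -/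
open scoped RealInnerProductSpace
open Set MeasureTheory intervalIntegral

/-- Integral of a nonnegative `S²`-type function over `[a,b]` is at most `(b-a+1)P`. -/
lemma aux_int_bound (p : ℝ → ℝ) (P : ℝ) (hP0 : 0 ≤ P)
    (hc : ContinuousOn p (Ici 0)) (hnn : ∀ t, 0 ≤ t → 0 ≤ p t)
    (hP : ∀ a, 0 ≤ a → ∫ s in a..a+1, p s ≤ P) :
    ∀ a b : ℝ, 0 ≤ a → a ≤ b → ∫ s in a..b, p s ≤ (b - a + 1) * P := by
  have hint : ∀ a b : ℝ, 0 ≤ a → a ≤ b → IntervalIntegrable p volume a b := by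
    intro a b ha hab
    exact (hc.mono (by rw [uIcc_of_le hab]; exact fun x hx => le_trans ha hx.1)).intervalIntegrable
  have key : ∀ n : ℕ, ∀ a b : ℝ, 0 ≤ a → a ≤ b → b ≤ a + n → ∫ s in a..b, p s ≤ n * P := by
    intro n
    induction n with
    | zero =>
      intro a b ha hab hba
      have : b = a := le_antisymm (by simpa using hba) hab
      simp [this]
    | succ n ih =>
      intro a b ha hab hba
      by_cases hb1 : b ≤ a + 1
      · have h1 : ∫ s in a..b, p s ≤ ∫ s in a..a+1, p s := by
          apply integral_mono_interval le_rfl hab hb1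
          · filter_upwards [ae_restrict_mem measurableSet_Ioc] with x hx
            exact hnn x (le_trans ha (le_of_lt hx.1))
          · exact hint a (a+1) ha (by linarith)
        have h2 := hP a ha
        have : (n : ℝ) * P ≥ 0 := mul_nonneg (by positivity) hP0
        push_cast
        linarith
      · push_neg at hb1
        have hsplit : (∫ s in a..a+1, p s) + ∫ s in (a+1)..b, p s = ∫ s in a..b, p s :=
          integral_add_adjacent_intervals (hint a (a+1) ha (by linarith))
            (hint (a+1) b (by linarith) (le_of_lt hb1))
        have h2 := ih (a+1) b (by linarith) (le_of_lt hb1) (by push_cast at hba ⊢; linarith)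
        have h3 := hP a ha
        push_cast
        linarith
  intro a b ha hab
  have h1 : b ≤ a + (⌈b - a⌉₊ : ℝ) := by
    have := Nat.le_ceil (b - a); linarith
  have h2 : (⌈b - a⌉₊ : ℝ) ≤ (b - a) + 1 := by
    have := Nat.ceil_lt_add_one (by linarith : (0:ℝ) ≤ b - a); linarith
  calc ∫ s in a..b, p s ≤ (⌈b - a⌉₊ : ℝ) * P := key _ a b ha hab h1
    _ ≤ (b - a + 1) * P := by apply mul_le_mul_of_nonneg_right h2 hP0

/-- Scalar comparison lemma: if `y' ≤ p - ε y` with `p ≥ 0` of bounded unit-interval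
integrals, then `y` stays bounded. -/
lemma aux_decay (y y' p : ℝ → ℝ) (T P ε : ℝ) (hT : 0 ≤ T) (hε : 0 < ε)
    (hy : ∀ t ∈ Icc (0:ℝ) T, HasDerivWithinAt y (y' t) (Ici 0) t)
    (hy'c : ContinuousOn y' (Icc 0 T))
    (hp_cont : ContinuousOn p (Ici 0)) (hp_nn : ∀ t, 0 ≤ t → 0 ≤ p t)
    (hP0 : 0 ≤ P) (hP : ∀ a, 0 ≤ a → ∫ s in a..a+1, p s ≤ P)
    (hineq : ∀ t ∈ Icc (0:ℝ) T, y' t ≤ p t - ε * y t) :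
    y T ≤ max (y 0) ((P+1)/ε) + P := by
  set R := (P+1)/ε with hR
  have ycont : ContinuousOn y (Icc 0 T) := fun t ht =>
    ((hy t ht).continuousWithinAt).mono (fun x hx => hx.1)
  -- main claim, given a t₀
  have key : ∀ t₀, t₀ ∈ Icc (0:ℝ) T → (∀ t ∈ Ioc t₀ T, R < y t) → y T ≤ y t₀ + P := by
    intro t₀ ht₀ hgt
    have ht₀0 : 0 ≤ t₀ := ht₀.1
    have ht₀T : t₀ ≤ T := ht₀.2
    have hIcc : Icc t₀ T ⊆ Icc 0 T := Icc_subset_Icc ht₀0 le_rfl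
    have hy'int : IntervalIntegrable y' volume t₀ T :=
      (hy'c.mono hIcc).intervalIntegrable_of_Icc ht₀T
    have hftc : ∫ s in t₀..T, y' s = y T - y t₀ := by
      apply integral_eq_sub_of_hasDeriv_right_of_le ht₀T (ycont.mono hIcc)
      · intro x hx
        exact (hy x (hIcc (Ioo_subset_Icc_self hx))).mono
          (fun z hz => le_trans (le_trans ht₀0 (le_of_lt hx.1)) (le_of_lt hz))
      · exact hy'int
    have hpint : IntervalIntegrable (fun s => p s - (P+1)) volume t₀ T := by
      apply IntervalIntegrable.sub _ intervalIntegrable_const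
      exact ((hp_cont.mono (fun x hx => le_trans ht₀0 hx.1)).intervalIntegrable_of_Icc ht₀T :
        IntervalIntegrable p volume t₀ T)
    have hmono : ∫ s in t₀..T, y' s ≤ ∫ s in t₀..T, (p s - (P+1)) := by
      apply integral_mono_ae_restrict ht₀T hy'int hpint
      have hIocIcc : (volume : Measure ℝ).restrict (Icc t₀ T)
          = (volume : Measure ℝ).restrict (Ioc t₀ T) :=
        (Measure.restrict_congr_set Ioc_ae_eq_Icc).symm
      rw [hIocIcc]
      filter_upwards [ae_restrict_mem measurableSet_Ioc] with s hs
      have hs' : s ∈ Icc (0:ℝ) T := ⟨le_trans ht₀0 (le_of_lt hs.1), hs.2⟩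
      have h1 := hineq s hs'
      have h2 := hgt s hs
      have : P + 1 ≤ ε * y s := by
        rw [hR] at h2
        have := (div_lt_iff₀ hε).mp h2
        linarith
      linarith
    have hpbound : ∫ s in t₀..T, p s ≤ (T - t₀ + 1) * P :=
      aux_int_bound p P hP0 hp_cont hp_nn hP t₀ T ht₀0 ht₀T
    have hsplit : ∫ s in t₀..T, (p s - (P+1))
        = (∫ s in t₀..T, p s) - (P+1) * (T - t₀) := by
      rw [intervalIntegral.integral_sub _ intervalIntegrable_const]
      · simp only [intervalIntegral.integral_const, smul_eq_mul]; ring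
      · exact ((hp_cont.mono (fun x hx => le_trans ht₀0 hx.1)).intervalIntegrable_of_Icc ht₀T :
          IntervalIntegrable p volume t₀ T)
    have : y T - y t₀ ≤ (T - t₀ + 1) * P - (P+1) * (T - t₀) := by
      rw [← hftc]; rw [hsplit] at hmono; linarith
    nlinarith [ht₀.2, sub_nonneg.mpr ht₀T]
  -- construct t₀
  by_contra hcon
  push_neg at hcon
  set S := {t | t ∈ Icc (0:ℝ) T ∧ y t ≤ R} with hS
  by_cases hne : S.Nonempty
  · have hScl : IsClosed S := by
      have : S = Icc (0:ℝ) T ∩ y ⁻¹' (Iic R) := by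
        ext t; simp only [hS, mem_setOf_eq, mem_inter_iff, mem_preimage, mem_Iic]
      rw [this]
      exact ycont.preimage_isClosed_of_isClosed isClosed_Icc isClosed_Iic
    have hbdd : BddAbove S := ⟨T, fun t ht => ht.1.2⟩
    set t₀ := sSup S with ht₀def
    have ht₀S : t₀ ∈ S := hScl.csSup_mem hne hbdd
    have h1 : y T ≤ y t₀ + P := by
      apply key t₀ ht₀S.1
      intro t ht
      by_contra hle
      push_neg at hle
      have : t ∈ S := ⟨⟨le_trans ht₀S.1.1 (le_of_lt ht.1), ht.2⟩, hle⟩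
      exact absurd (le_csSup hbdd this) (not_le.mpr ht.1)
    have := ht₀S.2
    have hmax : R ≤ max (y 0) R := le_max_right _ _
    linarith
  · have h0 : ¬ (y 0 ≤ R) := fun hy0 => hne ⟨0, ⟨⟨le_rfl, hT⟩, hy0⟩⟩
    push_neg at h0
    have h1 : y T ≤ y 0 + P := by
      apply key 0 ⟨le_rfl, hT⟩
      intro t ht
      by_contra hle
      push_neg at hle
      exact hne ⟨t, ⟨⟨le_of_lt ht.1, ht.2⟩, hle⟩⟩
    have hmax : y 0 ≤ max (y 0) R := le_max_left _ _
    linarith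

set_option maxHeartbeats 1600000 in
/-- Purely arithmetic core of the energy estimate. -/
lemma aux_pointwise (γ C₁ C₂ K cj δ sΛ Λ ε a b m Dv Gv ψt ip iq : ℝ)
    (hγ : 0 < γ) (hC₁ : 0 ≤ C₁) (hδ : 0 < δ) (hK : 0 < K)
    (hsΛ1 : 1 ≤ sΛ) (hsq : sΛ^2 = Λ)
    (hε : ε = δ / sΛ)
    (hδK : Real.sqrt 2 * δ * K ≤ 1/2)
    (hεγ : ε ≤ γ/8) (hεδ : ε ≤ δ)
    (ha : 0 ≤ a) (hb : 0 ≤ b) (hm : 0 ≤ m) (hcj : 0 ≤ cj)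
    (hE : (a^2+b^2)/2 ≤ Λ)
    (f1 : ip ≤ m * a)
    (f2 : iq ≤ m * (cj*b))
    (f3 : -Gv ≤ (C₂ + K*Dv)*b)
    (f4 : γ*a^2 - C₁ ≤ Dv)
    (f5 : 0 ≤ C₂ + K*Dv)
    (fψ : |ψt| ≤ cj*((a^2+b^2)/2)) :
    (ip - Dv) + ε*(a^2 - b^2 - Gv + iq)
      ≤ ((1/γ + δ*cj^2)*m^2 + (Real.sqrt 2*δ*C₂ + C₁ + δ^2*cj))
        - ε*((a^2+b^2)/2 + ε*ψt) := by
  have hsΛ0 : 0 < sΛ := by linarith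
  have hε0 : 0 < ε := by rw [hε]; positivity
  have hεs : ε * sΛ = δ := by rw [hε]; field_simp
  have hΛ0 : 0 < Λ := by nlinarith
  have hs2 : 0 ≤ Real.sqrt 2 := Real.sqrt_nonneg 2
  have f4' : -C₁ ≤ Dv := by nlinarith [sq_nonneg a]
  have f6 : b ≤ Real.sqrt 2 * sΛ := by
    have hb2 : b^2 ≤ 2*Λ := by nlinarith [sq_nonneg a]
    have h1 : b ≤ Real.sqrt (2*Λ) := by
      have := Real.sqrt_le_sqrt hb2
      rwa [Real.sqrt_sq hb] at this
    have h2 : Real.sqrt Λ = sΛ := by rw [← hsq]; exact Real.sqrt_sq hsΛ0.le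
    rwa [Real.sqrt_mul (by norm_num) Λ, h2] at h1
  have g1 : ip ≤ γ/4 * a^2 + m^2/γ := by
    have h2 : m*a ≤ (γ^2*a^2 + 4*m^2)/(4*γ) := by
      rw [le_div_iff₀ (by positivity)]
      nlinarith [sq_nonneg (γ*a - 2*m)]
    have h3 : (γ^2*a^2 + 4*m^2)/(4*γ) = γ/4*a^2 + m^2/γ := by
      field_simp
    linarith [f1]
  have g2a : iq ≤ b^2/4 + cj^2*m^2 := by nlinarith [sq_nonneg (b/2 - cj*m)]
  have g2 : ε * iq ≤ ε*(b^2/4) + δ*(cj^2*m^2) := by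
    have h1 := mul_le_mul_of_nonneg_left g2a hε0.le
    nlinarith [mul_nonneg (sub_nonneg.mpr hεδ) (mul_nonneg (sq_nonneg cj) (sq_nonneg m))]
  have g3a : -Gv ≤ (C₂ + K*Dv) * (Real.sqrt 2 * sΛ) :=
    le_trans f3 (mul_le_mul_of_nonneg_left f6 f5)
  have g3b : ε * ((C₂ + K*Dv) * (Real.sqrt 2 * sΛ))
      = Real.sqrt 2 * δ * C₂ + Real.sqrt 2 * δ * K * Dv := by
    linear_combination (Real.sqrt 2 * (C₂ + K * Dv)) * hεs
  have g3c : Real.sqrt 2 * δ * K * Dv ≤ Dv/2 + C₁/2 := by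
    have hs0 : (0:ℝ) ≤ Real.sqrt 2 * δ * K := by positivity
    have hprod : (0:ℝ) ≤ (1/2 - Real.sqrt 2*δ*K) * (Dv + C₁) :=
      mul_nonneg (by linarith) (by linarith)
    nlinarith [hprod, mul_nonneg hs0 hC₁]
  have g3 : ε * (-Gv) ≤ Real.sqrt 2 * δ * C₂ + Dv/2 + C₁/2 := by
    have h1 := mul_le_mul_of_nonneg_left g3a hε0.le
    rw [g3b] at h1
    linarith
  have g4 : ε * a^2 ≤ γ/8 * a^2 := mul_le_mul_of_nonneg_right hεγ (sq_nonneg a)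
  have g4' : ε * (a^2/2) ≤ γ/16 * a^2 := by nlinarith [g4]
  have gψ : ε^2 * ψt ≤ δ^2 * cj := by
    have h1 : ψt ≤ cj * Λ := by
      have h2 : cj*((a^2+b^2)/2) ≤ cj * Λ := mul_le_mul_of_nonneg_left hE hcj
      have := le_abs_self ψt
      linarith
    have h2 := mul_le_mul_of_nonneg_left h1 (sq_nonneg ε)
    have h3 : ε^2 * Λ = δ^2 := by
      rw [← hsq]
      linear_combination (ε*sΛ + δ) * hεs
    nlinarith
  have hDhalf : -(Dv/2) ≤ -(γ/2)*a^2 + C₁/2 := by linarith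
  have hγm : (1/γ + δ*cj^2)*m^2 = m^2/γ + δ*(cj^2*m^2) := by
    field_simp
  linarith [g1, g2, g3, g4, g4', gψ, hDhalf, hγm.le, hγm.ge,
    mul_nonneg hγ.le (sq_nonneg a), mul_nonneg hε0.le (sq_nonneg b)]

set_option maxHeartbeats 2000000 in
/-- Under the coercivity condition (G1) and the growth
condition (G2), every strong solution of `ü + A u + g(u̇) = h` with
`‖h‖_{S²} < ∞` is bounded on `[0,∞)` in the energy space. -/
theorem stmt_5
    {V H : Type*}
    [NormedAddCommGroup V] [InnerProductSpace ℝ V] [CompleteSpace V]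
    [NormedAddCommGroup H] [InnerProductSpace ℝ H] [CompleteSpace H]
    (j : V →L[ℝ] H) (hj_inj : Function.Injective j) (hj_dense : DenseRange j)
    (ι : H → (V →L[ℝ] ℝ)) (hι : ∀ (w : H) (v : V), ι w v = ⟪w, j v⟫)
    (A : V → (V →L[ℝ] ℝ)) (hA : ∀ u v : V, A u v = ⟪u, v⟫)
    (g : V → (V →L[ℝ] ℝ)) (hg_cont : Continuous g)
    (hg_mono : ∀ v w : V, (g v - g w) (v - w) ≥ 0)
    (γ C₁ : ℝ) (hγ : 0 < γ) (hC₁ : 0 ≤ C₁)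
    (hG1 : ∀ v : V, g v v ≥ γ * ‖j v‖ ^ 2 - C₁)
    (K C₂ : ℝ) (hK : 0 < K) (hC₂ : 0 ≤ C₂)
    (hG2 : ∀ v : V, ‖g v‖ ≤ C₂ + K * g v v)
    (h : ℝ → H) (h_cont : ContinuousOn h (Ici 0))
    (h_S2 : BddAbove {x : ℝ | ∃ t : ℝ, 0 ≤ t ∧ x = ∫ s in t..(t + 1), ‖h s‖ ^ 2})
    (u u' : ℝ → V) (u'' : ℝ → H)
    (hu : ∀ t ∈ Ici (0 : ℝ), HasDerivWithinAt u (u' t) (Ici 0) t)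
    (hu'_cont : ContinuousOn u' (Ici 0))
    (hu' : ∀ t ∈ Ici (0 : ℝ), HasDerivWithinAt (fun s => j (u' s)) (u'' t) (Ici 0) t)
    (hu''_cont : ContinuousOn u'' (Ici 0))
    (heq : ∀ t ∈ Ici (0 : ℝ), ι (u'' t) + A (u t) + g (u' t) = ι (h t)) :
    ∃ M : ℝ, ∀ t : ℝ, 0 ≤ t → ‖j (u' t)‖ ^ 2 + ‖u t‖ ^ 2 ≤ M := by
  classical
  obtain ⟨B, hB⟩ := h_S2
  have hBint : ∀ t, 0 ≤ t → ∫ s in t..t+1, ‖h s‖^2 ≤ B := fun t ht => hB ⟨t, ht, rfl⟩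
  have hB0 : 0 ≤ B :=
    le_trans (intervalIntegral.integral_nonneg (by norm_num) (fun s _ => sq_nonneg _))
      (hBint 0 le_rfl)
  set cj := ‖j‖ with hcjdef
  have hcj0 : 0 ≤ cj := norm_nonneg _
  have hu_cont : ContinuousOn u (Ici 0) := fun t ht => (hu t ht).continuousWithinAt
  have heq' : ∀ t, 0 ≤ t → ∀ v : V, ⟪u'' t, j v⟫ + ⟪u t, v⟫ + g (u' t) v = ⟪h t, j v⟫ := by
    intro t ht v
    have h0 := congrArg (fun F : V →L[ℝ] ℝ => F v) (heq t ht)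
    simpa [hι, hA, ContinuousLinearMap.add_apply] using h0
  set E : ℝ → ℝ := fun s => (‖j (u' s)‖^2 + ‖u s‖^2)/2 with hEdef
  set ψ : ℝ → ℝ := fun s => ⟪j (u s), j (u' s)⟫ with hψdef
  set E' : ℝ → ℝ := fun t => ⟪h t, j (u' t)⟫ - g (u' t) (u' t) with hE'def
  set ψ' : ℝ → ℝ := fun t => ‖j (u' t)‖^2 - ‖u t‖^2 - g (u' t) (u t) + ⟪h t, j (u t)⟫
    with hψ'def
  -- derivative of E
  have hEderiv : ∀ t, 0 ≤ t → HasDerivWithinAt E (E' t) (Ici 0) t := by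
    intro t ht
    have h1 : HasDerivWithinAt (fun s => ⟪j (u' s), j (u' s)⟫)
        (⟪j (u' t), u'' t⟫ + ⟪u'' t, j (u' t)⟫) (Ici 0) t :=
      HasDerivWithinAt.inner ℝ (hu' t ht) (hu' t ht)
    have h2 : HasDerivWithinAt (fun s => ⟪u s, u s⟫)
        (⟪u t, u' t⟫ + ⟪u' t, u t⟫) (Ici 0) t :=
      HasDerivWithinAt.inner ℝ (hu t ht) (hu t ht)
    have h3 := (h1.add h2).div_const 2
    have hfe : E = fun s => (⟪j (u' s), j (u' s)⟫ + ⟪u s, u s⟫)/2 := by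
      funext s; simp only [hEdef]
      rw [real_inner_self_eq_norm_sq, real_inner_self_eq_norm_sq]
    rw [hfe]
    refine h3.congr_deriv ?_
    have hv := heq' t ht (u' t)
    have hc1 : ⟪j (u' t), u'' t⟫ = ⟪u'' t, j (u' t)⟫ := real_inner_comm _ _
    have hc2 : ⟪u' t, u t⟫ = ⟪u t, u' t⟫ := real_inner_comm _ _
    show (⟪j (u' t), u'' t⟫ + ⟪u'' t, j (u' t)⟫ + (⟪u t, u' t⟫ + ⟪u' t, u t⟫)) / 2
      = ⟪h t, j (u' t)⟫ - g (u' t) (u' t)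
    rw [← hv, hc1, hc2]; ring
  -- derivative of ψ
  have hψderiv : ∀ t, 0 ≤ t → HasDerivWithinAt ψ (ψ' t) (Ici 0) t := by
    intro t ht
    have hju : HasDerivWithinAt (fun s => j (u s)) (j (u' t)) (Ici 0) t := by
      exact (j.hasFDerivAt.comp_hasDerivWithinAt t (hu t ht))
    have h1 : HasDerivWithinAt (fun s => ⟪j (u s), j (u' s)⟫)
        (⟪j (u t), u'' t⟫ + ⟪j (u' t), j (u' t)⟫) (Ici 0) t :=
      HasDerivWithinAt.inner ℝ hju (hu' t ht)
    rw [hψdef]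
    convert h1 using 1
    have hv := heq' t ht (u t)
    have hc1 : ⟪j (u t), u'' t⟫ = ⟪u'' t, j (u t)⟫ := real_inner_comm _ _
    have hn1 : ⟪j (u' t), j (u' t)⟫ = ‖j (u' t)‖^2 := real_inner_self_eq_norm_sq _
    have hn2 : ⟪u t, u t⟫ = ‖u t‖^2 := real_inner_self_eq_norm_sq _
    simp only [hψ'def]
    linarith
  -- continuity facts
  have hE'cont : ContinuousOn E' (Ici 0) := by
    simp only [hE'def]
    apply ContinuousOn.sub
    · exact ContinuousOn.inner h_cont (j.continuous.comp_continuousOn hu'_cont)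
    · exact ContinuousOn.clm_apply (hg_cont.comp_continuousOn hu'_cont) hu'_cont
  have hψ'cont : ContinuousOn ψ' (Ici 0) := by
    simp only [hψ'def]
    apply ContinuousOn.add
    · apply ContinuousOn.sub
      · apply ContinuousOn.sub
        · exact ((j.continuous.comp_continuousOn hu'_cont).norm.pow 2)
        · exact (hu_cont.norm.pow 2)
      · exact ContinuousOn.clm_apply (hg_cont.comp_continuousOn hu'_cont) hu_cont
    · exact ContinuousOn.inner h_cont (j.continuous.comp_continuousOn hu_cont)
  have hEcont : ContinuousOn E (Ici 0) := by
    simp only [hEdef]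
    exact (((j.continuous.comp_continuousOn hu'_cont).norm.pow 2).add
      (hu_cont.norm.pow 2)).div_const 2
  have hE0 : ∀ t, 0 ≤ E t := by intro t; simp only [hEdef]; positivity
  -- pointwise bound on ψ
  have hψb : ∀ t, |ψ t| ≤ cj * E t := by
    intro t
    have h1 : |ψ t| ≤ ‖j (u t)‖ * ‖j (u' t)‖ := by
      simp only [hψdef]; exact abs_real_inner_le_norm _ _
    have h2 : ‖j (u t)‖ ≤ cj * ‖u t‖ := j.le_opNorm _
    have h3 : E t = (‖j (u' t)‖^2 + ‖u t‖^2)/2 := by simp only [hEdef]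
    rw [h3]
    nlinarith only [h1, mul_le_mul_of_nonneg_right h2 (norm_nonneg (j (u' t))),
      mul_nonneg hcj0 (sq_nonneg (‖u t‖ - ‖j (u' t)‖)),
      norm_nonneg (u t), norm_nonneg (j (u' t)), hcj0]
  -- constants
  set δ : ℝ := 1/(4*K) with hδdef
  have hδ : 0 < δ := by rw [hδdef]; exact div_pos one_pos (by linarith)
  have hsqrt2 : Real.sqrt 2 ≤ 2 := by
    nlinarith [Real.sqrt_nonneg 2, Real.sq_sqrt (by norm_num : (0:ℝ) ≤ 2)]
  have hsqrt2nn : 0 ≤ Real.sqrt 2 := Real.sqrt_nonneg 2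
  have hKne : (K:ℝ) ≠ 0 := ne_of_gt hK
  have hδK : Real.sqrt 2 * δ * K ≤ 1/2 := by
    have e : Real.sqrt 2 * δ * K = Real.sqrt 2 / 4 := by
      rw [hδdef]; field_simp
    rw [e]; linarith
  set Λ₀ : ℝ := max 1 ((8*δ/γ)^2) with hΛ₀def
  set P : ℝ := (1/γ + δ*cj^2)*B + (Real.sqrt 2*δ*C₂ + C₁ + δ^2*cj) with hPdef
  set p : ℝ → ℝ := fun s => (1/γ + δ*cj^2)*‖h s‖^2 + (Real.sqrt 2*δ*C₂ + C₁ + δ^2*cj)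
    with hpdef
  have hc1nn : 0 ≤ 1/γ + δ*cj^2 :=
    add_nonneg (le_of_lt (one_div_pos.mpr hγ)) (mul_nonneg hδ.le (sq_nonneg cj))
  have hc0nn : 0 ≤ Real.sqrt 2*δ*C₂ + C₁ + δ^2*cj :=
    add_nonneg (add_nonneg (mul_nonneg (mul_nonneg hsqrt2nn hδ.le) hC₂) hC₁)
      (mul_nonneg (sq_nonneg δ) hcj0)
  have hP0 : 0 ≤ P := by
    rw [hPdef]; exact add_nonneg (mul_nonneg hc1nn hB0) hc0nn
  have hp_nn : ∀ t, 0 ≤ t → 0 ≤ p t := by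
    intro t ht
    simp only [hpdef]
    exact add_nonneg (mul_nonneg hc1nn (sq_nonneg _)) hc0nn
  have hp_cont : ContinuousOn p (Ici 0) := by
    simp only [hpdef]
    exact (continuousOn_const.mul (h_cont.norm.pow 2)).add continuousOn_const
  have hPint : ∀ a, 0 ≤ a → ∫ s in a..a+1, p s ≤ P := by
    intro a ha
    have hhint : IntervalIntegrable (fun s => ‖h s‖^2) volume a (a+1) := by
      apply ContinuousOn.intervalIntegrable_of_Icc (by linarith)
      exact (h_cont.mono (fun x hx => le_trans ha hx.1)).norm.pow 2
    have hsplit : ∫ s in a..a+1, p s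
        = (1/γ + δ*cj^2) * (∫ s in a..a+1, ‖h s‖^2)
          + (Real.sqrt 2*δ*C₂ + C₁ + δ^2*cj) := by
      simp only [hpdef]
      rw [intervalIntegral.integral_add (hhint.const_mul _) intervalIntegrable_const]
      rw [intervalIntegral.integral_const_mul, intervalIntegral.integral_const]
      norm_num
    rw [hsplit, hPdef]
    have := mul_le_mul_of_nonneg_left (hBint a ha) hc1nn
    linarith
  set K₁ : ℝ := E 0 + P with hK₁def
  set K₂ : ℝ := (P+1)/δ + 2*δ*cj with hK₂def
  have hK₁0 : 0 ≤ K₁ := by rw [hK₁def]; exact add_nonneg (hE0 0) hP0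
  have hK₂0 : 0 ≤ K₂ := by
    rw [hK₂def]
    exact add_nonneg (div_nonneg (by linarith) hδ.le)
      (mul_nonneg (by linarith) hcj0)
  -- the key lemma
  have keyL : ∀ Λ, Λ₀ ≤ Λ → ∀ T, 0 ≤ T → (∀ s ∈ Icc (0:ℝ) T, E s ≤ Λ) →
      E T ≤ K₁ + K₂ * Real.sqrt Λ := by
    intro Λ hΛ T hT hbound
    have hΛ1 : (1:ℝ) ≤ Λ := le_trans (le_trans (le_max_left _ _) hΛ) le_rfl
    set sΛ := Real.sqrt Λ with hsΛdef
    have hsΛ1 : 1 ≤ sΛ := by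
      have h1 : Real.sqrt 1 ≤ sΛ := Real.sqrt_le_sqrt hΛ1
      simpa using h1
    have hsΛ0 : 0 < sΛ := by linarith
    have hsΛsq : sΛ^2 = Λ := Real.sq_sqrt (by linarith)
    set ε : ℝ := δ / sΛ with hεdef
    have hε0 : 0 < ε := by rw [hεdef]; exact div_pos hδ hsΛ0
    have hεδ : ε ≤ δ := by rw [hεdef]; exact div_le_self hδ.le hsΛ1
    have hεs : ε * sΛ = δ := by
      rw [hεdef]; field_simp
    have hεγ : ε ≤ γ/8 := by
      have h1 : (8*δ/γ) ≤ sΛ := by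
        have h2 : Real.sqrt ((8*δ/γ)^2) ≤ sΛ := by
          apply Real.sqrt_le_sqrt
          exact le_trans (le_max_right _ _) hΛ
        rwa [Real.sqrt_sq (by positivity)] at h2
      have h1' : 8*δ ≤ sΛ * γ := (div_le_iff₀ hγ).mp h1
      rw [hεdef, div_le_div_iff₀ hsΛ0 (by norm_num : (0:ℝ) < 8)]
      linarith
    set Φ : ℝ → ℝ := fun s => E s + ε * ψ s with hΦdef
    set Φ' : ℝ → ℝ := fun s => E' s + ε * ψ' s with hΦ'def
    have hΦderiv : ∀ t ∈ Icc (0:ℝ) T, HasDerivWithinAt Φ (Φ' t) (Ici 0) t := by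
      intro t ht
      simp only [hΦdef, hΦ'def]
      exact (hEderiv t ht.1).add ((hψderiv t ht.1).const_mul ε)
    have hΦ'cont : ContinuousOn Φ' (Icc 0 T) := by
      simp only [hΦ'def]
      exact (hE'cont.add (continuousOn_const.mul hψ'cont)).mono (fun x hx => hx.1)
    -- the main pointwise estimate
    have hmain : ∀ t ∈ Icc (0:ℝ) T, Φ' t ≤ p t - ε * Φ t := by
      intro t ht
      have ht0 : (0:ℝ) ≤ t := ht.1
      have fE : E t = (‖j (u' t)‖^2 + ‖u t‖^2)/2 := by simp only [hEdef]
      have fEΛ : (‖j (u' t)‖^2 + ‖u t‖^2)/2 ≤ Λ := by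
        rw [← fE]; exact hbound t ht
      have f1 : ⟪h t, j (u' t)⟫ ≤ ‖h t‖ * ‖j (u' t)‖ := real_inner_le_norm _ _
      have f2 : ⟪h t, j (u t)⟫ ≤ ‖h t‖ * (cj * ‖u t‖) :=
        le_trans (real_inner_le_norm _ _)
          (mul_le_mul_of_nonneg_left (j.le_opNorm _) (norm_nonneg _))
      have f3 : -(g (u' t) (u t)) ≤ (C₂ + K * g (u' t) (u' t)) * ‖u t‖ := by
        have h1 : |g (u' t) (u t)| ≤ ‖g (u' t)‖ * ‖u t‖ := (g (u' t)).le_opNorm _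
        have h2 := mul_le_mul_of_nonneg_right (hG2 (u' t)) (norm_nonneg (u t))
        calc -(g (u' t) (u t)) ≤ |g (u' t) (u t)| := neg_le_abs _
          _ ≤ ‖g (u' t)‖ * ‖u t‖ := h1
          _ ≤ (C₂ + K * g (u' t) (u' t)) * ‖u t‖ := h2
      have f4 : γ * ‖j (u' t)‖^2 - C₁ ≤ g (u' t) (u' t) := hG1 (u' t)
      have f5 : 0 ≤ C₂ + K * g (u' t) (u' t) :=
        le_trans (norm_nonneg (g (u' t))) (hG2 (u' t))
      have fψ : |⟪j (u t), j (u' t)⟫| ≤ cj * ((‖j (u' t)‖^2 + ‖u t‖^2)/2) := by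
        have := hψb t
        rw [hψdef] at this
        rw [← fE]
        exact this
      have key := aux_pointwise γ C₁ C₂ K cj δ sΛ Λ ε (‖j (u' t)‖) (‖u t‖) (‖h t‖)
        (g (u' t) (u' t)) (g (u' t) (u t)) (⟪j (u t), j (u' t)⟫)
        (⟪h t, j (u' t)⟫) (⟪h t, j (u t)⟫)
        hγ hC₁ hδ hK hsΛ1 hsΛsq hεdef hδK hεγ hεδ (norm_nonneg _) (norm_nonneg _)
        (norm_nonneg _) hcj0 fEΛ f1 f2 f3 f4 f5 fψ
      simp only [hΦdef, hΦ'def, hE'def, hψ'def, hEdef, hψdef, hpdef]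
      linarith [key]
    -- apply the decay lemma
    have hdecay := aux_decay Φ Φ' p T P ε hT hε0 hΦderiv hΦ'cont hp_cont hp_nn hP0 hPint hmain
    -- conclude
    have hψT : |ψ T| ≤ cj * Λ := by
      have h2 := hψb T
      have h3 : cj * E T ≤ cj * Λ := mul_le_mul_of_nonneg_left (hbound T ⟨hT, le_rfl⟩) hcj0
      linarith
    have hψ0 : |ψ 0| ≤ cj * Λ := by
      have h2 := hψb 0
      have h3 : cj * E 0 ≤ cj * Λ := mul_le_mul_of_nonneg_left (hbound 0 ⟨le_rfl, hT⟩) hcj0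
      linarith
    have hεΛ : ε * Λ = δ * sΛ := by
      rw [← hsΛsq]
      linear_combination sΛ * hεs
    have hET : E T ≤ Φ T + δ * cj * sΛ := by
      have h1 : -(ε * ψ T) ≤ ε * |ψ T| := by
        rw [← mul_neg]
        exact mul_le_mul_of_nonneg_left (neg_le_abs _) hε0.le
      have h2 : ε * |ψ T| ≤ ε * (cj * Λ) := mul_le_mul_of_nonneg_left hψT hε0.le
      have h3 : ε * (cj * Λ) = δ * cj * sΛ := by linear_combination cj * hεΛ
      have h4 : Φ T = E T + ε * ψ T := by simp only [hΦdef]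
      linarith
    have hΦ0 : Φ 0 ≤ E 0 + δ * cj * sΛ := by
      have h1 : ε * ψ 0 ≤ ε * |ψ 0| := mul_le_mul_of_nonneg_left (le_abs_self _) hε0.le
      have h2 : ε * |ψ 0| ≤ ε * (cj * Λ) := mul_le_mul_of_nonneg_left hψ0 hε0.le
      have h3 : ε * (cj * Λ) = δ * cj * sΛ := by linear_combination cj * hεΛ
      have h4 : Φ 0 = E 0 + ε * ψ 0 := by simp only [hΦdef]
      linarith
    have hPε : (P+1)/ε = (P+1)/δ * sΛ := by
      rw [hεdef, div_div_eq_mul_div]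
      ring
    have hmax : max (Φ 0) ((P+1)/ε) ≤ (E 0 + δ * cj * sΛ) + (P+1)/δ * sΛ := by
      apply max_le
      · have h5 : 0 ≤ (P+1)/δ * sΛ :=
          mul_nonneg (div_nonneg (by linarith) hδ.le) (by linarith)
        exact le_trans hΦ0 (le_add_of_nonneg_right h5)
      · rw [hPε]
        have h5 : 0 ≤ E 0 + δ * cj * sΛ :=
          add_nonneg (hE0 0) (mul_nonneg (mul_nonneg hδ.le hcj0) (by linarith))
        linarith
    rw [hK₁def, hK₂def]
    calc E T ≤ Φ T + δ * cj * sΛ := hET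
      _ ≤ (max (Φ 0) ((P+1)/ε) + P) + δ * cj * sΛ := add_le_add_left hdecay _
      _ ≤ (((E 0 + δ * cj * sΛ) + (P+1)/δ * sΛ) + P) + δ * cj * sΛ :=
          add_le_add_left (add_le_add_left hmax P) _
      _ = (E 0 + P) + ((P+1)/δ + 2*δ*cj) * Real.sqrt Λ := by
          rw [← hsΛdef]; ring
  -- bootstrap
  set Λs : ℝ := max Λ₀ (max ((K₂+1)^2) (max ((K₁+1)^2) (E 0 + 1))) with hΛsdef
  have hEp1 : E 0 + 1 ≤ Λs :=
    le_trans (le_trans (le_max_right _ _) (le_max_right _ _)) (le_max_right _ _)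
  have hΛs0 : 0 < Λs := by
    have := hE0 0
    linarith
  have hΛsΛ₀ : Λ₀ ≤ Λs := le_max_left _ _
  have hstrict : K₁ + K₂ * Real.sqrt Λs < Λs := by
    have hs2 : K₂ + 1 ≤ Real.sqrt Λs := by
      have h1 : Real.sqrt ((K₂+1)^2) ≤ Real.sqrt Λs :=
        Real.sqrt_le_sqrt (le_trans (le_max_left _ _) (le_max_right _ _))
      rwa [Real.sqrt_sq (by linarith)] at h1
    have hs1 : K₁ + 1 ≤ Real.sqrt Λs := by
      have h1 : Real.sqrt ((K₁+1)^2) ≤ Real.sqrt Λs :=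
        Real.sqrt_le_sqrt (le_trans (le_trans (le_max_left _ _) (le_max_right _ _))
          (le_max_right _ _))
      rwa [Real.sqrt_sq (by linarith)] at h1
    have hsq : (Real.sqrt Λs)^2 = Λs := Real.sq_sqrt hΛs0.le
    nlinarith [Real.sqrt_nonneg Λs]
  have hfin : ∀ t, 0 ≤ t → E t ≤ Λs := by
    by_contra hcon
    push_neg at hcon
    obtain ⟨t₂, ht₂0, ht₂⟩ := hcon
    set Aset : Set ℝ := {s | 0 ≤ s ∧ Λs ≤ E s} with hAdef
    have hAne : Aset.Nonempty := ⟨t₂, ht₂0, ht₂.le⟩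
    have hAcl : IsClosed Aset := by
      have hAeq : Aset = Ici (0:ℝ) ∩ E ⁻¹' (Ici Λs) := by
        ext s; simp only [hAdef, mem_setOf_eq, mem_inter_iff, mem_preimage, mem_Ici]
      rw [hAeq]
      exact hEcont.preimage_isClosed_of_isClosed isClosed_Ici isClosed_Ici
    have hAbdd : BddBelow Aset := ⟨0, fun s hs => hs.1⟩
    set t₁ := sInf Aset with ht₁def
    have ht₁A : t₁ ∈ Aset := hAcl.csInf_mem hAne hAbdd
    have ht₁0 : 0 ≤ t₁ := ht₁A.1
    have hEt₁ : Λs ≤ E t₁ := ht₁A.2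
    have hlt : ∀ s, 0 ≤ s → s < t₁ → E s < Λs := by
      intro s hs0 hst
      by_contra hle
      push_neg at hle
      exact absurd (csInf_le hAbdd ⟨hs0, hle⟩) (not_le.mpr hst)
    have hE0lt : E 0 < Λs := by linarith
    have ht₁pos : 0 < t₁ := by
      rcases eq_or_lt_of_le ht₁0 with heq0 | hpos
      · exfalso; rw [← heq0] at hEt₁; linarith
      · exact hpos
    have hEt₁le : E t₁ ≤ Λs := by
      have hcw : ContinuousWithinAt E (Ico 0 t₁) t₁ :=
        (hEcont t₁ ht₁0).mono (fun x hx => hx.1)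
      have hmem : t₁ ∈ closure (Ico 0 t₁) := by
        rw [closure_Ico (ne_of_lt ht₁pos)]
        exact ⟨ht₁0, le_rfl⟩
      have hnb : (nhdsWithin t₁ (Ico 0 t₁)).NeBot := mem_closure_iff_nhdsWithin_neBot.mp hmem
      apply le_of_tendsto hcw
      filter_upwards [eventually_mem_nhdsWithin] with s hs
      exact (hlt s hs.1 hs.2).le
    have hle : ∀ s ∈ Icc (0:ℝ) t₁, E s ≤ Λs := by
      intro s hs
      rcases eq_or_lt_of_le hs.2 with heqs | hlts
      · rw [heqs]; exact hEt₁le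
      · exact (hlt s hs.1 hlts).le
    have := keyL Λs hΛsΛ₀ t₁ ht₁0 hle
    linarith
  refine ⟨2*Λs, fun t ht => ?_⟩
  have h1 := hfin t ht
  have h2 : E t = (‖j (u' t)‖^2 + ‖u t‖^2)/2 := by simp only [hEdef]
  linarith
end

section
/- Assume (G1): there exist γ > 0 and C₁ ≥ 0 such that ⟨g(v), v⟩ ≥ γ |j v|_H² − C₁ for all v ∈ V; and (G2): there exist K > 0 and C₂ ≥ 0 such that ‖g(v)‖_{V′} ≤ C₂ + K ⟨g(v), v⟩ for all v ∈ V. Then there exists a constant K′ > 0, depending only on V, H, j, A, g and the constants γ, C₁, C₂, K (in particular independent of h and of the solution), such that for every continuous h : [0,∞) → H with ‖h‖_{S²} < ∞ and every strong solution u of ü + A u + g(u̇) = h, one has limsup_{t→∞} (|j u̇(t)|_H² + ‖u(t)‖_V²) ≤ K′ (1 + ‖h‖_{S²}⁴). -/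
set_option maxHeartbeats 2000000

open scoped RealInnerProductSpace
open Set Filter MeasureTheory intervalIntegral

lemma aux_sqrt_le (x : ℝ) (hx : 0 ≤ x) : Real.sqrt x ≤ (x + 1) / 2 := by
  nlinarith [Real.sq_sqrt hx, Real.sqrt_nonneg x, sq_nonneg (Real.sqrt x - 1)]

lemma aux_exists_le_integral (φ : ℝ → ℝ) (a b : ℝ) (hab : a < b)
    (hc : ContinuousOn φ (Icc a b)) :
    ∃ s ∈ Icc a b, φ s * (b - a) ≤ ∫ x in a..b, φ x := by
  obtain ⟨s, hs, hmin⟩ := isCompact_Icc.exists_isMinOn (nonempty_Icc.2 hab.le) hc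
  refine ⟨s, hs, ?_⟩
  have h1 : ∫ x in a..b, φ s ≤ ∫ x in a..b, φ x := by
    apply intervalIntegral.integral_mono_on hab.le intervalIntegrable_const
      ((hc.mono (by rw [uIcc_of_le hab.le])).intervalIntegrable)
    exact fun x hx => hmin hx
  simpa [intervalIntegral.integral_const, mul_comm, smul_eq_mul] using h1

lemma aux_iterate (φ : ℝ → ℝ) (C R : ℝ) (hφ0 : ∀ t, 0 ≤ φ t)
    (hloc : ∀ τ σ : ℝ, 0 ≤ τ → τ ≤ σ → σ ≤ τ + 1 → φ σ ≤ φ τ + C)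
    (hstep : ∀ t : ℝ, 0 ≤ t → φ (t + 1) ≤ φ t - 2 ∨ φ (t + 1) ≤ R) :
    ∀ᶠ t in atTop, φ t ≤ R + C := by
  have key : ∀ n : ℕ, φ n ≤ R ∨ φ n ≤ φ 0 - 2 * n := by
    intro n
    induction n with
    | zero => right; simp
    | succ n ih =>
      have h2 := hstep n (Nat.cast_nonneg n)
      push_cast
      rcases ih with h | h
      · left; rcases h2 with h2 | h2 <;> linarith
      · rcases h2 with h2 | h2
        · right; linarith
        · left; linarith
  obtain ⟨N, hN⟩ := exists_nat_gt (φ 0 / 2)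
  have hkey2 : ∀ n : ℕ, N ≤ n → φ n ≤ R := by
    intro n hn
    rcases key n with h | h
    · exact h
    · exfalso
      have h1 : (N : ℝ) ≤ n := Nat.cast_le.2 hn
      have h2 := hφ0 n
      nlinarith
  filter_upwards [eventually_ge_atTop (N : ℝ)] with t ht
  have ht0 : (0:ℝ) ≤ t := le_trans (Nat.cast_nonneg N) ht
  have h1 : ((⌊t⌋₊ : ℕ) : ℝ) ≤ t := Nat.floor_le ht0
  have h2 : t ≤ ((⌊t⌋₊ : ℕ) : ℝ) + 1 := (Nat.lt_floor_add_one t).le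
  have h3 : N ≤ ⌊t⌋₊ := Nat.le_floor ht
  have h4 : φ t ≤ φ (⌊t⌋₊ : ℕ) + C := hloc _ t (Nat.cast_nonneg _) h1 h2
  have h5 : φ (⌊t⌋₊ : ℕ) ≤ R := hkey2 _ h3
  linarith

/-- General ultimate bound. Under (G1) and (G2) there is a
constant `K'` depending only on the data (not on `h` nor on the solution)
such that every strong solution satisfies
`limsup_{t→∞} (|j u̇(t)|² + ‖u(t)‖²) ≤ K' (1 + ‖h‖_{S²}⁴)`. -/
theorem stmt_6
    {V H : Type*}
    [NormedAddCommGroup V] [InnerProductSpace ℝ V] [CompleteSpace V]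
    [NormedAddCommGroup H] [InnerProductSpace ℝ H] [CompleteSpace H]
    (j : V →L[ℝ] H) (hj_inj : Function.Injective j) (hj_dense : DenseRange j)
    (ι : H → (V →L[ℝ] ℝ)) (hι : ∀ (w : H) (v : V), ι w v = ⟪w, j v⟫)
    (A : V → (V →L[ℝ] ℝ)) (hA : ∀ u v : V, A u v = ⟪u, v⟫)
    (g : V → (V →L[ℝ] ℝ)) (hg_cont : Continuous g)
    (hg_mono : ∀ v w : V, (g v - g w) (v - w) ≥ 0)
    (γ C₁ : ℝ) (hγ : 0 < γ) (hC₁ : 0 ≤ C₁)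
    (hG1 : ∀ v : V, g v v ≥ γ * ‖j v‖ ^ 2 - C₁)
    (K C₂ : ℝ) (hK : 0 < K) (hC₂ : 0 ≤ C₂)
    (hG2 : ∀ v : V, ‖g v‖ ≤ C₂ + K * g v v) :
    ∃ K' : ℝ, 0 < K' ∧
      ∀ h : ℝ → H, ContinuousOn h (Ici 0) →
        BddAbove {x : ℝ | ∃ t : ℝ, 0 ≤ t ∧ x = ∫ s in t..(t + 1), ‖h s‖ ^ 2} →
        ∀ (u u' : ℝ → V) (u'' : ℝ → H),
          (∀ t ∈ Ici (0 : ℝ), HasDerivWithinAt u (u' t) (Ici 0) t) →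
          ContinuousOn u' (Ici 0) →
          (∀ t ∈ Ici (0 : ℝ), HasDerivWithinAt (fun s => j (u' s)) (u'' t) (Ici 0) t) →
          ContinuousOn u'' (Ici 0) →
          (∀ t ∈ Ici (0 : ℝ), ι (u'' t) + A (u t) + g (u' t) = ι (h t)) →
          limsup (fun t : ℝ => ‖j (u' t)‖ ^ 2 + ‖u t‖ ^ 2) atTop ≤
            K' * (1 + Real.sqrt
              (sSup {x : ℝ | ∃ t : ℝ, 0 ≤ t ∧ x = ∫ s in t..(t + 1), ‖h s‖ ^ 2}) ^ 4) := by
  -- data-dependent constants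
  obtain ⟨c, hcdef⟩ : ∃ x : ℝ, x = ‖j‖ := ⟨_, rfl⟩
  have hc0 : (0:ℝ) ≤ c := hcdef ▸ norm_nonneg _
  obtain ⟨d, hddef⟩ : ∃ x : ℝ, x = γ⁻¹ := ⟨_, rfl⟩
  have hd0 : (0:ℝ) < d := hddef ▸ inv_pos.2 hγ
  have hdγ : d * γ = 1 := by rw [hddef]; exact inv_mul_cancel₀ hγ.ne'
  obtain ⟨p₀, hp₀def⟩ : ∃ x : ℝ, x = 2*C₂ + 2*K + 2*K*C₁ + 3*c/2 + 4*c*(2*d + 2*C₁*d) := ⟨_, rfl⟩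
  obtain ⟨p₁, hp₁def⟩ : ∃ x : ℝ, x = K*d + c/2 + 4*c*d^2 := ⟨_, rfl⟩
  obtain ⟨Aa, hAadef⟩ : ∃ x : ℝ, x = 16*d + 16*C₁*d + 18*C₁ + 8 + 8*p₀^2 := ⟨_, rfl⟩
  obtain ⟨Bb, hBbdef⟩ : ∃ x : ℝ, x = 8*d^2 + 9*d := ⟨_, rfl⟩
  have hp₀0 : 0 ≤ p₀ := by
    rw [hp₀def]
    have := mul_nonneg hK.le hC₁
    have := mul_nonneg hc0 hd0.le
    have := mul_nonneg (mul_nonneg hc0 hC₁) hd0.le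
    nlinarith
  have hp₁0 : 0 ≤ p₁ := by
    rw [hp₁def]
    have := mul_nonneg hK.le hd0.le
    have h2 : 0 ≤ c * d^2 := mul_nonneg hc0 (sq_nonneg d)
    nlinarith
  have hAa0 : (8:ℝ) ≤ Aa := by
    rw [hAadef]
    have := mul_nonneg hC₁ hd0.le
    nlinarith [sq_nonneg p₀]
  have hBb0 : (0:ℝ) ≤ Bb := by rw [hBbdef]; nlinarith [sq_nonneg d]
  refine ⟨Aa + Bb + 8*p₁^2, by nlinarith [sq_nonneg p₁], ?_⟩
  intro h hch hBdd u u' u'' hu hcu' hu'' hcu'' heq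
  obtain ⟨m, hmdef⟩ : ∃ x : ℝ, x = sSup {x : ℝ | ∃ t : ℝ, 0 ≤ t ∧ x = ∫ s in t..(t + 1), ‖h s‖ ^ 2} := ⟨_, rfl⟩
  rw [← hmdef]
  have hm_ub : ∀ t : ℝ, 0 ≤ t → (∫ s in t..(t+1), ‖h s‖^2) ≤ m :=
    fun t ht => hmdef ▸ le_csSup hBdd ⟨t, ht, rfl⟩
  have hm0 : 0 ≤ m := by
    refine le_trans ?_ (hm_ub 0 le_rfl)
    exact intervalIntegral.integral_nonneg (by norm_num) (fun s _ => sq_nonneg _)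
  -- main constants depending on m
  obtain ⟨C, hCdef⟩ : ∃ x : ℝ, x = 2*C₁ + d*m := ⟨_, rfl⟩
  have hC0 : 0 ≤ C := by rw [hCdef]; nlinarith [mul_nonneg hd0.le hm0]
  obtain ⟨I₁, hI₁def⟩ : ∃ x : ℝ, x = (2 + C)*d := ⟨_, rfl⟩
  have hI₁0 : 0 ≤ I₁ := by rw [hI₁def]; nlinarith
  obtain ⟨μ, hμdef⟩ : ∃ x : ℝ, x = (4*I₁ + 1)/2 := ⟨_, rfl⟩
  have hμ0 : 0 ≤ μ := by rw [hμdef]; nlinarith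
  obtain ⟨P, hPdef⟩ : ∃ x : ℝ, x = 2*C₂ + K*(2 + C) + c*(1 + m)/2 + 2*c*μ := ⟨_, rfl⟩
  have hP0 : 0 ≤ P := by
    have h1 : 0 ≤ K*(2+C) := mul_nonneg hK.le (by linarith)
    have h2 : 0 ≤ c*(1+m) := mul_nonneg hc0 (by linarith)
    have h3 : 0 ≤ c*μ := mul_nonneg hc0 hμ0
    rw [hPdef]; nlinarith
  obtain ⟨R, hRdef⟩ : ∃ x : ℝ, x = 8*I₁ + 8*C + 8 + 4*P^2 := ⟨_, rfl⟩
  -- continuity facts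
  have hcu : ContinuousOn u (Ici 0) := fun s hs => (hu s hs).continuousWithinAt
  have hcju' : ContinuousOn (fun s => j (u' s)) (Ici 0) := j.continuous.comp_continuousOn hcu'
  have hcju : ContinuousOn (fun s => j (u s)) (Ici 0) := j.continuous.comp_continuousOn hcu
  have hcnh : ContinuousOn (fun s => ‖h s‖^2) (Ici 0) := hch.norm.pow 2
  have hca2 : ContinuousOn (fun s => ‖j (u' s)‖^2) (Ici 0) := hcju'.norm.pow 2
  have hcb2 : ContinuousOn (fun s => ‖u s‖^2) (Ici 0) := hcu.norm.pow 2
  have hcF : ContinuousOn (fun s => ‖j (u' s)‖^2 + ‖u s‖^2) (Ici 0) := hca2.add hcb2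
  have hcgv : ContinuousOn (fun s => g (u' s)) (Ici 0) := hg_cont.comp_continuousOn hcu'
  have hcgvv : ContinuousOn (fun s => g (u' s) (u' s)) (Ici 0) := hcgv.clm_apply hcu'
  have hcgvu : ContinuousOn (fun s => g (u' s) (u s)) (Ici 0) := hcgv.clm_apply hcu
  have hchju' : ContinuousOn (fun s => ⟪h s, j (u' s)⟫) (Ici 0) := hch.inner hcju'
  have hchju : ContinuousOn (fun s => ⟪h s, j (u s)⟫) (Ici 0) := hch.inner hcju
  have hcΦ : ContinuousOn (fun s => ⟪j (u' s), j (u s)⟫) (Ici 0) := hcju'.inner hcju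
  -- integrability helper
  have hII : ∀ (f : ℝ → ℝ), ContinuousOn f (Ici 0) → ∀ τ σ : ℝ, 0 ≤ τ → τ ≤ σ →
      IntervalIntegrable f MeasureTheory.volume τ σ := by
    intro f hf τ σ hτ hle
    exact (hf.mono (by rw [uIcc_of_le hle]; exact fun x hx => le_trans hτ hx.1)).intervalIntegrable
  -- monotonicity helper
  have hmono : ∀ (f₁ f₂ : ℝ → ℝ), ContinuousOn f₁ (Ici 0) → ContinuousOn f₂ (Ici 0) →
      ∀ τ σ : ℝ, 0 ≤ τ → τ ≤ σ → (∀ s ∈ Icc τ σ, f₁ s ≤ f₂ s) →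
      (∫ s in τ..σ, f₁ s) ≤ ∫ s in τ..σ, f₂ s := by
    intro f₁ f₂ h1 h2 τ σ hτ hτσ hpt
    exact intervalIntegral.integral_mono_on hτσ (hII f₁ h1 τ σ hτ hτσ) (hII f₂ h2 τ σ hτ hτσ) hpt
  -- subinterval helper for nonneg integrands
  have hsub : ∀ (f : ℝ → ℝ), ContinuousOn f (Ici 0) → (∀ s, 0 ≤ s → 0 ≤ f s) →
      ∀ a b a' b' : ℝ, 0 ≤ a → a ≤ a' → a' ≤ b' → b' ≤ b →
      (∫ s in a'..b', f s) ≤ ∫ s in a..b, f s := by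
    intro f hf hf0 a b a' b' ha haa' hab' hbb'
    have h0 : (0:ℝ → ℝ) ≤ᵐ[MeasureTheory.volume.restrict (Ioc a b)] f := by
      refine (ae_restrict_iff' measurableSet_Ioc).2 (ae_of_all _ fun x hx => ?_)
      exact hf0 x (le_trans ha hx.1.le)
    exact intervalIntegral.integral_mono_interval haa' hab' hbb' h0
      (hII f hf a b ha (haa'.trans (hab'.trans hbb')))
  have hhm : ∀ τ σ : ℝ, 0 ≤ τ → τ ≤ σ → σ ≤ τ + 1 →
      (∫ s in τ..σ, ‖h s‖^2) ≤ m := by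
    intro τ σ hτ h1 h2
    exact le_trans (hsub _ hcnh (fun s _ => sq_nonneg _) τ (τ+1) τ σ hτ le_rfl h1 h2)
      (hm_ub τ hτ)
  -- FTC helper
  have hFTC : ∀ (f f' : ℝ → ℝ), ContinuousOn f (Ici 0) → ContinuousOn f' (Ici 0) →
      (∀ s, 0 ≤ s → HasDerivWithinAt f (f' s) (Ici 0) s) →
      ∀ τ σ : ℝ, 0 ≤ τ → τ ≤ σ → (∫ s in τ..σ, f' s) = f σ - f τ := by
    intro f f' hcf hcf' hdf τ σ hτ hτσ
    refine intervalIntegral.integral_eq_sub_of_hasDeriv_right_of_le hτσ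
      (hcf.mono (fun x hx => le_trans hτ hx.1)) (fun x hx => ?_) (hII f' hcf' τ σ hτ hτσ)
    have hx0 : 0 < x := lt_of_le_of_lt hτ hx.1
    exact ((hdf x hx0.le).hasDerivAt (Ici_mem_nhds hx0)).hasDerivWithinAt
  -- derivative of the energy
  have hFd : ∀ s, 0 ≤ s → HasDerivWithinAt (fun r => ‖j (u' r)‖^2 + ‖u r‖^2)
      (2*⟪h s, j (u' s)⟫ - 2*(g (u' s) (u' s))) (Ici 0) s := by
    intro s hs
    have e1 : ⟪u'' s, j (u' s)⟫ + ⟪u s, u' s⟫ + g (u' s) (u' s) = ⟪h s, j (u' s)⟫ := by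
      have e := ContinuousLinearMap.ext_iff.1 (heq s hs) (u' s)
      simpa [ContinuousLinearMap.add_apply, hι, hA] using e
    have h1 := HasDerivWithinAt.inner ℝ (hu'' s hs) (hu'' s hs)
    have h2 := HasDerivWithinAt.inner ℝ (hu s hs) (hu s hs)
    have h3 := h1.add h2
    have h4 : HasDerivWithinAt (fun r => ‖j (u' r)‖^2 + ‖u r‖^2)
        (⟪j (u' s), u'' s⟫ + ⟪u'' s, j (u' s)⟫ + (⟪u s, u' s⟫ + ⟪u' s, u s⟫)) (Ici 0) s := by
      refine h3.congr (fun r hr => ?_) ?_ <;> simp [real_inner_self_eq_norm_sq]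
    have hval : 2*⟪h s, j (u' s)⟫ - 2*(g (u' s) (u' s)) =
        ⟪j (u' s), u'' s⟫ + ⟪u'' s, j (u' s)⟫ + (⟪u s, u' s⟫ + ⟪u' s, u s⟫) := by
      linarith [real_inner_comm (j (u' s)) (u'' s), real_inner_comm (u' s) (u s), e1]
    rw [hval]; exact h4
  -- derivative of the cross term
  have hΦd : ∀ s, 0 ≤ s → HasDerivWithinAt (fun r => ⟪j (u' r), j (u r)⟫)
      (⟪h s, j (u s)⟫ - ‖u s‖^2 - g (u' s) (u s) + ‖j (u' s)‖^2) (Ici 0) s := by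
    intro s hs
    have e2 : ⟪u'' s, j (u s)⟫ + ⟪u s, u s⟫ + g (u' s) (u s) = ⟪h s, j (u s)⟫ := by
      have e := ContinuousLinearMap.ext_iff.1 (heq s hs) (u s)
      simpa [ContinuousLinearMap.add_apply, hι, hA] using e
    have hjud : HasDerivWithinAt (fun r => j (u r)) (j (u' s)) (Ici 0) s :=
      j.hasFDerivAt.comp_hasDerivWithinAt s (hu s hs)
    have h1 := HasDerivWithinAt.inner ℝ (hu'' s hs) hjud
    have hval : ⟪h s, j (u s)⟫ - ‖u s‖^2 - g (u' s) (u s) + ‖j (u' s)‖^2 =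
        ⟪j (u' s), j (u' s)⟫ + ⟪u'' s, j (u s)⟫ := by
      have q1 := real_inner_self_eq_norm_sq (u s)
      have q2 := real_inner_self_eq_norm_sq (j (u' s))
      linarith
    rw [hval]; exact h1
  -- energy identity
  have hcF' : ContinuousOn (fun s => 2*⟪h s, j (u' s)⟫ - 2*(g (u' s) (u' s))) (Ici 0) :=
    (continuousOn_const.mul hchju').sub (continuousOn_const.mul hcgvv)
  have hFid : ∀ τ σ : ℝ, 0 ≤ τ → τ ≤ σ →
      (∫ s in τ..σ, (2*⟪h s, j (u' s)⟫ - 2*(g (u' s) (u' s)))) =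
        (‖j (u' σ)‖^2 + ‖u σ‖^2) - (‖j (u' τ)‖^2 + ‖u τ‖^2) :=
    fun τ σ hτ hτσ => hFTC _ _ hcF hcF' hFd τ σ hτ hτσ
  have hcΦ' : ContinuousOn (fun s => ⟪h s, j (u s)⟫ - ‖u s‖^2 - g (u' s) (u s) + ‖j (u' s)‖^2)
      (Ici 0) := ((hchju.sub hcb2).sub hcgvu).add hca2
  have hΦid : ∀ τ σ : ℝ, 0 ≤ τ → τ ≤ σ →
      (∫ s in τ..σ, (⟪h s, j (u s)⟫ - ‖u s‖^2 - g (u' s) (u s) + ‖j (u' s)‖^2)) =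
        ⟪j (u' σ), j (u σ)⟫ - ⟪j (u' τ), j (u τ)⟫ :=
    fun τ σ hτ hτσ => hFTC _ _ hcΦ hcΦ' hΦd τ σ hτ hτσ
  -- pointwise Young: 2xy ≤ d x² + γ y²
  have hyoung : ∀ x y : ℝ, 2*(x*y) ≤ d*x^2 + γ*y^2 := by
    intro x y
    nlinarith [sq_nonneg (d*x - y), hd0, hdγ, mul_pos hd0 hγ]
  -- pointwise estimate on the energy derivative
  have hpt1 : ∀ s, 0 ≤ s → 2*⟪h s, j (u' s)⟫ - 2*(g (u' s) (u' s)) ≤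
      d*‖h s‖^2 + 2*C₁ - γ*‖j (u' s)‖^2 := by
    intro s hs
    have q1 := real_inner_le_norm (h s) (j (u' s))
    have q2 := hG1 (u' s)
    have q3 := hyoung ‖h s‖ ‖j (u' s)‖
    nlinarith [norm_nonneg (h s), norm_nonneg (j (u' s))]
  -- the local growth bound
  have hloc : ∀ τ σ : ℝ, 0 ≤ τ → τ ≤ σ → σ ≤ τ + 1 →
      (‖j (u' σ)‖^2 + ‖u σ‖^2) ≤ (‖j (u' τ)‖^2 + ‖u τ‖^2) + C := by
    intro τ σ hτ h1 h2
    have e1 := hFid τ σ hτ h1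
    have e2 : (∫ s in τ..σ, (2*⟪h s, j (u' s)⟫ - 2*(g (u' s) (u' s)))) ≤
        ∫ s in τ..σ, (d*‖h s‖^2 + 2*C₁) := by
      refine hmono _ _ hcF' (continuousOn_const.mul hcnh |>.add continuousOn_const) τ σ hτ h1 ?_
      intro s hs
      have := hpt1 s (le_trans hτ hs.1)
      simp only [Pi.add_apply, Pi.mul_apply]
      nlinarith [sq_nonneg ‖j (u' s)‖, hγ.le, mul_nonneg hγ.le (sq_nonneg ‖j (u' s)‖)]
    have e3 : (∫ s in τ..σ, (d*‖h s‖^2 + 2*C₁)) =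
        d*(∫ s in τ..σ, ‖h s‖^2) + (σ - τ)*(2*C₁) := by
      rw [intervalIntegral.integral_add ((hII _ hcnh τ σ hτ h1).const_mul d) intervalIntegrable_const,
        intervalIntegral.integral_const_mul, intervalIntegral.integral_const, smul_eq_mul]
    have e4 : d*(∫ s in τ..σ, ‖h s‖^2) ≤ d*m :=
      mul_le_mul_of_nonneg_left (hhm τ σ hτ h1 h2) hd0.le
    have e5 : (σ - τ)*(2*C₁) ≤ 2*C₁ := by nlinarith
    rw [hCdef]; linarith [e1.symm.trans_le (e2.trans_eq e3) ]
  -- nonnegativity of energy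
  have hF0 : ∀ t : ℝ, 0 ≤ ‖j (u' t)‖^2 + ‖u t‖^2 := fun t => by positivity
  -- the step dichotomy
  have hκ0 : 0 ≤ C₂/K := div_nonneg hC₂ hK.le
  have hκK : K*(C₂/K) = C₂ := by field_simp
  have hgvvlow : ∀ s : ℝ, 0 ≤ g (u' s) (u' s) + C₂/K := by
    intro s
    have h1 : (0:ℝ) ≤ C₂ + K * (g (u' s) (u' s)) := le_trans (norm_nonneg _) (hG2 (u' s))
    nlinarith [hK]
  have hstep : ∀ t : ℝ, 0 ≤ t →
      (‖j (u' (t+1))‖^2 + ‖u (t+1)‖^2) ≤ (‖j (u' t)‖^2 + ‖u t‖^2) - 2 ∨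
      (‖j (u' (t+1))‖^2 + ‖u (t+1)‖^2) ≤ R := by
    intro t ht
    by_cases hdrop : (‖j (u' (t+1))‖^2 + ‖u (t+1)‖^2) ≤ (‖j (u' t)‖^2 + ‖u t‖^2) - 2
    · exact Or.inl hdrop
    right
    push_neg at hdrop
    -- (a) kinetic energy integral bound
    have eF := hFid t (t+1) ht (by linarith)
    have ea : (∫ s in t..(t+1), (2*⟪h s, j (u' s)⟫ - 2*(g (u' s) (u' s)))) ≤
        ∫ s in t..(t+1), (d*‖h s‖^2 + 2*C₁ - γ*‖j (u' s)‖^2) := by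
      refine hmono _ _ hcF' (((continuousOn_const.mul hcnh).add continuousOn_const).sub
        (continuousOn_const.mul hca2)) t (t+1) ht (by linarith) ?_
      intro s hs; exact hpt1 s (le_trans ht hs.1)
    have esplit : (∫ s in t..(t+1), (d*‖h s‖^2 + 2*C₁ - γ*‖j (u' s)‖^2)) =
        d*(∫ s in t..(t+1), ‖h s‖^2) + (t+1-t)*(2*C₁) - γ*(∫ s in t..(t+1), ‖j (u' s)‖^2) := by
      rw [intervalIntegral.integral_sub (((hII _ hcnh t (t+1) ht (by linarith)).const_mul d).add
            intervalIntegrable_const) ((hII _ hca2 t (t+1) ht (by linarith)).const_mul γ),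
          intervalIntegral.integral_add ((hII _ hcnh t (t+1) ht (by linarith)).const_mul d)
            intervalIntegrable_const]
      simp only [intervalIntegral.integral_const_mul, intervalIntegral.integral_const,
        smul_eq_mul]
      ring
    have hh1 : d*(∫ s in t..(t+1), ‖h s‖^2) ≤ d*m :=
      mul_le_mul_of_nonneg_left (hhm t (t+1) ht (by linarith) (by linarith)) hd0.le
    have hIa : γ*(∫ s in t..(t+1), ‖j (u' s)‖^2) ≤ 2 + C := by
      rw [hCdef]; linarith only [eF, ea, esplit, hh1, hdrop]
    have hXnn : 0 ≤ ∫ s in t..(t+1), ‖j (u' s)‖^2 :=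
      intervalIntegral.integral_nonneg (by linarith) (fun s _ => sq_nonneg _)
    have hIa' : (∫ s in t..(t+1), ‖j (u' s)‖^2) ≤ I₁ := by
      have w : d*(γ*(∫ s in t..(t+1), ‖j (u' s)‖^2)) ≤ d*(2 + C) :=
        mul_le_mul_of_nonneg_left hIa hd0.le
      calc (∫ s in t..(t+1), ‖j (u' s)‖^2)
          = (d*γ)*(∫ s in t..(t+1), ‖j (u' s)‖^2) := by rw [hdγ]; ring
        _ = d*(γ*(∫ s in t..(t+1), ‖j (u' s)‖^2)) := by ring
        _ ≤ d*(2 + C) := w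
        _ = I₁ := by rw [hI₁def]; ring
    -- (b) damping integral bound
    have eSplit2 : (∫ s in t..(t+1), (2*⟪h s, j (u' s)⟫ - 2*(g (u' s) (u' s)))) =
        (∫ s in t..(t+1), 2*⟪h s, j (u' s)⟫) - 2*(∫ s in t..(t+1), g (u' s) (u' s)) := by
      rw [intervalIntegral.integral_sub ((hII _ hchju' t (t+1) ht (by linarith)).const_mul 2)
          ((hII _ hcgvv t (t+1) ht (by linarith)).const_mul 2)]
      simp only [intervalIntegral.integral_const_mul]
    have eInner : (∫ s in t..(t+1), 2*⟪h s, j (u' s)⟫) ≤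
        ∫ s in t..(t+1), (d*‖h s‖^2 + γ*‖j (u' s)‖^2) := by
      refine hmono _ _ (continuousOn_const.mul hchju')
        ((continuousOn_const.mul hcnh).add (continuousOn_const.mul hca2)) t (t+1) ht
        (by linarith) ?_
      intro s hs
      have q1 := real_inner_le_norm (h s) (j (u' s))
      have q3 := hyoung ‖h s‖ ‖j (u' s)‖
      simp only [Pi.add_apply, Pi.mul_apply]
      linarith
    have eInner2 : (∫ s in t..(t+1), (d*‖h s‖^2 + γ*‖j (u' s)‖^2)) =
        d*(∫ s in t..(t+1), ‖h s‖^2) + γ*(∫ s in t..(t+1), ‖j (u' s)‖^2) := by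
      rw [intervalIntegral.integral_add ((hII _ hcnh t (t+1) ht (by linarith)).const_mul d)
          ((hII _ hca2 t (t+1) ht (by linarith)).const_mul γ)]
      simp only [intervalIntegral.integral_const_mul]
    have hD : (∫ s in t..(t+1), g (u' s) (u' s)) ≤ 2 + C := by
      have hdmC : d*m ≤ C := by rw [hCdef]; linarith
      linarith only [eF, eSplit2, eInner, eInner2, hh1, hIa, hdrop, hdmC]
    -- (c) good sample points
    obtain ⟨s₁, hs₁mem, hs₁le⟩ := aux_exists_le_integral (fun s => ‖j (u' s)‖^2) t (t+1/4)
      (by linarith) (hca2.mono (fun x hx => le_trans ht hx.1))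
    obtain ⟨s₂, hs₂mem, hs₂le⟩ := aux_exists_le_integral (fun s => ‖j (u' s)‖^2) (t+3/4) (t+1)
      (by linarith) (hca2.mono (fun x hx => le_trans (by linarith : (0:ℝ) ≤ t + 3/4) hx.1))
    have hs₁0 : (0:ℝ) ≤ s₁ := le_trans ht hs₁mem.1
    have hs₁₂ : s₁ ≤ s₂ := le_trans hs₁mem.2 (le_trans (by linarith) hs₂mem.1)
    have hlen1 : 1/2 ≤ s₂ - s₁ := by
      have := hs₁mem.2; have := hs₂mem.1; linarith
    have hlen2 : s₂ - s₁ ≤ 1 := by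
      have := hs₁mem.1; have := hs₂mem.2; linarith
    have ha₁ : ‖j (u' s₁)‖^2 ≤ 4*I₁ := by
      have hq := hsub _ hca2 (fun s _ => sq_nonneg _) t (t+1) t (t+1/4) ht le_rfl
        (by linarith) (by linarith)
      linarith only [hs₁le, hq, hIa']
    have ha₂ : ‖j (u' s₂)‖^2 ≤ 4*I₁ := by
      have hq := hsub _ hca2 (fun s _ => sq_nonneg _) t (t+1) (t+3/4) (t+1) ht
        (by linarith) (by linarith) le_rfl
      linarith only [hs₂le, hq, hIa']
    -- (d) uniform bound on ‖u s‖
    obtain ⟨B, hBdef⟩ : ∃ x : ℝ, x = Real.sqrt ((‖j (u' t)‖^2 + ‖u t‖^2) + C) := ⟨_, rfl⟩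
    have hB0 : 0 ≤ B := hBdef ▸ Real.sqrt_nonneg _
    have hB2 : B^2 = (‖j (u' t)‖^2 + ‖u t‖^2) + C := by
      rw [hBdef]; exact Real.sq_sqrt (add_nonneg (hF0 t) hC0)
    have hBb : ∀ s, s ∈ Icc t (t+1) → ‖u s‖ ≤ B := by
      intro s hsm
      have h1 := hloc t s ht hsm.1 hsm.2
      have h2 : ‖u s‖^2 ≤ (‖j (u' t)‖^2 + ‖u t‖^2) + C := by
        linarith only [h1, sq_nonneg ‖j (u' s)‖]
      calc ‖u s‖ = Real.sqrt (‖u s‖^2) := (Real.sqrt_sq (norm_nonneg _)).symm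
        _ ≤ B := by rw [hBdef]; exact Real.sqrt_le_sqrt h2
    -- (e) the multiplier identity on [s₁, s₂]
    have eΦ := hΦid s₁ s₂ hs₁0 hs₁₂
    have hc1 : ContinuousOn (fun s => ⟪h s, j (u s)⟫ - g (u' s) (u s) + ‖j (u' s)‖^2) (Ici 0) :=
      (hchju.sub hcgvu).add hca2
    have esplit3 : (∫ s in s₁..s₂, ‖u s‖^2) =
        (∫ s in s₁..s₂, (⟪h s, j (u s)⟫ - g (u' s) (u s) + ‖j (u' s)‖^2)) -
        (∫ s in s₁..s₂, (⟪h s, j (u s)⟫ - ‖u s‖^2 - g (u' s) (u s) + ‖j (u' s)‖^2)) := by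
      rw [← intervalIntegral.integral_sub (hII _ hc1 s₁ s₂ hs₁0 hs₁₂)
          (hII _ hcΦ' s₁ s₂ hs₁0 hs₁₂)]
      congr 1; funext s; ring
    -- pointwise bound on the main integrand
    have hptm : ∀ s ∈ Icc s₁ s₂,
        ⟪h s, j (u s)⟫ - g (u' s) (u s) + ‖j (u' s)‖^2 ≤
        (c*B/2 + B*C₂) + (c*B/2)*‖h s‖^2 + (B*K)*(g (u' s) (u' s)) + ‖j (u' s)‖^2 := by
      intro s hs
      have hsmem : s ∈ Icc t (t+1) := ⟨le_trans hs₁mem.1 hs.1, le_trans hs.2 hs₂mem.2⟩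
      have q1 := real_inner_le_norm (h s) (j (u s))
      have q2 : ‖j (u s)‖ ≤ c * ‖u s‖ := by rw [hcdef]; exact j.le_opNorm (u s)
      have q3 := hBb s hsmem
      have q4 : ‖h s‖ ≤ (1 + ‖h s‖^2)/2 := by linarith only [sq_nonneg (‖h s‖ - 1)]
      have q5 : ‖(g (u' s)) (u s)‖ ≤ ‖g (u' s)‖ * ‖u s‖ := (g (u' s)).le_opNorm (u s)
      have q5' : -(g (u' s) (u s)) ≤ ‖g (u' s)‖ * ‖u s‖ := by
        have := neg_abs_le (g (u' s) (u s))
        have := Real.norm_eq_abs (g (u' s) (u s))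
        linarith
      have q6 := hG2 (u' s)
      have q7 : (0:ℝ) ≤ C₂ + K * (g (u' s) (u' s)) := le_trans (norm_nonneg _) q6
      have t1 : ⟪h s, j (u s)⟫ ≤ ‖h s‖*(c*‖u s‖) := by
        have := mul_le_mul_of_nonneg_left q2 (norm_nonneg (h s))
        linarith
      have t2 : ‖h s‖*(c*‖u s‖) ≤ ((1 + ‖h s‖^2)/2)*(c*B) := by
        have hc2 : c*‖u s‖ ≤ c*B := mul_le_mul_of_nonneg_left q3 hc0
        have hc3 : (0:ℝ) ≤ c*‖u s‖ := mul_nonneg hc0 (norm_nonneg _)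
        have hc4 : (0:ℝ) ≤ (1 + ‖h s‖^2)/2 := by positivity
        exact mul_le_mul q4 hc2 hc3 hc4
      have t3 : -(g (u' s) (u s)) ≤ (C₂ + K*(g (u' s) (u' s)))*B := by
        have := mul_le_mul q6 q3 (norm_nonneg (u s)) q7
        linarith
      linarith only [t1, t2, t3]
    have hbc : ContinuousOn (fun s => (c*B/2 + B*C₂) + (c*B/2)*‖h s‖^2 +
        (B*K)*(g (u' s) (u' s)) + ‖j (u' s)‖^2) (Ici 0) :=
      ((continuousOn_const.add (continuousOn_const.mul hcnh)).add
        (continuousOn_const.mul hcgvv)).add hca2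
    have eT1 : (∫ s in s₁..s₂, (⟪h s, j (u s)⟫ - g (u' s) (u s) + ‖j (u' s)‖^2)) ≤
        ∫ s in s₁..s₂, ((c*B/2 + B*C₂) + (c*B/2)*‖h s‖^2 +
          (B*K)*(g (u' s) (u' s)) + ‖j (u' s)‖^2) :=
      hmono _ _ hc1 hbc s₁ s₂ hs₁0 hs₁₂ hptm
    have eT2 : (∫ s in s₁..s₂, ((c*B/2 + B*C₂) + (c*B/2)*‖h s‖^2 +
          (B*K)*(g (u' s) (u' s)) + ‖j (u' s)‖^2)) =
        (s₂ - s₁)*(c*B/2 + B*C₂) + (c*B/2)*(∫ s in s₁..s₂, ‖h s‖^2) +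
          (B*K)*(∫ s in s₁..s₂, g (u' s) (u' s)) + (∫ s in s₁..s₂, ‖j (u' s)‖^2) := by
      rw [intervalIntegral.integral_add
            ((intervalIntegrable_const.add ((hII _ hcnh s₁ s₂ hs₁0 hs₁₂).const_mul _)).add
              ((hII _ hcgvv s₁ s₂ hs₁0 hs₁₂).const_mul _)) (hII _ hca2 s₁ s₂ hs₁0 hs₁₂),
          intervalIntegral.integral_add
            (intervalIntegrable_const.add ((hII _ hcnh s₁ s₂ hs₁0 hs₁₂).const_mul _))
            ((hII _ hcgvv s₁ s₂ hs₁0 hs₁₂).const_mul _),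
          intervalIntegral.integral_add intervalIntegrable_const
            ((hII _ hcnh s₁ s₂ hs₁0 hs₁₂).const_mul _),
          intervalIntegral.integral_const]
      simp only [intervalIntegral.integral_const_mul, smul_eq_mul]
    -- bounds on the pieces
    have eh2 : (∫ s in s₁..s₂, ‖h s‖^2) ≤ m := hhm s₁ s₂ hs₁0 hs₁₂ (by linarith)
    have eh2' : 0 ≤ ∫ s in s₁..s₂, ‖h s‖^2 :=
      intervalIntegral.integral_nonneg hs₁₂ (fun s _ => sq_nonneg _)
    have ega : (∫ s in s₁..s₂, (g (u' s) (u' s) + C₂/K)) ≤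
        ∫ s in t..(t+1), (g (u' s) (u' s) + C₂/K) :=
      hsub _ (hcgvv.add continuousOn_const) (fun s _ => hgvvlow s) t (t+1) s₁ s₂ ht
        hs₁mem.1 hs₁₂ hs₂mem.2
    have egb : (∫ s in s₁..s₂, (g (u' s) (u' s) + C₂/K)) =
        (∫ s in s₁..s₂, g (u' s) (u' s)) + (s₂ - s₁)*(C₂/K) := by
      rw [intervalIntegral.integral_add (hII _ hcgvv s₁ s₂ hs₁0 hs₁₂) intervalIntegrable_const,
        intervalIntegral.integral_const, smul_eq_mul]
    have egc : (∫ s in t..(t+1), (g (u' s) (u' s) + C₂/K)) =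
        (∫ s in t..(t+1), g (u' s) (u' s)) + (t+1-t)*(C₂/K) := by
      rw [intervalIntegral.integral_add (hII _ hcgvv t (t+1) ht (by linarith))
        intervalIntegrable_const, intervalIntegral.integral_const, smul_eq_mul]
    have eg : (∫ s in s₁..s₂, g (u' s) (u' s)) ≤ (2 + C) + C₂/K := by
      have wκ : (0:ℝ) ≤ (s₂ - s₁)*(C₂/K) :=
        mul_nonneg (by linarith only [hlen1]) hκ0
      linarith only [ega, egb, egc, hD, wκ]
    have ea2 : (∫ s in s₁..s₂, ‖j (u' s)‖^2) ≤ I₁ :=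
      le_trans (hsub _ hca2 (fun s _ => sq_nonneg _) t (t+1) s₁ s₂ ht hs₁mem.1 hs₁₂ hs₂mem.2)
        hIa'
    -- boundary terms
    have hμbd : ∀ s0, s0 ∈ Icc t (t+1) → ‖j (u' s0)‖^2 ≤ 4*I₁ →
        |⟪j (u' s0), j (u s0)⟫| ≤ (c*B)*μ := by
      intro s0 hmem ha
      have r0 := abs_real_inner_le_norm (j (u' s0)) (j (u s0))
      have r1 : ‖j (u' s0)‖ ≤ μ := by
        have w1 : ‖j (u' s0)‖ = Real.sqrt (‖j (u' s0)‖^2) := (Real.sqrt_sq (norm_nonneg _)).symm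
        have w2 : Real.sqrt (‖j (u' s0)‖^2) ≤ Real.sqrt (4*I₁) := Real.sqrt_le_sqrt ha
        have w3 : Real.sqrt (4*I₁) ≤ (4*I₁ + 1)/2 := aux_sqrt_le _ (by linarith)
        rw [hμdef]; linarith
      have r2 : ‖j (u s0)‖ ≤ c*B := by
        have w1 : ‖j (u s0)‖ ≤ c*‖u s0‖ := by rw [hcdef]; exact j.le_opNorm (u s0)
        have w2 := hBb s0 hmem
        have w3 : c*‖u s0‖ ≤ c*B := mul_le_mul_of_nonneg_left w2 hc0
        linarith only [w1, w3]
      calc |⟪j (u' s0), j (u s0)⟫| ≤ ‖j (u' s0)‖ * ‖j (u s0)‖ := r0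
        _ ≤ μ * (c*B) := by
            apply mul_le_mul r1 r2 (norm_nonneg _) hμ0
        _ = (c*B)*μ := by ring
    have hΦ₁ := hμbd s₁ ⟨hs₁mem.1, le_trans hs₁mem.2 (by linarith)⟩ ha₁
    have hΦ₂ := hμbd s₂ ⟨le_trans (by linarith) hs₂mem.1, hs₂mem.2⟩ ha₂
    -- combine: ∫ b² over [s₁,s₂]
    have hb2int : (∫ s in s₁..s₂, ‖u s‖^2) ≤ B*P + I₁ := by
      have w1 : (∫ s in s₁..s₂, ‖u s‖^2) ≤
          (s₂ - s₁)*(c*B/2 + B*C₂) + (c*B/2)*m + (B*K)*((2 + C) + C₂/K) + I₁ +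
            (c*B)*μ + (c*B)*μ := by
        have a1 : (c*B/2)*(∫ s in s₁..s₂, ‖h s‖^2) ≤ (c*B/2)*m :=
          mul_le_mul_of_nonneg_left eh2
            (by linarith only [mul_nonneg hc0 hB0])
        have a2 : (B*K)*(∫ s in s₁..s₂, g (u' s) (u' s)) ≤ (B*K)*((2 + C) + C₂/K) :=
          mul_le_mul_of_nonneg_left eg (mul_nonneg hB0 hK.le)
        have a3 := abs_le.1 hΦ₁
        have a4 := abs_le.1 hΦ₂
        linarith only [a1, a2, esplit3, eT1, eT2, eΦ, ea2, a3.1, a3.2, a4.1, a4.2]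
      have w2 : (s₂ - s₁)*(c*B/2 + B*C₂) ≤ c*B/2 + B*C₂ := by
        have wnn : (0:ℝ) ≤ c*B/2 + B*C₂ := by
          linarith only [mul_nonneg hc0 hB0, mul_nonneg hB0 hC₂]
        have := mul_le_mul_of_nonneg_right hlen2 wnn
        linarith only [this]
      have w3 : (B*K)*((2 + C) + C₂/K) = B*(K*(2+C)) + B*C₂ := by
        field_simp
      rw [hPdef]
      linarith only [w1, w2, w3]
    have hFint : (∫ s in s₁..s₂, (‖j (u' s)‖^2 + ‖u s‖^2)) ≤ 2*I₁ + B*P := by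
      rw [intervalIntegral.integral_add (hII _ hca2 s₁ s₂ hs₁0 hs₁₂)
        (hII _ hcb2 s₁ s₂ hs₁0 hs₁₂)]
      linarith only [ea2, hb2int]
    -- (f) conclude
    by_cases hsmall : (‖j (u' t)‖^2 + ‖u t‖^2) ≤ C + 2
    · have w1 := hloc t (t+1) ht (by linarith) (by linarith)
      have w2 : 2*C + 2 ≤ R := by rw [hRdef]; linarith only [hI₁0, sq_nonneg P, hC0]
      linarith only [w1, w2, hsmall]
    · push_neg at hsmall
      have hFlow : ∀ s ∈ Icc t (t+1),
          (‖j (u' t)‖^2 + ‖u t‖^2) - C - 2 ≤ ‖j (u' s)‖^2 + ‖u s‖^2 := by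
        intro s hsm
        have h1 := hloc s (t+1) (le_trans ht hsm.1) hsm.2 (by linarith [hsm.1])
        linarith only [h1, hdrop]
      have hconst : ((‖j (u' t)‖^2 + ‖u t‖^2) - C - 2) * (s₂ - s₁) ≤
          ∫ s in s₁..s₂, (‖j (u' s)‖^2 + ‖u s‖^2) := by
        have w := hmono (fun _ => (‖j (u' t)‖^2 + ‖u t‖^2) - C - 2) _ continuousOn_const hcF
          s₁ s₂ hs₁0 hs₁₂
          (fun s hs => hFlow s ⟨le_trans hs₁mem.1 hs.1, le_trans hs.2 hs₂mem.2⟩)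
        calc ((‖j (u' t)‖^2 + ‖u t‖^2) - C - 2) * (s₂ - s₁)
            = ∫ _ in s₁..s₂, ((‖j (u' t)‖^2 + ‖u t‖^2) - C - 2) := by
              rw [intervalIntegral.integral_const, smul_eq_mul]; ring
          _ ≤ _ := w
      have hhalf : ((‖j (u' t)‖^2 + ‖u t‖^2) - C - 2)*(1/2) ≤
          ((‖j (u' t)‖^2 + ‖u t‖^2) - C - 2)*(s₂ - s₁) :=
        mul_le_mul_of_nonneg_left hlen1 (by linarith only [hsmall])
      have hXle : (‖j (u' t)‖^2 + ‖u t‖^2) ≤ C + 2 + 4*I₁ + 2*(B*P) := by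
        linarith only [hconst, hFint, hhalf]
      have h2BP : 2*(B*P) ≤ B^2/2 + 2*P^2 := by linarith only [sq_nonneg (B - 2*P)]
      have hBsq : B^2 ≤ 4*C + 4 + 8*I₁ + 4*P^2 := by
        rw [hB2]; linarith only [hXle, h2BP, hB2]
      have wfin := hloc t (t+1) ht (by linarith) (by linarith)
      rw [hRdef]; linarith only [hB2, wfin, hBsq, hC0]
  -- conclusion
  have hev : ∀ᶠ t in atTop, (fun t : ℝ => ‖j (u' t)‖^2 + ‖u t‖^2) t ≤ R + C :=
    aux_iterate _ C R hF0 hloc hstep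
  have hbd : IsBoundedUnder (· ≥ ·) atTop (fun t : ℝ => ‖j (u' t)‖ ^ 2 + ‖u t‖ ^ 2) :=
    isBoundedUnder_of ⟨(0:ℝ), fun t => hF0 t⟩
  have hcob : IsCoboundedUnder (· ≤ ·) atTop (fun t : ℝ => ‖j (u' t)‖ ^ 2 + ‖u t‖ ^ 2) :=
    hbd.isCoboundedUnder_le
  refine le_trans (limsup_le_of_le hcob hev) ?_
  -- final arithmetic
  have h4 : Real.sqrt m ^ 4 = m ^ 2 := by
    rw [show (Real.sqrt m)^4 = ((Real.sqrt m)^2)^2 by ring, Real.sq_sqrt hm0]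
  rw [h4]
  have hPsplit : P = p₀ + p₁ * m := by
    rw [hPdef, hμdef, hI₁def, hCdef, hp₀def, hp₁def]; ring
  have hP2 : P^2 ≤ 2*p₀^2 + 2*p₁^2*m^2 := by
    rw [hPsplit]; nlinarith [sq_nonneg (p₀ - p₁*m)]
  have hlin : R + C ≤ Aa + Bb*m + 8*p₁^2*m^2 := by
    rw [hRdef, hI₁def, hCdef, hAadef, hBbdef]; nlinarith
  have hfin : Aa + Bb*m + 8*p₁^2*m^2 ≤ (Aa + Bb + 8*p₁^2) * (1 + m^2) := by
    nlinarith [mul_nonneg hBb0 (sq_nonneg (m-1)), sq_nonneg (p₁*m), sq_nonneg m, hm0,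
      mul_nonneg (sq_nonneg p₁) (sq_nonneg m)]
  linarith
end

section
/- Assume g(0) = 0. Let φ ∈ V, φ ≠ 0, and λ > 0 with A φ = λ ι(j φ) (φ is an eigenvector of A with eigenvalue λ). Then for every k > 0 the constant function u(t) ≡ k φ is a strong solution of ü + A u + g(u̇) = h with constant forcing h(t) ≡ k λ j φ, and along this solution limsup_{t→∞} (|j u̇(t)|_H² + ‖u(t)‖_V²) = ‖h‖_{S²}² / λ. In particular the ultimate bound of the energy grows at least quadratically in ‖h‖_{S²}, so the quadratic dependence in the ultimate bound cannot be improved. -/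
open scoped RealInnerProductSpace
open Set Filter MeasureTheory intervalIntegral

/-- Optimality of the quadratic ultimate bound. If `g 0 = 0`
and `φ ≠ 0` is an eigenvector of `A` with eigenvalue `λ > 0`, then for every
`k > 0` the constant function `u ≡ k φ` (with `u̇ ≡ 0`, `ü ≡ 0`) is a strong
solution for the constant forcing `h ≡ k λ j φ`, and along this solution the
ultimate energy bound equals `‖h‖_{S²}² / λ`. -/
theorem stmt_10
    {V H : Type*}
    [NormedAddCommGroup V] [InnerProductSpace ℝ V] [CompleteSpace V]
    [NormedAddCommGroup H] [InnerProductSpace ℝ H] [CompleteSpace H]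
    (j : V →L[ℝ] H) (hj_inj : Function.Injective j) (hj_dense : DenseRange j)
    (ι : H → (V →L[ℝ] ℝ)) (hι : ∀ (w : H) (v : V), ι w v = ⟪w, j v⟫)
    (A : V → (V →L[ℝ] ℝ)) (hA : ∀ u v : V, A u v = ⟪u, v⟫)
    (g : V → (V →L[ℝ] ℝ)) (hg_cont : Continuous g)
    (hg_mono : ∀ v w : V, (g v - g w) (v - w) ≥ 0)
    (hg0 : g 0 = 0)
    (φ : V) (hφ : φ ≠ 0) (lam : ℝ) (hlam : 0 < lam)
    (heig : A φ = lam • ι (j φ))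
    (k : ℝ) (hk : 0 < k) :
    (∀ t ∈ Ici (0 : ℝ), HasDerivWithinAt (fun _ : ℝ => k • φ) (0 : V) (Ici 0) t) ∧
    (∀ t ∈ Ici (0 : ℝ), HasDerivWithinAt (fun _ : ℝ => j (0 : V)) (0 : H) (Ici 0) t) ∧
    (∀ t ∈ Ici (0 : ℝ), ι (0 : H) + A (k • φ) + g 0 = ι ((k * lam) • j φ)) ∧
    limsup (fun _ : ℝ => ‖j (0 : V)‖ ^ 2 + ‖k • φ‖ ^ 2) atTop =
      Real.sqrt (sSup {x : ℝ | ∃ t : ℝ, 0 ≤ t ∧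
        x = ∫ s in t..(t + 1), ‖(k * lam) • j φ‖ ^ 2}) ^ 2 / lam := by
  have hι0 : ι (0 : H) = 0 := by
    ext v; simp [hι]
  refine ⟨fun t _ => hasDerivWithinAt_const _ _ _,
    fun t _ => hasDerivWithinAt_const _ _ _, ?_, ?_⟩
  · intro t _
    rw [hι0, hg0]
    ext v
    have h1 : A φ v = lam * ⟪j φ, j v⟫ := by
      rw [heig]; simp [hι]
    simp only [ContinuousLinearMap.add_apply, ContinuousLinearMap.zero_apply,
      hA, hι, real_inner_smul_left]
    rw [← hA φ v, h1]
    ring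
  · -- the set of integrals is a singleton
    set c : ℝ := ‖(k * lam) • j φ‖ ^ 2 with hc
    have hint : ∀ t : ℝ, (∫ s in t..(t + 1), c) = c := by
      intro t
      rw [intervalIntegral.integral_const]
      simp
    have hset : {x : ℝ | ∃ t : ℝ, 0 ≤ t ∧ x = ∫ s in t..(t + 1), c} = {c} := by
      ext x
      constructor
      · rintro ⟨t, _, rfl⟩; simp [hint t]
      · rintro rfl; exact ⟨0, le_refl _, (hint 0).symm⟩
    rw [hset, csSup_singleton, Real.sq_sqrt (by positivity)]
    rw [limsup_const]
    -- now an identity of real numbers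
    have hnorm : ‖φ‖ ^ 2 = lam * ‖j φ‖ ^ 2 := by
      have := congrArg (fun f => f φ) heig
      simp only [hA, hι, ContinuousLinearMap.smul_apply, smul_eq_mul] at this
      rw [real_inner_self_eq_norm_sq] at this
      rw [this, real_inner_self_eq_norm_sq]
    rw [hc, norm_smul, map_zero, norm_zero]
    have hkl : ‖k * lam‖ = k * lam := abs_of_pos (by positivity)
    rw [norm_smul, hkl, Real.norm_eq_abs, abs_of_pos hk]
    field_simp
    rw [hnorm]
    ring
end

section
/- Let α ≥ 0 and assume: there exist γ > 0, C₁ ≥ 0 with (g(v), v) ≥ γ |v|^{α+2} − C₁ for all v ∈ H, and there exist K > 0, C₂ ≥ 0 with |g(v)| ≤ C₂ + K |v|^{α+1} for all v ∈ H. Let τ > 0 and let h : ℝ → H be continuous, bounded, and τ-anti-periodic. Then there exists a constant C > 0, independent of h (depending only on H, A, g, α, τ and the constants γ, C₁, C₂, K), such that every τ-anti-periodic C² function u : ℝ → H satisfying ü(t) + A u(t) + g(u̇(t)) = h(t) for all t ∈ ℝ obeys sup_{t∈ℝ} (|u̇(t)|² + |u(t)|²) ≤ C (1 + ‖h‖_{L^∞(ℝ,H)}^{2/(α+1)}).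 -/
open scoped RealInnerProductSpace
open Set Filter

private lemma young_pt {α lam x : ℝ} (hα : 0 ≤ α) (hlam : 0 < lam) (hx : 0 ≤ x) :
    x ≤ lam + x ^ (α + 2) / lam ^ (α + 1) := by
  have hlp : (0:ℝ) < lam ^ (α + 1) := Real.rpow_pos_of_pos hlam _
  rcases le_total x lam with hc | hc
  · have h0 : 0 ≤ x ^ (α + 2) / lam ^ (α + 1) := by positivity
    linarith
  · have hxpos : 0 < x := lt_of_lt_of_le hlam hc
    have h1 : lam ^ (α + 1) ≤ x ^ (α + 1) := Real.rpow_le_rpow hlam.le hc (by linarith)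
    have h2 : x ^ (α + 2) = x ^ (α + 1) * x := by
      rw [show α + 2 = (α + 1) + 1 by ring, Real.rpow_add_one hxpos.ne']
    have h3 : x ≤ x ^ (α + 2) / lam ^ (α + 1) := by
      rw [le_div_iff₀ hlp, h2]
      nlinarith [hxpos.le]
    linarith

set_option maxHeartbeats 2000000 in
/-- Anti-periodic case with `V = H`. Under power-like
coercivity and growth conditions on `g`, there is a constant `C`
independent of `h` such that every `τ`-anti-periodic `C²` solution of
`ü + A u + g(u̇) = h` with `h` continuous, bounded and `τ`-anti-periodic
satisfies `sup_t (|u̇(t)|² + |u(t)|²) ≤ C (1 + ‖h‖_∞^{2/(α+1)})`. -/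
theorem stmt_11
    {H : Type*} [NormedAddCommGroup H] [InnerProductSpace ℝ H] [CompleteSpace H]
    (A : H →L[ℝ] H)
    (hA_sym : ∀ u v : H, ⟪A u, v⟫ = ⟪u, A v⟫)
    (a : ℝ) (ha : 0 < a) (hA_coer : ∀ v : H, ⟪A v, v⟫ ≥ a * ‖v‖ ^ 2)
    (g : H → H) (hg_cont : Continuous g)
    (hg_mono : ∀ v w : H, ⟪g v - g w, v - w⟫ ≥ 0)
    (α : ℝ) (hα : 0 ≤ α)
    (γ C₁ : ℝ) (hγ : 0 < γ) (hC₁ : 0 ≤ C₁)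
    (hg_coer : ∀ v : H, ⟪g v, v⟫ ≥ γ * ‖v‖ ^ (α + 2) - C₁)
    (K C₂ : ℝ) (hK : 0 < K) (hC₂ : 0 ≤ C₂)
    (hg_grow : ∀ v : H, ‖g v‖ ≤ C₂ + K * ‖v‖ ^ (α + 1))
    (τ : ℝ) (hτ : 0 < τ) :
    ∃ C : ℝ, 0 < C ∧
      ∀ h : ℝ → H, Continuous h → BddAbove (range fun t => ‖h t‖) →
        (∀ t : ℝ, h (t + τ) = -h t) →
        ∀ u u' u'' : ℝ → H,
          (∀ t : ℝ, HasDerivAt u (u' t) t) →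
          (∀ t : ℝ, HasDerivAt u' (u'' t) t) →
          Continuous u'' →
          (∀ t : ℝ, u (t + τ) = -u t) →
          (∀ t : ℝ, u'' t + A (u t) + g (u' t) = h t) →
          ∀ t : ℝ, ‖u' t‖ ^ 2 + ‖u t‖ ^ 2 ≤
            C * (1 + (⨆ s : ℝ, ‖h s‖) ^ (2 / (α + 1))) := by
  classical
  obtain ⟨b, hb_def⟩ : ∃ x : ℝ, x = max 1 (2 / γ) := ⟨_, rfl⟩
  have hb1 : 1 ≤ b := by rw [hb_def]; exact le_max_left _ _
  have hgb : 2 ≤ γ * b := by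
    have h2 : 2 / γ ≤ b := by rw [hb_def]; exact le_max_right _ _
    calc (2:ℝ) = γ * (2 / γ) := by field_simp
    _ ≤ γ * b := by nlinarith
  obtain ⟨c₆, hc6_def⟩ : ∃ x : ℝ, x = 2 * τ * b + τ * C₁ := ⟨_, rfl⟩
  have hc₆0 : 0 < c₆ := by rw [hc6_def]; nlinarith
  obtain ⟨c₇, hc7_def⟩ : ∃ x : ℝ, x = 1 + ‖A‖ * c₆ := ⟨_, rfl⟩
  have hc₇0 : 0 < c₇ := by rw [hc7_def]; nlinarith [norm_nonneg A]
  obtain ⟨c₈, hc8_def⟩ : ∃ x : ℝ, x = max 1 ((C₁ + c₇) / γ) := ⟨_, rfl⟩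
  have hc₈1 : 1 ≤ c₈ := by rw [hc8_def]; exact le_max_left _ _
  refine ⟨4 * (c₈ ^ 2 + c₆ ^ 2) + 1, by positivity, ?_⟩
  intro h hh_cont hh_bdd hh_anti u u' u'' hu hu' hu''_cont hu_anti heqn
  -- basic continuity and periodicity facts
  have hu'_cont : Continuous u' := Differentiable.continuous fun t => (hu' t).differentiableAt
  have hu_cont : Continuous u := Differentiable.continuous fun t => (hu t).differentiableAt
  have hu'_anti : ∀ t, u' (t + τ) = -u' t := by
    intro t
    have h1 : HasDerivAt (fun s => u (s + τ)) (u' (t + τ)) t :=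
      HasDerivAt.comp_add_const t τ (hu (t + τ))
    have heq : (fun s => u (s + τ)) = fun s => -u s := funext hu_anti
    rw [heq] at h1
    exact h1.unique (hu t).neg
  have hu_per : ∀ t, u (t + 2 * τ) = u t := by
    intro t
    rw [show t + 2 * τ = t + τ + τ by ring, hu_anti, hu_anti, neg_neg]
  have hu'_per : ∀ t, u' (t + 2 * τ) = u' t := by
    intro t
    rw [show t + 2 * τ = t + τ + τ by ring, hu'_anti, hu'_anti, neg_neg]
  obtain ⟨M, hM_def⟩ : ∃ x : ℝ, x = ⨆ s : ℝ, ‖h s‖ := ⟨_, rfl⟩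
  have hM_le : ∀ t, ‖h t‖ ≤ M := by
    intro t
    rw [hM_def]
    exact le_ciSup hh_bdd t
  have hM0 : 0 ≤ M := le_trans (norm_nonneg (h 0)) (hM_le 0)
  obtain ⟨P, hP_def⟩ : ∃ x : ℝ, x = b * (1 + M) := ⟨_, rfl⟩
  have hP1 : 1 ≤ P := by nlinarith
  have hP0 : 0 < P := by linarith
  obtain ⟨lam, hlam_def⟩ : ∃ x : ℝ, x = P ^ (α + 1)⁻¹ := ⟨_, rfl⟩
  obtain ⟨N, hN_def⟩ : ∃ x : ℝ, x = (1 + M) ^ (α + 1)⁻¹ := ⟨_, rfl⟩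
  have hα1 : (0:ℝ) < α + 1 := by linarith
  have hlam_pow : lam ^ (α + 1) = P := by
    rw [hlam_def, ← Real.rpow_mul hP0.le, inv_mul_cancel₀ (ne_of_gt hα1), Real.rpow_one]
  have h1M0 : (0:ℝ) < 1 + M := by linarith
  have hN_pow : N ^ (α + 1) = 1 + M := by
    rw [hN_def, ← Real.rpow_mul h1M0.le, inv_mul_cancel₀ (ne_of_gt hα1), Real.rpow_one]
  have hN1 : 1 ≤ N := by rw [hN_def]; exact Real.one_le_rpow (by linarith) (by positivity)
  have hlam1 : 1 ≤ lam := by rw [hlam_def]; exact Real.one_le_rpow hP1 (by positivity)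
  have hlam0 : 0 < lam := by linarith
  have hlamN : lam ≤ b * N := by
    rw [hlam_def, hN_def, hP_def, Real.mul_rpow (by linarith) h1M0.le]
    have hble : b ^ (α + 1)⁻¹ ≤ b := by
      calc b ^ (α + 1)⁻¹ ≤ b ^ (1:ℝ) :=
            Real.rpow_le_rpow_of_exponent_le hb1 (by rw [inv_le_one_iff₀] <;> right <;> linarith)
      _ = b := Real.rpow_one b
    have : (0:ℝ) ≤ (1 + M) ^ (α + 1)⁻¹ := by positivity
    nlinarith
  -- energy identity over one period
  have hu''_eq : ∀ t, u'' t = h t - A (u t) - g (u' t) := fun t => by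
    rw [← heqn t]; abel
  have hAu_deriv : ∀ t, HasDerivAt (fun z => A (u z)) (A (u' t)) t := fun t =>
    A.hasFDerivAt.comp_hasDerivAt t (hu t)
  have hE_deriv : ∀ t : ℝ, HasDerivAt (fun z => ⟪u' z, u' z⟫ + ⟪A (u z), u z⟫)
      (2 * (⟪h t, u' t⟫ - ⟪g (u' t), u' t⟫)) t := by
    intro t
    have h1 := HasDerivAt.inner ℝ (hu' t) (hu' t)
    have h2 := HasDerivAt.inner ℝ (hAu_deriv t) (hu t)
    have h3 := h1.add h2
    refine h3.congr_deriv ?_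
    have hsym : ⟪A (u' t), u t⟫ = ⟪A (u t), u' t⟫ := by
      rw [hA_sym, real_inner_comm]
    simp only [hu''_eq t, inner_sub_left, inner_sub_right, hsym]
    rw [real_inner_comm (u' t) (h t), real_inner_comm (u' t) (A (u t)),
      real_inner_comm (u' t) (g (u' t))]
    ring
  have he_cont : Continuous fun t => 2 * (⟪h t, u' t⟫ - ⟪g (u' t), u' t⟫) :=
    continuous_const.mul ((hh_cont.inner hu'_cont).sub ((hg_cont.comp hu'_cont).inner hu'_cont))
  have hkey : (∫ t in (0:ℝ)..(2 * τ), 2 * (⟪h t, u' t⟫ - ⟪g (u' t), u' t⟫)) = 0 := by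
    rw [intervalIntegral.integral_eq_sub_of_hasDerivAt (fun t _ => hE_deriv t)
      (he_cont.intervalIntegrable 0 (2 * τ))]
    have h1 := hu_per 0
    have h2 := hu'_per 0
    simp only [zero_add] at h1 h2
    simp [h1, h2]
  have hτ2 : (0:ℝ) ≤ 2 * τ := by linarith only [hτ]
  have hnorm_cont : Continuous fun t => ‖u' t‖ := hu'_cont.norm
  have hrpow_cont : Continuous fun t => ‖u' t‖ ^ (α + 2) :=
    hnorm_cont.rpow_const fun t => Or.inr (by linarith only [hα])
  have hgu_cont : Continuous fun t => ⟪g (u' t), u' t⟫ := (hg_cont.comp hu'_cont).inner hu'_cont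
  have hhu_cont : Continuous fun t => ⟪h t, u' t⟫ := hh_cont.inner hu'_cont
  obtain ⟨D, hD_def⟩ : ∃ x : ℝ, x = ∫ t in (0:ℝ)..(2 * τ), ‖u' t‖ ^ (α + 2) := ⟨_, rfl⟩
  obtain ⟨I, hI_def⟩ : ∃ x : ℝ, x = ∫ t in (0:ℝ)..(2 * τ), ‖u' t‖ := ⟨_, rfl⟩
  have hD0 : 0 ≤ D := by
    rw [hD_def]
    exact intervalIntegral.integral_nonneg hτ2 fun t _ => by positivity
  have hI0 : 0 ≤ I := by
    rw [hI_def]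
    exact intervalIntegral.integral_nonneg hτ2 fun t _ => norm_nonneg _
  have hIgh : (∫ t in (0:ℝ)..(2 * τ), ⟪g (u' t), u' t⟫) = ∫ t in (0:ℝ)..(2 * τ), ⟪h t, u' t⟫ := by
    rw [intervalIntegral.integral_const_mul] at hkey
    have hsub0 : (∫ t in (0:ℝ)..(2 * τ), (⟪h t, u' t⟫ - ⟪g (u' t), u' t⟫)) = 0 := by
      linarith only [hkey]
    rw [intervalIntegral.integral_sub (hhu_cont.intervalIntegrable 0 (2 * τ))
      (hgu_cont.intervalIntegrable 0 (2 * τ))] at hsub0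
    linarith only [hsub0]
  have hcoer_int : γ * D - 2 * τ * C₁ ≤ ∫ t in (0:ℝ)..(2 * τ), ⟪g (u' t), u' t⟫ := by
    rw [hD_def]
    have hmono := intervalIntegral.integral_mono_on (μ := MeasureTheory.volume)
      (f := fun t => γ * ‖u' t‖ ^ (α + 2) - C₁) hτ2
      (((continuous_const.mul hrpow_cont).sub continuous_const).intervalIntegrable 0 (2 * τ))
      (hgu_cont.intervalIntegrable 0 (2 * τ)) (fun t _ => hg_coer (u' t))
    rw [intervalIntegral.integral_sub (f := fun t => γ * ‖u' t‖ ^ (α + 2)) (g := fun _ => C₁) ((continuous_const.mul hrpow_cont).intervalIntegrable _ _)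
      intervalIntegrable_const, intervalIntegral.integral_const_mul,
      intervalIntegral.integral_const] at hmono
    simp only [smul_eq_mul, sub_zero] at hmono
    linarith only [hmono]
  have hhuM : (∫ t in (0:ℝ)..(2 * τ), ⟪h t, u' t⟫) ≤ M * I := by
    rw [hI_def]
    have hmono := intervalIntegral.integral_mono_on (μ := MeasureTheory.volume)
      (g := fun t => M * ‖u' t‖) hτ2
      (hhu_cont.intervalIntegrable 0 (2 * τ))
      ((continuous_const.mul hnorm_cont).intervalIntegrable 0 (2 * τ)) (fun t _ => by
        calc ⟪h t, u' t⟫ ≤ ‖h t‖ * ‖u' t‖ := real_inner_le_norm _ _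
        _ ≤ M * ‖u' t‖ := mul_le_mul_of_nonneg_right (hM_le t) (norm_nonneg _))
    rwa [intervalIntegral.integral_const_mul] at hmono
  have hI_le : I ≤ 2 * τ * lam + D / P := by
    rw [hI_def, hD_def]
    have hmono := intervalIntegral.integral_mono_on (μ := MeasureTheory.volume)
      (g := fun t => lam + ‖u' t‖ ^ (α + 2) / P) hτ2
      (hnorm_cont.intervalIntegrable 0 (2 * τ))
      ((continuous_const.add (hrpow_cont.div_const P)).intervalIntegrable 0 (2 * τ))
      (fun t _ => by
        have hpt := young_pt hα hlam0 (norm_nonneg (u' t))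
        rwa [hlam_pow] at hpt)
    rw [intervalIntegral.integral_add (f := fun _ => lam) (g := fun t => ‖u' t‖ ^ (α + 2) / P) intervalIntegrable_const
      ((hrpow_cont.div_const P).intervalIntegrable 0 (2 * τ)),
      intervalIntegral.integral_div, intervalIntegral.integral_const] at hmono
    simp only [smul_eq_mul, sub_zero] at hmono
    linarith only [hmono]
  have hXdef : γ * D ≤ 2 * τ * C₁ + M * I := by
    have hc := hcoer_int
    rw [hIgh] at hc
    linarith only [hc, hhuM]
  have hMD : M * (D / P) ≤ γ / 2 * D := by
    have hMP : M ≤ γ / 2 * P := by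
      rw [hP_def]
      nlinarith only [mul_nonneg (by linarith only [hgb] : (0:ℝ) ≤ γ * b - 2) hM0, hgb, hM0]
    have hrw : M * (D / P) = M * D / P := by ring
    rw [hrw, div_le_iff₀ hP0]
    calc M * D ≤ (γ / 2 * P) * D := mul_le_mul_of_nonneg_right hMP hD0
    _ = γ / 2 * D * P := by ring
  have hgam2D : γ / 2 * D ≤ 2 * τ * C₁ + 2 * τ * M * lam := by
    have h1 : M * I ≤ M * (2 * τ * lam + D / P) := mul_le_mul_of_nonneg_left hI_le hM0
    rw [mul_add] at h1
    have h2 : M * (2 * τ * lam) = 2 * τ * M * lam := by ring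
    linarith only [hXdef, hMD, h1, h2]
  have hDP : D / P ≤ 2 * τ * C₁ + 2 * τ * lam := by
    rw [div_le_iff₀ hP0]
    have e1 : γ * D ≤ 2 * (2 * τ * C₁ + 2 * τ * M * lam) := by linarith only [hgam2D]
    have e2 : 2 * (2 * τ * C₁ + 2 * τ * M * lam)
        ≤ 2 * ((2 * τ * C₁ + 2 * τ * lam) * (1 + M)) := by
      nlinarith only [mul_nonneg (mul_nonneg hτ.le hC₁) hM0, mul_nonneg hτ.le hlam0.le]
    have hXnn : (0:ℝ) ≤ (2 * τ * C₁ + 2 * τ * lam) * (1 + M) := by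
      nlinarith only [mul_nonneg hτ.le hC₁, mul_nonneg hτ.le hlam0.le, hM0,
        mul_nonneg (mul_nonneg hτ.le hC₁) hM0, mul_nonneg (mul_nonneg hτ.le hlam0.le) hM0]
    have e3 : 2 * ((2 * τ * C₁ + 2 * τ * lam) * (1 + M))
        ≤ γ * b * ((2 * τ * C₁ + 2 * τ * lam) * (1 + M)) := by
      nlinarith only [mul_nonneg (by linarith only [hgb] : (0:ℝ) ≤ γ * b - 2) hXnn]
    have e4 : γ * D ≤ γ * ((2 * τ * C₁ + 2 * τ * lam) * P) := by
      rw [hP_def]; nlinarith only [e1, e2, e3]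
    exact le_of_mul_le_mul_left e4 hγ
  have hI_fin : I ≤ 4 * τ * lam + 2 * τ * C₁ := by linarith only [hI_le, hDP]
  -- pointwise bound on u via anti-periodicity
  have hu_bd : ∀ t, ‖u t‖ ≤ c₆ * N := by
    intro t
    have hFTC : (∫ z in t..(t + τ), u' z) = u (t + τ) - u t :=
      intervalIntegral.integral_eq_sub_of_hasDerivAt (fun z _ => hu z)
        (hu'_cont.intervalIntegrable _ _)
    have hval : (∫ z in t..(t + τ), u' z) = -u t - u t := by rw [hFTC, hu_anti]
    have hnorm1 : (2:ℝ) * ‖u t‖ ≤ ∫ z in t..(t + τ), ‖u' z‖ := by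
      have hle := intervalIntegral.norm_integral_le_integral_norm
        (μ := MeasureTheory.volume) (f := u') (a := t) (b := t + τ) (by linarith only [hτ])
      rw [hval] at hle
      have h2 : ‖-u t - u t‖ = 2 * ‖u t‖ := by
        have : -u t - u t = -((2:ℝ) • u t) := by
          rw [two_smul]; abel
        rw [this, norm_neg, norm_smul]
        simp
      linarith only [h2 ▸ hle]
    have hsplit : (∫ z in t..(t + τ), ‖u' z‖) ≤ ∫ z in t..(t + 2 * τ), ‖u' z‖ := by
      have hadd := intervalIntegral.integral_add_adjacent_intervals (μ := MeasureTheory.volume)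
        (hnorm_cont.intervalIntegrable t (t + τ)) (hnorm_cont.intervalIntegrable (t + τ) (t + 2 * τ))
      have hpos : 0 ≤ ∫ z in (t + τ)..(t + 2 * τ), ‖u' z‖ :=
        intervalIntegral.integral_nonneg (by linarith only [hτ]) fun z _ => norm_nonneg _
      linarith only [hadd, hpos]
    have hperInt : (∫ z in t..(t + 2 * τ), ‖u' z‖) = I := by
      rw [hI_def]
      have hper : Function.Periodic (fun z => ‖u' z‖) (2 * τ) := fun z => by
        simp [hu'_per z]
      have := hper.intervalIntegral_add_eq t 0
      simpa using this
    have h1 : ‖u t‖ ≤ 2 * τ * lam + τ * C₁ := by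
      rw [hperInt] at hsplit
      linarith only [hnorm1, hsplit, hI_fin]
    have h2 : 2 * τ * lam + τ * C₁ ≤ c₆ * N := by
      rw [hc6_def]
      nlinarith only [mul_nonneg hτ.le (by linarith only [hlamN] : (0:ℝ) ≤ b * N - lam),
        mul_nonneg (mul_nonneg hτ.le hC₁) (by linarith only [hN1] : (0:ℝ) ≤ N - 1)]
    linarith only [h1, h2]
  -- maximum point of ‖u'‖²
  have hφ_cont : Continuous fun t : ℝ => (⟪u' t, u' t⟫ : ℝ) := hu'_cont.inner hu'_cont
  have hφ_per : Function.Periodic (fun t : ℝ => (⟪u' t, u' t⟫ : ℝ)) (2 * τ) := fun z => by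
    simp [hu'_per z]
  obtain ⟨t₀, ht₀m, ht₀max⟩ := isCompact_Icc.exists_isMaxOn (s := Icc (0:ℝ) (2 * τ))
    ⟨0, le_refl 0, by linarith only [hτ]⟩ hφ_cont.continuousOn
  have hglob : ∀ t, (⟪u' t, u' t⟫ : ℝ) ≤ ⟪u' t₀, u' t₀⟫ := by
    intro t
    obtain ⟨y, hy, hyeq⟩ := hφ_per.exists_mem_Ico₀ (by linarith only [hτ] : (0:ℝ) < 2 * τ) t
    exact (le_of_eq hyeq).trans (ht₀max (Ico_subset_Icc_self hy))
  have hloc : IsLocalMax (fun t : ℝ => (⟪u' t, u' t⟫ : ℝ)) t₀ := Filter.Eventually.of_forall hglob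
  have hφ_deriv : HasDerivAt (fun t : ℝ => (⟪u' t, u' t⟫ : ℝ))
      (⟪u' t₀, u'' t₀⟫ + ⟪u'' t₀, u' t₀⟫) t₀ :=
    HasDerivAt.inner ℝ (hu' t₀) (hu' t₀)
  have hzero : ⟪u'' t₀, u' t₀⟫ = 0 := by
    have hz := hloc.hasDerivAt_eq_zero hφ_deriv
    rw [real_inner_comm (u'' t₀) (u' t₀)] at hz
    linarith only [hz]
  obtain ⟨s₀, hs0_def⟩ : ∃ x : ℝ, x = ‖u' t₀‖ := ⟨_, rfl⟩
  have hs0 : 0 ≤ s₀ := hs0_def ▸ norm_nonneg _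
  have hs_all : ∀ t, ‖u' t‖ ≤ s₀ := by
    intro t
    have hgl := hglob t
    have h1 : ‖u' t‖ ^ 2 ≤ ‖u' t₀‖ ^ 2 := by
      rw [← real_inner_self_eq_norm_sq, ← real_inner_self_eq_norm_sq]
      exact hgl
    rw [hs0_def]
    exact (pow_le_pow_iff_left₀ (norm_nonneg _) (norm_nonneg _) two_ne_zero).1 h1
  have hNN : (0:ℝ) < N := by linarith only [hN1]
  have hginner : ⟪g (u' t₀), u' t₀⟫ ≤ M * s₀ + ‖A‖ * (c₆ * N) * s₀ := by
    have hgeq : g (u' t₀) = h t₀ - u'' t₀ - A (u t₀) := by rw [← heqn t₀]; abel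
    rw [hgeq, inner_sub_left, inner_sub_left, hzero]
    have e1 : ⟪h t₀, u' t₀⟫ ≤ M * s₀ := by
      calc ⟪h t₀, u' t₀⟫ ≤ ‖h t₀‖ * ‖u' t₀‖ := real_inner_le_norm _ _
      _ ≤ M * s₀ := by
        rw [hs0_def]
        exact mul_le_mul_of_nonneg_right (hM_le t₀) (norm_nonneg _)
    have e2 : -⟪A (u t₀), u' t₀⟫ ≤ ‖A‖ * (c₆ * N) * s₀ := by
      have h1 : -⟪A (u t₀), u' t₀⟫ ≤ ‖A (u t₀)‖ * ‖u' t₀‖ := by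
        have habs := abs_real_inner_le_norm (A (u t₀)) (u' t₀)
        linarith only [habs, neg_le_abs ⟪A (u t₀), u' t₀⟫]
      have h2 : ‖A (u t₀)‖ * ‖u' t₀‖ ≤ ‖A‖ * (c₆ * N) * s₀ := by
        rw [hs0_def]
        apply mul_le_mul _ le_rfl (norm_nonneg _)
          (mul_nonneg (norm_nonneg A) (mul_nonneg hc₆0.le hNN.le))
        calc ‖A (u t₀)‖ ≤ ‖A‖ * ‖u t₀‖ := A.le_opNorm _
        _ ≤ ‖A‖ * (c₆ * N) := mul_le_mul_of_nonneg_left (hu_bd t₀) (norm_nonneg A)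
      linarith only [h1, h2]
    linarith only [e1, e2]
  have hNpow1 : 1 ≤ N ^ (α + 1) := by rw [hN_pow]; linarith only [hM0]
  have hs_ineq : γ * s₀ ^ (α + 2) ≤ C₁ + c₇ * N ^ (α + 1) * s₀ := by
    have hc := hg_coer (u' t₀)
    rw [← hs0_def] at hc
    have hMN : M ≤ N ^ (α + 1) := by rw [hN_pow]; linarith only []
    have hNle : N ≤ N ^ (α + 1) := by
      calc N = N ^ (1:ℝ) := (Real.rpow_one N).symm
      _ ≤ N ^ (α + 1) := Real.rpow_le_rpow_of_exponent_le hN1 (by linarith only [hα])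
    have hMs : M * s₀ ≤ N ^ (α + 1) * s₀ := mul_le_mul_of_nonneg_right hMN hs0
    have hAs : ‖A‖ * (c₆ * N) * s₀ ≤ ‖A‖ * c₆ * N ^ (α + 1) * s₀ := by
      have : ‖A‖ * (c₆ * N) ≤ ‖A‖ * c₆ * N ^ (α + 1) := by
        nlinarith only [mul_nonneg (mul_nonneg (norm_nonneg A) hc₆0.le)
          (by linarith only [hNle] : (0:ℝ) ≤ N ^ (α + 1) - N)]
      exact mul_le_mul_of_nonneg_right this hs0
    rw [hc7_def]
    linarith only [hc, hginner, hMs, hAs]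
  have hs_le : s₀ ≤ c₈ * N := by
    rcases le_or_gt s₀ N with hc | hc
    · nlinarith only [hc, mul_nonneg (by linarith only [hc₈1] : (0:ℝ) ≤ c₈ - 1) hNN.le]
    · have hs1 : 1 ≤ s₀ := le_trans hN1 hc.le
      have hspos : 0 < s₀ := by linarith only [hs1]
      have hsplit : s₀ ^ (α + 2) = s₀ ^ (α + 1) * s₀ := by
        rw [show α + 2 = α + 1 + 1 by ring, Real.rpow_add_one hspos.ne']
      have h1 : γ * s₀ ^ (α + 1) * s₀ ≤ (C₁ + c₇) * N ^ (α + 1) * s₀ := by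
        have hNs1 : (1:ℝ) ≤ N ^ (α + 1) * s₀ := by
          nlinarith only [hNpow1, hs1,
            mul_nonneg (by linarith only [hNpow1] : (0:ℝ) ≤ N ^ (α + 1) - 1)
              (by linarith only [hs1] : (0:ℝ) ≤ s₀ - 1)]
        have hC1s : C₁ ≤ C₁ * N ^ (α + 1) * s₀ := by
          nlinarith only [mul_nonneg hC₁ (by linarith only [hNs1] : (0:ℝ) ≤ N ^ (α + 1) * s₀ - 1)]
        have hs2 : γ * (s₀ ^ (α + 1) * s₀) ≤ C₁ + c₇ * N ^ (α + 1) * s₀ := by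
          rw [← hsplit]; exact hs_ineq
        linarith only [hs2, hC1s]
      have hstep : γ * s₀ ^ (α + 1) ≤ (C₁ + c₇) * N ^ (α + 1) :=
        le_of_mul_le_mul_right h1 hspos
      have hgc8 : C₁ + c₇ ≤ γ * c₈ := by
        have hle := le_max_right (1:ℝ) ((C₁ + c₇) / γ)
        have : C₁ + c₇ = γ * ((C₁ + c₇) / γ) := by field_simp
        rw [this, hc8_def]
        exact mul_le_mul_of_nonneg_left hle hγ.le
      have h3 : s₀ ^ (α + 1) ≤ c₈ * N ^ (α + 1) := by
        have hgg : γ * s₀ ^ (α + 1) ≤ γ * (c₈ * N ^ (α + 1)) := by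
          nlinarith only [hstep, mul_nonneg (by linarith only [hgc8] : (0:ℝ) ≤ γ * c₈ - (C₁ + c₇))
            (by linarith only [hNpow1] : (0:ℝ) ≤ N ^ (α + 1))]
        exact le_of_mul_le_mul_left hgg hγ
      have h4 : c₈ ≤ c₈ ^ (α + 1) := by
        calc c₈ = c₈ ^ (1:ℝ) := (Real.rpow_one _).symm
        _ ≤ c₈ ^ (α + 1) := Real.rpow_le_rpow_of_exponent_le hc₈1 (by linarith only [hα])
      have hfin : s₀ ^ (α + 1) ≤ (c₈ * N) ^ (α + 1) := by
        rw [Real.mul_rpow (by linarith only [hc₈1] : (0:ℝ) ≤ c₈) hNN.le]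
        nlinarith only [h3, mul_nonneg (by linarith only [h4] : (0:ℝ) ≤ c₈ ^ (α + 1) - c₈)
          (Real.rpow_nonneg hNN.le (α + 1))]
      exact (Real.rpow_le_rpow_iff hs0
        (mul_nonneg (by linarith only [hc₈1]) hNN.le) hα1).1 hfin
  -- conclusion
  intro t
  rw [← hM_def]
  have hfin1 : ‖u' t‖ ^ 2 + ‖u t‖ ^ 2 ≤ (c₈ ^ 2 + c₆ ^ 2) * N ^ 2 := by
    have e1 : ‖u' t‖ ^ 2 ≤ (c₈ * N) ^ 2 := by
      have h := hs_all t
      have hs8 : s₀ ≤ c₈ * N := hs_le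
      nlinarith only [h, hs8, norm_nonneg (u' t), hs0]
    have e2 : ‖u t‖ ^ 2 ≤ (c₆ * N) ^ 2 := by
      have h := hu_bd t
      nlinarith only [h, norm_nonneg (u t), mul_nonneg hc₆0.le hNN.le]
    nlinarith only [e1, e2]
  have hN2 : (N:ℝ) ^ (2:ℕ) = (1 + M) ^ (2 / (α + 1)) := by
    rw [← Real.rpow_natCast N 2, hN_def, ← Real.rpow_mul h1M0.le]
    norm_num
    rw [show (α + 1)⁻¹ * 2 = 2 / (α + 1) by rw [div_eq_mul_inv]; ring]
  have hβ0 : (0:ℝ) < 2 / (α + 1) := by positivity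
  have hβ2 : 2 / (α + 1) ≤ 2 := by
    rw [div_le_iff₀ hα1]; nlinarith only [hα]
  have hMβ : 0 ≤ M ^ (2 / (α + 1)) := Real.rpow_nonneg hM0 _
  have hpow4 : (1 + M) ^ (2 / (α + 1)) ≤ 4 * (1 + M ^ (2 / (α + 1))) := by
    have h1 : 1 + M ≤ 2 * max 1 M := by
      rcases le_total M 1 with hm | hm
      · have hx := le_max_left (1:ℝ) M; linarith only [hx, hm]
      · have hx := le_max_right (1:ℝ) M; linarith only [hx, hm]
    have hmax0 : (0:ℝ) ≤ max 1 M := by positivity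
    have h2 : (1 + M) ^ (2 / (α + 1)) ≤ (2 * max 1 M) ^ (2 / (α + 1)) :=
      Real.rpow_le_rpow h1M0.le h1 hβ0.le
    have h3 : (2 * max 1 M) ^ (2 / (α + 1)) = 2 ^ (2 / (α + 1)) * (max 1 M) ^ (2 / (α + 1)) :=
      Real.mul_rpow (by norm_num) hmax0
    have h4 : (2:ℝ) ^ (2 / (α + 1)) ≤ 4 := by
      calc (2:ℝ) ^ (2 / (α + 1)) ≤ 2 ^ (2:ℝ) :=
        Real.rpow_le_rpow_of_exponent_le one_le_two hβ2
      _ = 4 := by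
        have : (2:ℝ) ^ ((2:ℕ):ℝ) = (2:ℝ) ^ (2:ℕ) := Real.rpow_natCast 2 2
        norm_num at this
        linarith only [this]
    have h5 : (max 1 M) ^ (2 / (α + 1)) ≤ 1 + M ^ (2 / (α + 1)) := by
      rcases le_total M 1 with hm | hm
      · rw [max_eq_left hm, Real.one_rpow]
        linarith only [hMβ]
      · rw [max_eq_right hm]
        linarith only []
    have h6 : (0:ℝ) ≤ (max 1 M) ^ (2 / (α + 1)) := Real.rpow_nonneg hmax0 _
    have h7 : (0:ℝ) ≤ (2:ℝ) ^ (2 / (α + 1)) := Real.rpow_nonneg (by norm_num) _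
    nlinarith only [h2, h3, h4, h5, h6, h7,
      mul_nonneg h7 (by linarith only [h5, h6] : (0:ℝ) ≤ 1 + M ^ (2 / (α + 1)) - (max 1 M) ^ (2 / (α + 1))),
      mul_nonneg (by linarith only [h4, h7] : (0:ℝ) ≤ 4 - 2 ^ (2 / (α + 1))) (by linarith only [h6, h5] : (0:ℝ) ≤ 1 + M ^ (2 / (α + 1)))]
  calc ‖u' t‖ ^ 2 + ‖u t‖ ^ 2 ≤ (c₈ ^ 2 + c₆ ^ 2) * N ^ 2 := hfin1
  _ = (c₈ ^ 2 + c₆ ^ 2) * (1 + M) ^ (2 / (α + 1)) := by rw [hN2]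
  _ ≤ (c₈ ^ 2 + c₆ ^ 2) * (4 * (1 + M ^ (2 / (α + 1)))) := by
      have hcc : (0:ℝ) ≤ c₈ ^ 2 + c₆ ^ 2 := by positivity
      nlinarith only [mul_le_mul_of_nonneg_left hpow4 hcc]
  _ ≤ (4 * (c₈ ^ 2 + c₆ ^ 2) + 1) * (1 + M ^ (2 / (α + 1))) := by
      nlinarith only [hMβ]
end

section
/- Let α ≥ 0 and assume (P1): there exist γ > 0, C₁ ≥ 0 such that ⟨g(v), v⟩ ≥ γ ‖e v‖_Z^{α+2} − C₁ for all v ∈ V; and the strengthened growth condition (P2′): there exist K > 0, C₂ ≥ 0 and a map G : V → Z′ (Z′ the dual of Z) with ⟨g(v), w⟩ = ⟨G(v), e w⟩_{Z′,Z} for all v, w ∈ V and ‖G(v)‖_{Z′} ≤ C₂ + K ‖e v‖_Z^{α+1} for all v ∈ V. Let τ > 0 and let h : ℝ → H be continuous and τ-anti-periodic. Then there exists a constant C > 0, independent of h, such that every τ-anti-periodic map u : ℝ → V that is C¹ with values in V, with t ↦ j(u̇(t)) C¹ with values in H (derivative ü(t)), and satisfies ι(ü(t)) + A u(t) + g(u̇(t))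 = ι(h(t)) in V′ for all t ∈ ℝ, obeys sup_{t∈ℝ} (|j u̇(t)|_H² + ‖u(t)‖_V²) ≤ C (1 + ‖h‖_{L²([0,τ],H)}^{(α+2)/(α+1)}). -/
open scoped RealInnerProductSpace
open Set intervalIntegral

lemma aux_rpow_le_one_add {x r p : ℝ} (hx : 0 ≤ x) (hr : 0 ≤ r) (hrp : r ≤ p) :
    x ^ r ≤ 1 + x ^ p := by
  rcases le_total x 1 with hx1 | hx1
  · linarith [Real.rpow_le_one hx hx1 hr, Real.rpow_nonneg hx p]
  · linarith [Real.rpow_le_rpow_of_exponent_le hx1 hrp]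

lemma aux_one_add_rpow {μ p : ℝ} (hμ : 0 ≤ μ) (hp : 0 ≤ p) :
    (1 + μ) ^ p ≤ 2 ^ p * (1 + μ ^ p) := by
  have h1 : (1:ℝ) + μ ≤ 2 * max 1 μ := by
    rcases le_total μ 1 with h | h
    · rw [max_eq_left h]; linarith
    · rw [max_eq_right h]; linarith
  have h2 : ((1:ℝ) + μ) ^ p ≤ (2 * max 1 μ) ^ p :=
    Real.rpow_le_rpow (by linarith) h1 hp
  have h3 : ((2:ℝ) * max 1 μ) ^ p = 2 ^ p * (max 1 μ) ^ p :=
    Real.mul_rpow (by norm_num) (le_trans zero_le_one (le_max_left 1 μ))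
  have h4 : (max 1 μ) ^ p ≤ 1 + μ ^ p := by
    rcases le_total μ 1 with h | h
    · rw [max_eq_left h, Real.one_rpow]; linarith [Real.rpow_nonneg hμ p]
    · rw [max_eq_right h]; linarith
  have h5 : (0:ℝ) ≤ 2 ^ p := Real.rpow_nonneg (by norm_num) p
  calc (1 + μ) ^ p ≤ 2 ^ p * (max 1 μ) ^ p := by rw [← h3]; exact h2
    _ ≤ 2 ^ p * (1 + μ ^ p) := by nlinarith

lemma aux_rpow_add_le {x y s : ℝ} (hx : 0 ≤ x) (hy : 0 ≤ y) (hs : 0 < s) (hs1 : s ≤ 1) :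
    (x + y) ^ s ≤ x ^ s + y ^ s := by
  rcases eq_or_lt_of_le (by positivity : (0:ℝ) ≤ x + y) with h0 | h0
  · have hx0 : x = 0 := by linarith
    have hy0 : y = 0 := by linarith
    simp [← h0, hx0, hy0, Real.zero_rpow hs.ne']
  · set z := x + y with hz
    have key : ∀ w : ℝ, 0 ≤ w → w ≤ z → w / z ≤ (w / z) ^ s := by
      intro w hw hwz
      rcases eq_or_lt_of_le hw with h | h
      · simp [← h, Real.zero_rpow hs.ne']
      · have h1 : 0 < w / z := div_pos h h0
        have h2 : w / z ≤ 1 := (div_le_one h0).2 hwz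
        calc w / z = (w / z) ^ (1:ℝ) := (Real.rpow_one _).symm
          _ ≤ (w / z) ^ s := Real.rpow_le_rpow_of_exponent_ge h1 h2 hs1
    have kx := key x hx (by linarith)
    have ky := key y hy (by linarith)
    have hdx : (x / z) ^ s = x ^ s / z ^ s := Real.div_rpow hx h0.le s
    have hdy : (y / z) ^ s = y ^ s / z ^ s := Real.div_rpow hy h0.le s
    have hsum : x / z + y / z = 1 := by field_simp; exact hz.symm
    have hzs : 0 < z ^ s := Real.rpow_pos_of_pos h0 s
    rw [hdx] at kx; rw [hdy] at ky
    have hone : 1 ≤ x ^ s / z ^ s + y ^ s / z ^ s := by linarith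
    calc z ^ s = z ^ s * 1 := (mul_one _).symm
      _ ≤ z ^ s * (x ^ s / z ^ s + y ^ s / z ^ s) :=
        mul_le_mul_of_nonneg_left hone hzs.le
      _ = x ^ s + y ^ s := by field_simp

lemma aux_eq_zero_of_integral_zero {ψ : ℝ → ℝ} {τ : ℝ} (hτ : 0 < τ)
    (hc : Continuous ψ) (hnn : ∀ x, 0 ≤ ψ x)
    (hz : ∫ x in (0:ℝ)..τ, ψ x = 0) : ∀ x ∈ Icc (0:ℝ) τ, ψ x = 0 := by
  have hIoo : ∀ x ∈ Ioo (0:ℝ) τ, ψ x = 0 := by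
    intro x hx
    by_contra hne
    have hpos : 0 < ψ x := lt_of_le_of_ne (hnn x) (Ne.symm hne)
    have hopen : IsOpen (Function.support ψ ∩ Ioo 0 τ) := by
      have : IsOpen (Function.support ψ) := by
        have : Function.support ψ = ψ ⁻¹' ({0}ᶜ) := by
          ext y; simp [Function.mem_support]
        rw [this]
        exact (isOpen_compl_singleton).preimage hc
      exact this.inter isOpen_Ioo
    have hne' : (Function.support ψ ∩ Ioo 0 τ).Nonempty := ⟨x, hpos.ne', hx⟩
    have hmeas : 0 < MeasureTheory.volume (Function.support ψ ∩ Ioo 0 τ) :=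
      hopen.measure_pos _ hne'
    have hint : IntervalIntegrable ψ MeasureTheory.volume 0 τ :=
      hc.intervalIntegrable 0 τ
    have : 0 < ∫ x in (0:ℝ)..τ, ψ x := by
      rw [intervalIntegral.integral_pos_iff_support_of_nonneg_ae
        (Filter.Eventually.of_forall hnn) hint]
      refine ⟨hτ, lt_of_lt_of_le hmeas (MeasureTheory.measure_mono ?_)⟩
      exact inter_subset_inter_right _ Ioo_subset_Ioc_self
    linarith [this, hz.le]
  have heqon : EqOn ψ 0 (Ioo (0:ℝ) τ) := fun x hx => hIoo x hx
  have hcl : EqOn ψ 0 (closure (Ioo (0:ℝ) τ)) := heqon.closure hc continuous_const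
  intro x hx
  have hx' : x ∈ closure (Ioo (0:ℝ) τ) := by rw [closure_Ioo hτ.ne]; exact hx
  simpa using hcl hx'


lemma aux_CS_core {I A B : ℝ} (hA : 0 ≤ A) (hB : 0 ≤ B)
    (key : ∀ l : ℝ, 0 < l → I ≤ l / 2 * A ^ 2 + 1 / (2 * l) * B ^ 2) : I ≤ A * B := by
  have keyeps : ∀ ε : ℝ, 0 < ε → I ≤ A * B + ε * (A + B) / 2 := by
    intro ε hε
    have hl : 0 < (B + ε) / (A + ε) := by positivity
    have hthis := key _ hl
    have e1 : (B + ε) / (A + ε) / 2 * A ^ 2 ≤ (B + ε) * A / 2 := by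
      have heq1 : (B + ε) / (A + ε) / 2 * A ^ 2 = (B + ε) / 2 * (A ^ 2 / (A + ε)) := by
        ring
      have hle1 : A ^ 2 / (A + ε) ≤ A := by
        rw [div_le_iff₀ (by positivity)]
        nlinarith
      rw [heq1]
      calc (B + ε) / 2 * (A ^ 2 / (A + ε)) ≤ (B + ε) / 2 * A :=
            mul_le_mul_of_nonneg_left hle1 (by positivity)
        _ = (B + ε) * A / 2 := by ring
    have e2 : 1 / (2 * ((B + ε) / (A + ε))) * B ^ 2 ≤ (A + ε) * B / 2 := by
      have heq2 : 1 / (2 * ((B + ε) / (A + ε))) * B ^ 2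
          = (A + ε) / 2 * (B ^ 2 / (B + ε)) := by
        field_simp
      have hle2 : B ^ 2 / (B + ε) ≤ B := by
        rw [div_le_iff₀ (by positivity)]
        nlinarith
      rw [heq2]
      calc (A + ε) / 2 * (B ^ 2 / (B + ε)) ≤ (A + ε) / 2 * B :=
            mul_le_mul_of_nonneg_left hle2 (by positivity)
        _ = (A + ε) * B / 2 := by ring
    have heq3 : (B + ε) * A / 2 + (A + ε) * B / 2 = A * B + ε * (A + B) / 2 := by ring
    linarith
  by_contra hcon
  push_neg at hcon
  have hδpos : 0 < I - A * B := sub_pos.2 hcon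
  have hkey := keyeps ((I - A * B) / (A + B + 1)) (by positivity)
  have hfrac : (I - A * B) / (A + B + 1) * (A + B) / 2 < I - A * B := by
    rw [div_mul_eq_mul_div, div_div, div_lt_iff₀ (by positivity)]
    nlinarith
  linarith

lemma aux_CS {a b : ℝ → ℝ} {τ : ℝ} (hτ : 0 < τ)
    (ha : Continuous a) (hb : Continuous b) (hann : ∀ x, 0 ≤ a x) (hbnn : ∀ x, 0 ≤ b x) :
    ∫ x in (0:ℝ)..τ, a x * b x ≤
      Real.sqrt (∫ x in (0:ℝ)..τ, (a x) ^ 2) * Real.sqrt (∫ x in (0:ℝ)..τ, (b x) ^ 2) := by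
  obtain ⟨A2, hA2⟩ : ∃ A2, (∫ x in (0:ℝ)..τ, (a x) ^ 2) = A2 := ⟨_, rfl⟩
  obtain ⟨B2, hB2⟩ : ∃ B2, (∫ x in (0:ℝ)..τ, (b x) ^ 2) = B2 := ⟨_, rfl⟩
  obtain ⟨I, hI⟩ : ∃ I, (∫ x in (0:ℝ)..τ, a x * b x) = I := ⟨_, rfl⟩
  rw [hA2, hB2, hI]
  have hA2nn : 0 ≤ A2 := by
    rw [← hA2]; exact intervalIntegral.integral_nonneg hτ.le (fun x _ => sq_nonneg _)
  have hB2nn : 0 ≤ B2 := by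
    rw [← hB2]; exact intervalIntegral.integral_nonneg hτ.le (fun x _ => sq_nonneg _)
  have hAsq : Real.sqrt A2 ^ 2 = A2 := Real.sq_sqrt hA2nn
  have hBsq : Real.sqrt B2 ^ 2 = B2 := Real.sq_sqrt hB2nn
  apply aux_CS_core (Real.sqrt_nonneg A2) (Real.sqrt_nonneg B2)
  intro l hl
  rw [hAsq, hBsq]
  have hpt : ∀ x ∈ Set.Icc (0:ℝ) τ, a x * b x ≤ l / 2 * (a x) ^ 2 + 1 / (2 * l) * (b x) ^ 2 := by
    intro x _
    have h1 : 0 ≤ (l * a x - b x) ^ 2 := sq_nonneg _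
    have h2 : a x * b x * l ≤ l ^ 2 / 2 * (a x) ^ 2 + 1 / 2 * (b x) ^ 2 := by nlinarith
    have h3 : a x * b x ≤ (l ^ 2 / 2 * (a x) ^ 2 + 1 / 2 * (b x) ^ 2) / l :=
      (le_div_iff₀ hl).2 h2
    have h4 : (l ^ 2 / 2 * (a x) ^ 2 + 1 / 2 * (b x) ^ 2) / l
        = l / 2 * (a x) ^ 2 + 1 / (2 * l) * (b x) ^ 2 := by
      field_simp
    linarith [h4 ▸ h3]
  have hint1 : IntervalIntegrable (fun x => a x * b x) MeasureTheory.volume 0 τ :=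
    (ha.mul hb).intervalIntegrable 0 τ
  have hca : Continuous fun x => l / 2 * (a x) ^ 2 := by continuity
  have hcb : Continuous fun x => 1 / (2 * l) * (b x) ^ 2 := by continuity
  have hint2 : IntervalIntegrable
      (fun x => l / 2 * (a x) ^ 2 + 1 / (2 * l) * (b x) ^ 2) MeasureTheory.volume 0 τ :=
    (hca.add hcb).intervalIntegrable 0 τ
  have hle := intervalIntegral.integral_mono_on hτ.le hint1 hint2 hpt
  rw [intervalIntegral.integral_add (hca.intervalIntegrable 0 τ) (hcb.intervalIntegrable 0 τ),
    intervalIntegral.integral_const_mul, intervalIntegral.integral_const_mul, hA2, hB2, hI]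
    at hle
  exact hle

lemma aux_Lr_le {ψ : ℝ → ℝ} {τ r p N : ℝ} (hτ : 0 < τ)
    (hc : Continuous ψ) (hnn : ∀ x, 0 ≤ ψ x) (hr : 0 < r) (hrp : r ≤ p)
    (hN : N = (∫ x in (0:ℝ)..τ, ψ x ^ p) ^ (1 / p)) :
    ∫ x in (0:ℝ)..τ, ψ x ^ r ≤ (1 + τ) * N ^ r := by
  have hp : 0 < p := lt_of_lt_of_le hr hrp
  obtain ⟨X, hX⟩ : ∃ X, (∫ x in (0:ℝ)..τ, ψ x ^ p) = X := ⟨_, rfl⟩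
  rw [hX] at hN
  have hcp : Continuous fun x => ψ x ^ p := hc.rpow_const fun x => Or.inr hp.le
  have hcr : Continuous fun x => ψ x ^ r := hc.rpow_const fun x => Or.inr hr.le
  have hXnn : 0 ≤ X := by
    rw [← hX]
    exact intervalIntegral.integral_nonneg hτ.le (fun x _ => Real.rpow_nonneg (hnn x) p)
  have hNnn : 0 ≤ N := hN ▸ Real.rpow_nonneg hXnn _
  have hNX : N ^ p = X := by
    rw [hN, ← Real.rpow_mul hXnn, one_div, inv_mul_cancel₀ hp.ne', Real.rpow_one]
  rcases eq_or_lt_of_le hNnn with hN0 | hN0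
  · have hX0 : X = 0 := by rw [← hNX, ← hN0, Real.zero_rpow hp.ne']
    have hz := aux_eq_zero_of_integral_zero hτ hcp
      (fun x => Real.rpow_nonneg (hnn x) p) (hX0 ▸ hX)
    have hzr : ∀ x ∈ Icc (0:ℝ) τ, ψ x ^ r = 0 := by
      intro x hx
      have hψ0 : ψ x = 0 :=
        ((Real.rpow_eq_zero_iff_of_nonneg (hnn x)).1 (hz x hx)).1
      rw [hψ0, Real.zero_rpow hr.ne']
    have hint0 : ∫ x in (0:ℝ)..τ, ψ x ^ r = 0 := by
      rw [intervalIntegral.integral_congr (g := fun _ => (0:ℝ))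
        (fun x hx => hzr x (by rwa [uIcc_of_le hτ.le] at hx))]
      simp
    rw [hint0, ← hN0, Real.zero_rpow hr.ne']
    positivity
  · have hpt : ∀ x ∈ Icc (0:ℝ) τ, ψ x ^ r ≤ N ^ r + N ^ (r - p) * ψ x ^ p := by
      intro x _
      have h1 : (ψ x / N) ^ r ≤ 1 + (ψ x / N) ^ p :=
        aux_rpow_le_one_add (div_nonneg (hnn x) hNnn) hr.le hrp
      rw [Real.div_rpow (hnn x) hNnn, Real.div_rpow (hnn x) hNnn] at h1
      have hNr : 0 < N ^ r := Real.rpow_pos_of_pos hN0 r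
      have hNp : 0 < N ^ p := Real.rpow_pos_of_pos hN0 p
      have h2 := mul_le_mul_of_nonneg_left h1 hNr.le
      have h3 : N ^ r * (ψ x ^ r / N ^ r) = ψ x ^ r := by field_simp
      have h4 : N ^ r * (1 + ψ x ^ p / N ^ p) = N ^ r + N ^ r / N ^ p * ψ x ^ p := by
        field_simp
      have h5 : N ^ r / N ^ p = N ^ (r - p) := (Real.rpow_sub hN0 r p).symm
      rw [h3, h4, h5] at h2
      exact h2
    have hint1 : IntervalIntegrable (fun x => ψ x ^ r) MeasureTheory.volume 0 τ :=
      hcr.intervalIntegrable 0 τ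
    have hint2 : IntervalIntegrable (fun x => N ^ r + N ^ (r - p) * ψ x ^ p)
        MeasureTheory.volume 0 τ :=
      (continuous_const.add (continuous_const.mul hcp)).intervalIntegrable 0 τ
    have hle := intervalIntegral.integral_mono_on hτ.le hint1 hint2 hpt
    rw [intervalIntegral.integral_add (f := fun _ => N ^ r) (g := fun x => N ^ (r - p) * ψ x ^ p) (continuous_const.intervalIntegrable 0 τ)
        ((continuous_const.mul hcp).intervalIntegrable 0 τ),
      intervalIntegral.integral_const, intervalIntegral.integral_const_mul, hX] at hle
    have hNrp : N ^ (r - p) * X = N ^ r := by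
      rw [← hNX, ← Real.rpow_add hN0]
      ring_nf
    rw [hNrp] at hle
    have : (τ - 0) • N ^ r + N ^ r = (1 + τ) * N ^ r := by
      rw [smul_eq_mul]; ring
    linarith [this ▸ hle]
set_option maxHeartbeats 4000000 in
/-- Anti-periodic case, infinite-dimensional setting. Under
(P1) and the strengthened growth condition (P2′) (the damping extends to a
map `G : V → Z'`), there exists `C > 0` independent of `h` such that every
`τ`-anti-periodic strong solution satisfies
`sup_t (|j u̇(t)|² + ‖u(t)‖²) ≤ C (1 + ‖h‖_{L²([0,τ],H)}^{(α+2)/(α+1)})`. -/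
theorem stmt_14
    {V H Z : Type*}
    [NormedAddCommGroup V] [InnerProductSpace ℝ V] [CompleteSpace V]
    [NormedAddCommGroup H] [InnerProductSpace ℝ H] [CompleteSpace H]
    [NormedAddCommGroup Z] [NormedSpace ℝ Z] [CompleteSpace Z]
    (j : V →L[ℝ] H) (hj_inj : Function.Injective j) (hj_dense : DenseRange j)
    (e : V →L[ℝ] Z) (he_inj : Function.Injective e)
    (f : Z →L[ℝ] H) (hf_inj : Function.Injective f)
    (hfe : ∀ v : V, f (e v) = j v)
    (ι : H → (V →L[ℝ] ℝ)) (hι : ∀ (w : H) (v : V), ι w v = ⟪w, j v⟫)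
    (A : V → (V →L[ℝ] ℝ)) (hA : ∀ u v : V, A u v = ⟪u, v⟫)
    (g : V → (V →L[ℝ] ℝ)) (hg_cont : Continuous g)
    (hg_mono : ∀ v w : V, (g v - g w) (v - w) ≥ 0)
    (α : ℝ) (hα : 0 ≤ α)
    (γ C₁ : ℝ) (hγ : 0 < γ) (hC₁ : 0 ≤ C₁)
    (hP1 : ∀ v : V, g v v ≥ γ * ‖e v‖ ^ (α + 2) - C₁)
    (K C₂ : ℝ) (hK : 0 < K) (hC₂ : 0 ≤ C₂)
    (G : V → (Z →L[ℝ] ℝ))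
    (hG_ext : ∀ v w : V, g v w = G v (e w))
    (hG_grow : ∀ v : V, ‖G v‖ ≤ C₂ + K * ‖e v‖ ^ (α + 1))
    (τ : ℝ) (hτ : 0 < τ) :
    ∃ C : ℝ, 0 < C ∧
      ∀ h : ℝ → H, Continuous h → (∀ t : ℝ, h (t + τ) = -h t) →
        ∀ (u u' : ℝ → V) (u'' : ℝ → H),
          (∀ t : ℝ, HasDerivAt u (u' t) t) →
          Continuous u' →
          (∀ t : ℝ, HasDerivAt (fun s => j (u' s)) (u'' t) t) →
          Continuous u'' →
          (∀ t : ℝ, u (t + τ) = -u t) →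
          (∀ t : ℝ, ι (u'' t) + A (u t) + g (u' t) = ι (h t)) →
          ∀ t : ℝ, ‖j (u' t)‖ ^ 2 + ‖u t‖ ^ 2 ≤
            C * (1 + Real.sqrt (∫ s in (0 : ℝ)..τ, ‖h s‖ ^ 2) ^
              ((α + 2) / (α + 1))) := by
  have hα1 : (0:ℝ) < α + 1 := by linarith
  set F := ‖f‖ + 1 with hFdef
  have hF1 : (1:ℝ) ≤ F := le_add_of_nonneg_left (norm_nonneg f)
  have hF0 : (0:ℝ) < F := lt_of_lt_of_le one_pos hF1
  set T := 1 + τ with hTdef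
  have hT1 : (1:ℝ) ≤ T := by rw [hTdef]; linarith
  have hT0 : (0:ℝ) < T := lt_of_lt_of_le one_pos hT1
  set sT := Real.sqrt T with hsTdef
  have hsT0 : 0 < sT := Real.sqrt_pos.2 hT0
  set st := Real.sqrt τ with hstdef
  have hst0 : 0 < st := Real.sqrt_pos.2 hτ
  set s := 1 / (α + 1) with hsdef
  have hs0 : 0 < s := by rw [hsdef]; positivity
  have hs1 : s ≤ 1 := by rw [hsdef, div_le_one hα1]; linarith
  set p := α + 2 with hpdef
  have hp2 : (2:ℝ) ≤ p := by rw [hpdef]; linarith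
  have hp0 : (0:ℝ) < p := by linarith
  set c8 := 1 + (C₁ * τ / γ) ^ s + (F * sT / γ) ^ s with hc8def
  have hc81 : (1:ℝ) ≤ c8 := by
    rw [hc8def]
    have h1 : (0:ℝ) ≤ (C₁ * τ / γ) ^ s := Real.rpow_nonneg (by positivity) s
    have h2 : (0:ℝ) ≤ (F * sT / γ) ^ s := Real.rpow_nonneg (by positivity) s
    linarith
  have hc80 : (0:ℝ) < c8 := lt_of_lt_of_le one_pos hc81
  set B1 := F ^ 2 * T * c8 ^ (2:ℝ) with hB1def
  have hB1pos : 0 < B1 := by rw [hB1def]; positivity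
  set RB := T * c8 / 2 with hRBdef
  have hRBpos : 0 < RB := by rw [hRBdef]; positivity
  set B2 := RB * (F * st + C₂ * τ + K * T * c8 ^ (α + 1)) with hB2def
  have hB2pos : 0 < B2 := by rw [hB2def]; positivity
  set B3 := 2 * F * sT * c8 + 2 * C₂ * T * c8 + 2 * K * c8 ^ p with hB3def
  have hB3pos : 0 < B3 := by rw [hB3def]; positivity
  set B4 := (2 * B1 + B2) / τ + B3 with hB4def
  have hB4pos : 0 < B4 := by rw [hB4def]; positivity
  clear_value F T sT st s p c8 B1 RB B2 B3 B4
  refine ⟨B4 * 2 ^ p, by positivity, ?_⟩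
  intro h hhcont hhanti u u' u'' hu hu'c hju hu''c huanti heq t0
  -- basic continuity
  have hucont : Continuous u := by
    rw [continuous_iff_continuousAt]; exact fun t => (hu t).continuousAt
  have hjucont : Continuous fun t => j (u' t) := j.continuous.comp hu'c
  have hjuucont : Continuous fun t => j (u t) := j.continuous.comp hucont
  have hψcont : Continuous fun t => ‖e (u' t)‖ := (e.continuous.comp hu'c).norm
  have hψnn : ∀ x : ℝ, (0:ℝ) ≤ ‖e (u' x)‖ := fun x => norm_nonneg _
  -- anti-periodicity of u'
  have hu'anti : ∀ t : ℝ, u' (t + τ) = -u' t := by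
    intro t
    have h3 : HasDerivAt (fun x => u (x + τ)) (u' (t + τ)) t :=
      HasDerivAt.comp_add_const t τ (hu (t + τ))
    have h4 : HasDerivAt (fun x => u (x + τ)) (-u' t) t := by
      have heqfun : (fun x => u (x + τ)) = fun x => -u x := funext fun x => huanti x
      rw [heqfun]; exact (hu t).neg
    exact h3.unique h4
  have hψper : Function.Periodic (fun t => ‖e (u' t)‖) τ := by
    intro x; simp [hu'anti x]
  -- pointwise evaluation of the equation
  have heval : ∀ (t : ℝ) (v : V), ⟪u'' t, j v⟫ + ⟪u t, v⟫ + g (u' t) v = ⟪h t, j v⟫ := by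
    intro t v
    have h1 := congrArg (fun L : V →L[ℝ] ℝ => L v) (heq t)
    simpa [ContinuousLinearMap.add_apply, hι, hA] using h1
  -- energy and its derivative
  obtain ⟨φ, hφdef⟩ : ∃ φ : ℝ → ℝ, φ = fun t => ‖j (u' t)‖ ^ 2 + ‖u t‖ ^ 2 := ⟨_, rfl⟩
  obtain ⟨D, hDdef⟩ : ∃ D : ℝ → ℝ, D = fun t => 2 * ⟪h t, j (u' t)⟫ - 2 * g (u' t) (u' t) :=
    ⟨_, rfl⟩
  have hφapp : ∀ t, φ t = ‖j (u' t)‖ ^ 2 + ‖u t‖ ^ 2 := fun t => by rw [hφdef]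
  have hDapp : ∀ t, D t = 2 * ⟪h t, j (u' t)⟫ - 2 * g (u' t) (u' t) := fun t => by rw [hDdef]
  have hφcont : Continuous φ := by
    rw [hφdef]; exact (hjucont.norm.pow 2).add (hucont.norm.pow 2)
  have hgu'cont : Continuous fun t => g (u' t) (u' t) := (hg_cont.comp hu'c).clm_apply hu'c
  have hDcont : Continuous D := by
    rw [hDdef]
    exact (continuous_const.mul (hhcont.inner hjucont)).sub (continuous_const.mul hgu'cont)
  have hφD : ∀ t, HasDerivAt φ (D t) t := by
    intro t
    have h1 : HasDerivAt (fun t => ⟪j (u' t), j (u' t)⟫)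
        (⟪j (u' t), u'' t⟫ + ⟪u'' t, j (u' t)⟫) t := (hju t).inner ℝ (hju t)
    have h2 : HasDerivAt (fun t => ⟪u t, u t⟫) (⟪u t, u' t⟫ + ⟪u' t, u t⟫) t :=
      (hu t).inner ℝ (hu t)
    have h3 := h1.add h2
    have hfun : (fun t => ⟪j (u' t), j (u' t)⟫ + ⟪u t, u t⟫) = φ := by
      rw [hφdef]
      funext x
      simp [real_inner_self_eq_norm_sq]
    rw [show ((fun t => ⟪j (u' t), j (u' t)⟫) + fun t => ⟪u t, u t⟫) = φ from hfun] at h3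
    have hval : ⟪j (u' t), u'' t⟫ + ⟪u'' t, j (u' t)⟫ + (⟪u t, u' t⟫ + ⟪u' t, u t⟫) = D t := by
      have hsym1 : ⟪j (u' t), u'' t⟫ = ⟪u'' t, j (u' t)⟫ := real_inner_comm _ _
      have hsym2 : ⟪u t, u' t⟫ = ⟪u' t, u t⟫ := real_inner_comm _ _
      have he1 := heval t (u' t)
      rw [hDapp t]
      linarith
    rw [hval] at h3
    exact h3
  have hφper : Function.Periodic φ τ := by
    intro x
    rw [hφapp (x + τ), hφapp x, huanti x, hu'anti x]
    simp
  have hDper : Function.Periodic D τ := by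
    intro t
    have h4 : HasDerivAt (fun x => φ (x + τ)) (D (t + τ)) t :=
      HasDerivAt.comp_add_const t τ (hφD (t + τ))
    have h3 : (fun x => φ (x + τ)) = φ := funext fun x => hφper x
    rw [h3] at h4
    exact h4.unique (hφD t)
  have hDint0 : ∫ x in (0:ℝ)..τ, D x = 0 := by
    have h1 := intervalIntegral.integral_eq_sub_of_hasDerivAt
      (fun x (_ : x ∈ uIcc (0:ℝ) τ) => hφD x) (hDcont.intervalIntegrable 0 τ)
    have h2 : φ τ = φ 0 := by
      have := hφper 0; rwa [zero_add] at this
    rw [h1, h2, sub_self]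
  -- main quantities
  set Y := Real.sqrt (∫ x in (0:ℝ)..τ, ‖h x‖ ^ 2) with hYdef
  clear_value Y
  have hY0 : 0 ≤ Y := by rw [hYdef]; exact Real.sqrt_nonneg _
  obtain ⟨X, hXdef⟩ : ∃ X : ℝ, X = ∫ x in (0:ℝ)..τ, ‖e (u' x)‖ ^ p := ⟨_, rfl⟩
  have hX0 : 0 ≤ X := by
    rw [hXdef]
    exact intervalIntegral.integral_nonneg hτ.le fun x _ => Real.rpow_nonneg (hψnn x) p
  obtain ⟨N, hNdef⟩ : ∃ N : ℝ, N = X ^ (1 / p) := ⟨_, rfl⟩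
  have hN0 : 0 ≤ N := by rw [hNdef]; exact Real.rpow_nonneg hX0 _
  have hNX : N ^ p = X := by
    rw [hNdef, ← Real.rpow_mul hX0, one_div, inv_mul_cancel₀ hp0.ne', Real.rpow_one]
  obtain ⟨μ, hμdef⟩ : ∃ μ : ℝ, μ = Y ^ s := ⟨_, rfl⟩
  have hμ0 : 0 ≤ μ := by rw [hμdef]; exact Real.rpow_nonneg hY0 _
  obtain ⟨P, hPdef⟩ : ∃ P : ℝ, P = 1 + μ := ⟨_, rfl⟩
  have hPge1 : (1:ℝ) ≤ P := by rw [hPdef]; linarith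
  have hPpos : (0:ℝ) < P := lt_of_lt_of_le one_pos hPge1
  have hμP : μ ≤ P := by rw [hPdef]; linarith
  have hYP : Y ≤ P ^ (α + 1) := by
    have h1 : Y = μ ^ (α + 1) := by
      rw [hμdef, ← Real.rpow_mul hY0, hsdef]
      rw [show 1 / (α + 1) * (α + 1) = 1 by field_simp, Real.rpow_one]
    rw [h1]
    exact Real.rpow_le_rpow hμ0 hμP (by linarith)
  have hPa1 : (1:ℝ) ≤ P ^ (α + 1) := by
    have := Real.rpow_le_rpow_of_exponent_le hPge1 (by linarith : (0:ℝ) ≤ α + 1)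
    rwa [Real.rpow_zero] at this
  have hPp1 : P ≤ P ^ p := by
    have := Real.rpow_le_rpow_of_exponent_le hPge1 (by rw [hpdef]; linarith : (1:ℝ) ≤ p)
    rwa [Real.rpow_one] at this
  have hPmul : P * P ^ (α + 1) = P ^ p := by
    have h1 : P ^ ((1:ℝ) + (α + 1)) = P ^ (1:ℝ) * P ^ (α + 1) := Real.rpow_add hPpos 1 (α + 1)
    rw [Real.rpow_one] at h1
    rw [hpdef, show α + 2 = (1:ℝ) + (α + 1) by ring, h1]
  -- L^r bounds via the Hölder-type helper
  have hL1 : ∫ x in (0:ℝ)..τ, ‖e (u' x)‖ ≤ T * N := by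
    have h1 := aux_Lr_le (ψ := fun x => ‖e (u' x)‖) (r := 1) (p := p) (N := N) hτ
      hψcont hψnn one_pos (by rw [hpdef]; linarith) (by rw [hNdef, hXdef])
    rw [hTdef]
    simpa [Real.rpow_one] using h1
  have hL2 : ∫ x in (0:ℝ)..τ, ‖e (u' x)‖ ^ 2 ≤ T * N ^ 2 := by
    have h1 := aux_Lr_le (ψ := fun x => ‖e (u' x)‖) (r := 2) (p := p) (N := N) hτ
      hψcont hψnn two_pos (by rw [hpdef]; linarith) (by rw [hNdef, hXdef])
    rw [hTdef]
    simpa [Real.rpow_two] using h1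
  have hLa1 : ∫ x in (0:ℝ)..τ, ‖e (u' x)‖ ^ (α + 1) ≤ T * N ^ (α + 1) := by
    have h1 := aux_Lr_le (ψ := fun x => ‖e (u' x)‖) (r := α + 1) (p := p) (N := N) hτ
      hψcont hψnn hα1 (by rw [hpdef]; linarith) (by rw [hNdef, hXdef])
    rw [hTdef]
    simpa using h1
  -- bound on ‖j v‖ via ‖e v‖
  have hbound_j : ∀ v : V, ‖j v‖ ≤ F * ‖e v‖ := by
    intro v
    rw [← hfe v]
    calc ‖f (e v)‖ ≤ ‖f‖ * ‖e v‖ := f.le_opNorm _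
      _ ≤ F * ‖e v‖ := by
          rw [hFdef]
          exact mul_le_mul_of_nonneg_right (by linarith [norm_nonneg f]) (norm_nonneg (e v))
  -- Cauchy-Schwarz bounds
  have hCS1 : ∫ x in (0:ℝ)..τ, ‖h x‖ * ‖e (u' x)‖ ≤ Y * (sT * N) := by
    have h1 := aux_CS (a := fun x => ‖h x‖) (b := fun x => ‖e (u' x)‖) hτ
      hhcont.norm hψcont (fun x => norm_nonneg _) hψnn
    have h2 : Real.sqrt (∫ x in (0:ℝ)..τ, ‖e (u' x)‖ ^ 2) ≤ sT * N := by
      calc Real.sqrt (∫ x in (0:ℝ)..τ, ‖e (u' x)‖ ^ 2) ≤ Real.sqrt (T * N ^ 2) :=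
            Real.sqrt_le_sqrt hL2
        _ = sT * N := by
            rw [Real.sqrt_mul hT0.le, Real.sqrt_sq hN0, hsTdef]
    calc ∫ x in (0:ℝ)..τ, ‖h x‖ * ‖e (u' x)‖
        ≤ Real.sqrt (∫ x in (0:ℝ)..τ, ‖h x‖ ^ 2) *
          Real.sqrt (∫ x in (0:ℝ)..τ, ‖e (u' x)‖ ^ 2) := h1
      _ ≤ Real.sqrt (∫ x in (0:ℝ)..τ, ‖h x‖ ^ 2) * (sT * N) :=
          mul_le_mul_of_nonneg_left h2 (Real.sqrt_nonneg _)
      _ = Y * (sT * N) := by rw [hYdef]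
  have hintH : ∫ x in (0:ℝ)..τ, ‖h x‖ ≤ st * Y := by
    have h1 := aux_CS (a := fun x => ‖h x‖) (b := fun _ => (1:ℝ)) hτ
      hhcont.norm continuous_const (fun x => norm_nonneg _) (fun x => zero_le_one)
    have h2 : (∫ x in (0:ℝ)..τ, ((1:ℝ)) ^ 2) = τ := by simp
    simp only [mul_one, h2] at h1
    calc ∫ x in (0:ℝ)..τ, ‖h x‖
        ≤ Real.sqrt (∫ x in (0:ℝ)..τ, ‖h x‖ ^ 2) * Real.sqrt τ := h1
      _ = st * Y := by rw [hYdef, hstdef]; ring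
  -- Step 1 : the basic energy balance
  have hinner_int : IntervalIntegrable (fun x => ⟪h x, j (u' x)⟫) MeasureTheory.volume 0 τ :=
    (hhcont.inner hjucont).intervalIntegrable 0 τ
  have hgu'_int : IntervalIntegrable (fun x => g (u' x) (u' x)) MeasureTheory.volume 0 τ :=
    hgu'cont.intervalIntegrable 0 τ
  have hsplitD : ∫ x in (0:ℝ)..τ, D x =
      2 * (∫ x in (0:ℝ)..τ, ⟪h x, j (u' x)⟫) - 2 * ∫ x in (0:ℝ)..τ, g (u' x) (u' x) := by
    rw [hDdef]
    beta_reduce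
    rw [intervalIntegral.integral_sub (f := fun x => 2 * ⟪h x, j (u' x)⟫) (g := fun x => 2 * g (u' x) (u' x)) ((continuous_const.mul (hhcont.inner hjucont)).intervalIntegrable 0 τ)
      ((continuous_const.mul hgu'cont).intervalIntegrable 0 τ),
      intervalIntegral.integral_const_mul, intervalIntegral.integral_const_mul]
  have hgheq : ∫ x in (0:ℝ)..τ, g (u' x) (u' x) = ∫ x in (0:ℝ)..τ, ⟪h x, j (u' x)⟫ := by
    rw [hsplitD] at hDint0
    linarith
  have hg_lower : γ * X - C₁ * τ ≤ ∫ x in (0:ℝ)..τ, g (u' x) (u' x) := by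
    have hpt : ∀ x ∈ Icc (0:ℝ) τ, γ * ‖e (u' x)‖ ^ p - C₁ ≤ g (u' x) (u' x) :=
      fun x _ => hP1 (u' x)
    have hcont1 : Continuous fun x => γ * ‖e (u' x)‖ ^ p - C₁ :=
      (continuous_const.mul (hψcont.rpow_const fun x => Or.inr hp0.le)).sub continuous_const
    have h1 := intervalIntegral.integral_mono_on hτ.le (hcont1.intervalIntegrable 0 τ)
      hgu'_int hpt
    have h2 : ∫ x in (0:ℝ)..τ, (γ * ‖e (u' x)‖ ^ p - C₁) = γ * X - C₁ * τ := by
      rw [intervalIntegral.integral_sub (f := fun x => γ * ‖e (u' x)‖ ^ p) (g := fun _ => C₁)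
        ((continuous_const.mul (hψcont.rpow_const fun x => Or.inr hp0.le)).intervalIntegrable 0 τ)
        (continuous_const.intervalIntegrable 0 τ),
        intervalIntegral.integral_const_mul, intervalIntegral.integral_const, hXdef]
      rw [smul_eq_mul]
      ring
    rw [h2] at h1
    exact h1
  have hinner_up : ∫ x in (0:ℝ)..τ, ⟪h x, j (u' x)⟫ ≤ F * (Y * (sT * N)) := by
    have hpt : ∀ x ∈ Icc (0:ℝ) τ, ⟪h x, j (u' x)⟫ ≤ F * (‖h x‖ * ‖e (u' x)‖) := by
      intro x _
      calc ⟪h x, j (u' x)⟫ ≤ ‖h x‖ * ‖j (u' x)‖ := real_inner_le_norm _ _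
        _ ≤ ‖h x‖ * (F * ‖e (u' x)‖) :=
            mul_le_mul_of_nonneg_left (hbound_j (u' x)) (norm_nonneg _)
        _ = F * (‖h x‖ * ‖e (u' x)‖) := by ring
    have h1 := intervalIntegral.integral_mono_on (g := fun x => F * (‖h x‖ * ‖e (u' x)‖)) hτ.le hinner_int
      ((continuous_const.mul (hhcont.norm.mul hψcont)).intervalIntegrable 0 τ) hpt
    rw [intervalIntegral.integral_const_mul] at h1
    calc ∫ x in (0:ℝ)..τ, ⟪h x, j (u' x)⟫
        ≤ F * ∫ x in (0:ℝ)..τ, ‖h x‖ * ‖e (u' x)‖ := h1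
      _ ≤ F * (Y * (sT * N)) := mul_le_mul_of_nonneg_left hCS1 hF0.le
  have hstep1 : γ * X ≤ C₁ * τ + F * sT * Y * N := by
    have := hgheq ▸ hg_lower
    have h2 : F * (Y * (sT * N)) = F * sT * Y * N := by ring
    linarith [hinner_up]
  -- Step 2 : N ≤ c8 * P
  have hNP : N ≤ c8 * P := by
    rcases le_or_gt N 1 with hN1 | hN1
    · calc N ≤ 1 := hN1
        _ ≤ c8 * P := by
            have h1 := mul_le_mul hc81 hPge1 zero_le_one (by linarith : (0:ℝ) ≤ c8)
            linarith
    · have hNpos : (0:ℝ) < N := by linarith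
      have hXN : X = N ^ p := hNX.symm
      have h1 : γ * N ^ p ≤ (C₁ * τ + F * sT * Y) * N := by
        have hc : C₁ * τ ≤ C₁ * τ * N :=
          le_mul_of_one_le_right (by positivity) hN1.le
        have hfy : (0:ℝ) ≤ F * sT * Y := by positivity
        rw [← hXN]
        calc γ * X ≤ C₁ * τ + F * sT * Y * N := hstep1
          _ ≤ C₁ * τ * N + F * sT * Y * N := by linarith
          _ = (C₁ * τ + F * sT * Y) * N := by ring
      have hNpow : N ^ p = N ^ (α + 1) * N := by
        have ha : N ^ ((α + 1) + (1:ℝ)) = N ^ (α + 1) * N ^ (1:ℝ) :=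
          Real.rpow_add hNpos (α + 1) 1
        rw [Real.rpow_one] at ha
        rw [hpdef, show α + 2 = (α + 1) + (1:ℝ) by ring, ha]
      have h2 : γ * N ^ (α + 1) ≤ C₁ * τ + F * sT * Y := by
        rw [hNpow] at h1
        have h3 : (γ * N ^ (α + 1)) * N ≤ (C₁ * τ + F * sT * Y) * N := by
          calc (γ * N ^ (α + 1)) * N = γ * (N ^ (α + 1) * N) := by ring
            _ ≤ (C₁ * τ + F * sT * Y) * N := h1
        exact le_of_mul_le_mul_right h3 hNpos
      have h4 : N ^ (α + 1) ≤ (C₁ * τ + F * sT * Y) / γ := by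
        rw [le_div_iff₀ hγ]
        calc N ^ (α + 1) * γ = γ * N ^ (α + 1) := by ring
          _ ≤ C₁ * τ + F * sT * Y := h2
      have h5 : N ≤ ((C₁ * τ + F * sT * Y) / γ) ^ s := by
        have h6 := Real.rpow_le_rpow (Real.rpow_nonneg hNpos.le (α + 1)) h4 hs0.le
        have h7 : (N ^ (α + 1)) ^ s = N := by
          rw [← Real.rpow_mul hNpos.le]
          rw [hsdef, show (α + 1) * (1 / (α + 1)) = 1 by field_simp, Real.rpow_one]
        rwa [h7] at h6
      have h8 : ((C₁ * τ + F * sT * Y) / γ) ^ s ≤ (C₁ * τ / γ) ^ s + (F * sT / γ) ^ s * μ := by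
        have hsplit : (C₁ * τ + F * sT * Y) / γ = C₁ * τ / γ + (F * sT / γ) * Y := by
          field_simp
        rw [hsplit]
        have h9 := aux_rpow_add_le (x := C₁ * τ / γ) (y := (F * sT / γ) * Y)
          (by positivity) (by positivity) hs0 hs1
        have h10 : ((F * sT / γ) * Y) ^ s = (F * sT / γ) ^ s * Y ^ s :=
          Real.mul_rpow (by positivity) hY0
        rw [h10] at h9
        rw [hμdef]
        exact h9
      have hc8a : (0:ℝ) ≤ (C₁ * τ / γ) ^ s := Real.rpow_nonneg (by positivity) s
      have hc8b : (0:ℝ) ≤ (F * sT / γ) ^ s := Real.rpow_nonneg (by positivity) s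
      calc N ≤ (C₁ * τ / γ) ^ s + (F * sT / γ) ^ s * μ := le_trans h5 h8
        _ ≤ c8 * P := by
            rw [hc8def, hPdef]
            have e1 : (0:ℝ) ≤ (C₁ * τ / γ) ^ s * μ := mul_nonneg hc8a hμ0
            have e2 : (0:ℝ) ≤ (F * sT / γ) ^ s * μ := mul_nonneg hc8b hμ0
            have e3 : (1 + (C₁ * τ / γ) ^ s + (F * sT / γ) ^ s) * (1 + μ)
                = 1 + (C₁ * τ / γ) ^ s + (F * sT / γ) ^ s + μ
                  + (C₁ * τ / γ) ^ s * μ + (F * sT / γ) ^ s * μ := by ring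
            rw [e3]
            linarith
  -- R : sup bound for ‖e (u t)‖
  obtain ⟨R, hRdef⟩ : ∃ R : ℝ, R = (1/2) * ∫ x in (0:ℝ)..τ, ‖e (u' x)‖ := ⟨_, rfl⟩
  have hψint_nn : 0 ≤ ∫ x in (0:ℝ)..τ, ‖e (u' x)‖ :=
    intervalIntegral.integral_nonneg hτ.le fun x _ => hψnn x
  have hR0 : 0 ≤ R := by rw [hRdef]; linarith
  have hRP : R ≤ RB * P := by
    have h1 : T * N ≤ T * (c8 * P) := mul_le_mul_of_nonneg_left hNP hT0.le
    rw [hRdef, hRBdef]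
    have h2 : T * c8 / 2 * P = (T * (c8 * P)) / 2 := by ring
    rw [h2]
    linarith [hL1]
  have hRub : ∀ t : ℝ, ‖e (u t)‖ ≤ R := by
    intro t
    have hE : ∀ x : ℝ, HasDerivAt (fun y => e (u y)) (e (u' x)) x := fun x =>
      (e.hasFDerivAt).comp_hasDerivAt x (hu x)
    have hftc : ∫ x in t..(t + τ), e (u' x) = e (u (t + τ)) - e (u t) :=
      intervalIntegral.integral_eq_sub_of_hasDerivAt (fun x _ => hE x)
        ((e.continuous.comp hu'c).intervalIntegrable t (t + τ))
    rw [huanti t, map_neg] at hftc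
    have h2 : (-e (u t)) - e (u t) = -((2:ℝ) • e (u t)) := by
      rw [two_smul]; abel
    rw [h2] at hftc
    have h3 : ‖∫ x in t..(t + τ), e (u' x)‖ = 2 * ‖e (u t)‖ := by
      rw [hftc, norm_neg, norm_smul]
      norm_num
    have h4 : ‖∫ x in t..(t + τ), e (u' x)‖ ≤ ∫ x in t..(t + τ), ‖e (u' x)‖ :=
      intervalIntegral.norm_integral_le_integral_norm (by linarith)
    have h5 : ∫ x in t..(t + τ), ‖e (u' x)‖ = ∫ x in (0:ℝ)..τ, ‖e (u' x)‖ := by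
      have h6 := hψper.intervalIntegral_add_eq t 0
      simpa using h6
    rw [h3, h5] at h4
    rw [hRdef]
    linarith
  -- second energy identity
  have hηD : ∀ x : ℝ, HasDerivAt (fun y => ⟪j (u' y), j (u y)⟫)
      (⟪j (u' x), j (u' x)⟫ + ⟪u'' x, j (u x)⟫) x := by
    intro x
    have hjuD : HasDerivAt (fun y => j (u y)) (j (u' x)) x :=
      (j.hasFDerivAt).comp_hasDerivAt x (hu x)
    exact (hju x).inner ℝ hjuD
  have hηcont : Continuous fun x => ⟪j (u' x), j (u' x)⟫ + ⟪u'' x, j (u x)⟫ :=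
    (hjucont.inner hjucont).add (hu''c.inner hjuucont)
  have hηint0 : ∫ x in (0:ℝ)..τ, (⟪j (u' x), j (u' x)⟫ + ⟪u'' x, j (u x)⟫) = 0 := by
    rw [intervalIntegral.integral_eq_sub_of_hasDerivAt (fun x _ => hηD x)
      (hηcont.intervalIntegrable 0 τ)]
    have h1 : u' τ = -u' 0 := by have := hu'anti 0; rwa [zero_add] at this
    have h2 : u τ = -u 0 := by have := huanti 0; rwa [zero_add] at this
    rw [h1, h2]
    simp
  have hptw : ∀ x : ℝ, ‖u x‖ ^ 2 = ‖j (u' x)‖ ^ 2 + (⟪h x, j (u x)⟫ - g (u' x) (u x))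
      - (⟪j (u' x), j (u' x)⟫ + ⟪u'' x, j (u x)⟫) := by
    intro x
    have h1 := heval x (u x)
    have h2 : ⟪u x, u x⟫ = ‖u x‖ ^ 2 := real_inner_self_eq_norm_sq _
    have h3 : ⟪j (u' x), j (u' x)⟫ = ‖j (u' x)‖ ^ 2 := real_inner_self_eq_norm_sq _
    linarith
  have hWcont : Continuous fun x => ⟪h x, j (u x)⟫ - g (u' x) (u x) :=
    (hhcont.inner hjuucont).sub ((hg_cont.comp hu'c).clm_apply hucont)
  have hWint : ∫ x in (0:ℝ)..τ, ‖u x‖ ^ 2 =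
      (∫ x in (0:ℝ)..τ, ‖j (u' x)‖ ^ 2)
        + ∫ x in (0:ℝ)..τ, (⟪h x, j (u x)⟫ - g (u' x) (u x)) := by
    have hsplit : ∫ x in (0:ℝ)..τ, ‖u x‖ ^ 2 =
        ∫ x in (0:ℝ)..τ, (‖j (u' x)‖ ^ 2 + (⟪h x, j (u x)⟫ - g (u' x) (u x))
          - (⟪j (u' x), j (u' x)⟫ + ⟪u'' x, j (u x)⟫)) :=
      intervalIntegral.integral_congr fun x _ => hptw x
    rw [hsplit, intervalIntegral.integral_sub (f := fun x => ‖j (u' x)‖ ^ 2 + (⟪h x, j (u x)⟫ - g (u' x) (u x)))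
        (g := fun x => ⟪j (u' x), j (u' x)⟫ + ⟪u'' x, j (u x)⟫)
        (((hjucont.norm.pow 2).add hWcont).intervalIntegrable 0 τ)
        (hηcont.intervalIntegrable 0 τ),
      intervalIntegral.integral_add (f := fun x => ‖j (u' x)‖ ^ 2)
        (g := fun x => ⟪h x, j (u x)⟫ - g (u' x) (u x)) ((hjucont.norm.pow 2).intervalIntegrable 0 τ)
        (hWcont.intervalIntegrable 0 τ), hηint0, sub_zero]
  -- bound on ∫ ‖j u'‖²
  have hc8two : c8 ^ (2:ℝ) = c8 ^ 2 := Real.rpow_two c8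
  have hP2p : P ^ 2 ≤ P ^ p := by
    have h1 := Real.rpow_le_rpow_of_exponent_le hPge1 hp2
    rwa [Real.rpow_two] at h1
  have hPppos : 0 < P ^ p := Real.rpow_pos_of_pos hPpos p
  have hIju' : ∫ x in (0:ℝ)..τ, ‖j (u' x)‖ ^ 2 ≤ B1 * P ^ p := by
    have hpt : ∀ x ∈ Icc (0:ℝ) τ, ‖j (u' x)‖ ^ 2 ≤ F ^ 2 * ‖e (u' x)‖ ^ 2 := by
      intro x _
      have h1 := pow_le_pow_left₀ (norm_nonneg (j (u' x))) (hbound_j (u' x)) 2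
      rwa [mul_pow] at h1
    have hgc : Continuous fun x => F ^ 2 * ‖e (u' x)‖ ^ 2 := continuous_const.mul (hψcont.pow 2)
    have h1 : ∫ x in (0:ℝ)..τ, ‖j (u' x)‖ ^ 2 ≤ ∫ x in (0:ℝ)..τ, F ^ 2 * ‖e (u' x)‖ ^ 2 :=
      intervalIntegral.integral_mono_on hτ.le
        ((hjucont.norm.pow 2).intervalIntegrable 0 τ)
        (hgc.intervalIntegrable 0 τ) hpt
    rw [intervalIntegral.integral_const_mul] at h1
    have h2 : F ^ 2 * ∫ x in (0:ℝ)..τ, ‖e (u' x)‖ ^ 2 ≤ F ^ 2 * (T * N ^ 2) :=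
      mul_le_mul_of_nonneg_left hL2 (by positivity)
    have h3 : N ^ 2 ≤ c8 ^ 2 * P ^ 2 := by
      have h4 := pow_le_pow_left₀ hN0 hNP 2
      rwa [mul_pow] at h4
    have h5 : F ^ 2 * T * c8 ^ 2 * P ^ 2 ≤ B1 * P ^ p := by
      rw [hB1def, hc8two]
      exact mul_le_mul_of_nonneg_left hP2p (by positivity)
    have h7 : F ^ 2 * (T * N ^ 2) ≤ F ^ 2 * T * (c8 ^ 2 * P ^ 2) := by
      have h8 : (0:ℝ) ≤ F ^ 2 * T := by positivity
      calc F ^ 2 * (T * N ^ 2) = F ^ 2 * T * N ^ 2 := by ring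
        _ ≤ F ^ 2 * T * (c8 ^ 2 * P ^ 2) := mul_le_mul_of_nonneg_left h3 h8
    calc ∫ x in (0:ℝ)..τ, ‖j (u' x)‖ ^ 2
        ≤ F ^ 2 * ∫ x in (0:ℝ)..τ, ‖e (u' x)‖ ^ 2 := h1
      _ ≤ F ^ 2 * (T * N ^ 2) := h2
      _ ≤ F ^ 2 * T * (c8 ^ 2 * P ^ 2) := h7
      _ = F ^ 2 * T * c8 ^ 2 * P ^ 2 := by ring
      _ ≤ B1 * P ^ p := h5
  -- bound on ∫ (⟪h, j u⟫ - g(u')(u))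
  have hIntH_nn : 0 ≤ ∫ x in (0:ℝ)..τ, ‖h x‖ :=
    intervalIntegral.integral_nonneg hτ.le fun x _ => norm_nonneg _
  have hIntA1_nn : 0 ≤ ∫ x in (0:ℝ)..τ, ‖e (u' x)‖ ^ (α + 1) :=
    intervalIntegral.integral_nonneg hτ.le fun x _ => Real.rpow_nonneg (hψnn x) _
  have hca1 : Continuous fun x : ℝ => ‖e (u' x)‖ ^ (α + 1) :=
    hψcont.rpow_const fun x => Or.inr (by linarith)
  have hW : ∫ x in (0:ℝ)..τ, (⟪h x, j (u x)⟫ - g (u' x) (u x)) ≤ B2 * P ^ p := by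
    have hpt : ∀ x ∈ Icc (0:ℝ) τ, ⟪h x, j (u x)⟫ - g (u' x) (u x)
        ≤ F * R * ‖h x‖ + R * C₂ + R * K * ‖e (u' x)‖ ^ (α + 1) := by
      intro x _
      have h1 : ⟪h x, j (u x)⟫ ≤ ‖h x‖ * (F * R) := by
        calc ⟪h x, j (u x)⟫ ≤ ‖h x‖ * ‖j (u x)‖ := real_inner_le_norm _ _
          _ ≤ ‖h x‖ * (F * ‖e (u x)‖) :=
              mul_le_mul_of_nonneg_left (hbound_j (u x)) (norm_nonneg _)
          _ ≤ ‖h x‖ * (F * R) :=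
              mul_le_mul_of_nonneg_left
                (mul_le_mul_of_nonneg_left (hRub x) hF0.le) (norm_nonneg _)
      have h4 : -g (u' x) (u x) ≤ (C₂ + K * ‖e (u' x)‖ ^ (α + 1)) * R := by
        have h5 : |g (u' x) (u x)| ≤ (C₂ + K * ‖e (u' x)‖ ^ (α + 1)) * R := by
          rw [hG_ext (u' x) (u x)]
          have h6 : |(G (u' x)) (e (u x))| ≤ ‖G (u' x)‖ * ‖e (u x)‖ := by
            have h7 := (G (u' x)).le_opNorm (e (u x))
            rwa [Real.norm_eq_abs] at h7
          have h8 : (0:ℝ) ≤ C₂ + K * ‖e (u' x)‖ ^ (α + 1) := by positivity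
          calc |(G (u' x)) (e (u x))| ≤ ‖G (u' x)‖ * ‖e (u x)‖ := h6
            _ ≤ (C₂ + K * ‖e (u' x)‖ ^ (α + 1)) * R :=
                mul_le_mul (hG_grow (u' x)) (hRub x) (norm_nonneg _) h8
        linarith [neg_abs_le (g (u' x) (u x))]
      have h9 : (C₂ + K * ‖e (u' x)‖ ^ (α + 1)) * R
          = R * C₂ + R * K * ‖e (u' x)‖ ^ (α + 1) := by ring
      have h10 : ‖h x‖ * (F * R) = F * R * ‖h x‖ := by ring
      linarith
    have hup_cont : Continuous fun x =>
        F * R * ‖h x‖ + R * C₂ + R * K * ‖e (u' x)‖ ^ (α + 1) :=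
      (((continuous_const.mul hhcont.norm).add continuous_const).add
        (continuous_const.mul hca1))
    have h11 := intervalIntegral.integral_mono_on (μ := MeasureTheory.volume) hτ.le
      (hWcont.intervalIntegrable 0 τ) (hup_cont.intervalIntegrable 0 τ) hpt
    have h12 : ∫ x in (0:ℝ)..τ, (F * R * ‖h x‖ + R * C₂ + R * K * ‖e (u' x)‖ ^ (α + 1))
        = F * R * (∫ x in (0:ℝ)..τ, ‖h x‖) + R * C₂ * τ
          + R * K * ∫ x in (0:ℝ)..τ, ‖e (u' x)‖ ^ (α + 1) := by
      rw [intervalIntegral.integral_add (f := fun x => F * R * ‖h x‖ + R * C₂)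
          (g := fun x => R * K * ‖e (u' x)‖ ^ (α + 1))
          (((continuous_const.mul hhcont.norm).add continuous_const).intervalIntegrable 0 τ)
          ((continuous_const.mul hca1).intervalIntegrable 0 τ),
        intervalIntegral.integral_add (f := fun x => F * R * ‖h x‖) (g := fun _ => R * C₂)
          ((continuous_const.mul hhcont.norm).intervalIntegrable 0 τ)
          (continuous_const.intervalIntegrable 0 τ),
        intervalIntegral.integral_const_mul, intervalIntegral.integral_const_mul,
        intervalIntegral.integral_const_mul,
        intervalIntegral.integral_const, smul_eq_mul]
      ring
    rw [h12] at h11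
    -- now bound the three pieces
    have ha1 : F * R * (∫ x in (0:ℝ)..τ, ‖h x‖) ≤ RB * (F * st) * P ^ p := by
      have hb1 : ∫ x in (0:ℝ)..τ, ‖h x‖ ≤ st * P ^ (α + 1) := by
        calc ∫ x in (0:ℝ)..τ, ‖h x‖ ≤ st * Y := hintH
          _ ≤ st * P ^ (α + 1) := mul_le_mul_of_nonneg_left hYP hst0.le
      calc F * R * (∫ x in (0:ℝ)..τ, ‖h x‖)
          ≤ F * (RB * P) * (st * P ^ (α + 1)) := by
            apply mul_le_mul
            · exact mul_le_mul_of_nonneg_left hRP hF0.le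
            · exact hb1
            · exact hIntH_nn
            · positivity
        _ = RB * (F * st) * (P * P ^ (α + 1)) := by ring
        _ = RB * (F * st) * P ^ p := by rw [hPmul]
    have ha2 : R * C₂ * τ ≤ RB * (C₂ * τ) * P ^ p := by
      have hb2 : R * C₂ * τ ≤ (RB * P) * C₂ * τ := by
        have := mul_le_mul_of_nonneg_right (mul_le_mul_of_nonneg_right hRP hC₂) hτ.le
        linarith
      calc R * C₂ * τ ≤ (RB * P) * C₂ * τ := hb2
        _ = RB * (C₂ * τ) * P := by ring
        _ ≤ RB * (C₂ * τ) * P ^ p := mul_le_mul_of_nonneg_left hPp1 (by positivity)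
    have ha3 : R * K * (∫ x in (0:ℝ)..τ, ‖e (u' x)‖ ^ (α + 1))
        ≤ RB * (K * T * c8 ^ (α + 1)) * P ^ p := by
      have hb3 : ∫ x in (0:ℝ)..τ, ‖e (u' x)‖ ^ (α + 1)
          ≤ T * (c8 ^ (α + 1) * P ^ (α + 1)) := by
        have hb4 : N ^ (α + 1) ≤ (c8 * P) ^ (α + 1) :=
          Real.rpow_le_rpow hN0 hNP (by linarith)
        rw [Real.mul_rpow hc80.le hPpos.le] at hb4
        calc ∫ x in (0:ℝ)..τ, ‖e (u' x)‖ ^ (α + 1) ≤ T * N ^ (α + 1) := hLa1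
          _ ≤ T * (c8 ^ (α + 1) * P ^ (α + 1)) := mul_le_mul_of_nonneg_left hb4 hT0.le
      calc R * K * (∫ x in (0:ℝ)..τ, ‖e (u' x)‖ ^ (α + 1))
          ≤ (RB * P) * K * (T * (c8 ^ (α + 1) * P ^ (α + 1))) := by
            apply mul_le_mul
            · exact mul_le_mul_of_nonneg_right hRP hK.le
            · exact hb3
            · exact hIntA1_nn
            · positivity
        _ = RB * (K * T * c8 ^ (α + 1)) * (P * P ^ (α + 1)) := by ring
        _ = RB * (K * T * c8 ^ (α + 1)) * P ^ p := by rw [hPmul]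
    have hsum : RB * (F * st) * P ^ p + RB * (C₂ * τ) * P ^ p
        + RB * (K * T * c8 ^ (α + 1)) * P ^ p = B2 * P ^ p := by
      rw [hB2def]; ring
    linarith
  -- integral of the energy
  have hIφ : ∫ x in (0:ℝ)..τ, φ x ≤ (2 * B1 + B2) * P ^ p := by
    have hsplit : ∫ x in (0:ℝ)..τ, φ x = (∫ x in (0:ℝ)..τ, ‖j (u' x)‖ ^ 2)
        + ∫ x in (0:ℝ)..τ, ‖u x‖ ^ 2 := by
      rw [hφdef]
      beta_reduce
      rw [intervalIntegral.integral_add (f := fun x => ‖j (u' x)‖ ^ 2) (g := fun x => ‖u x‖ ^ 2)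
        ((hjucont.norm.pow 2).intervalIntegrable 0 τ)
        ((hucont.norm.pow 2).intervalIntegrable 0 τ)]
    rw [hsplit, hWint]
    linarith
  -- bound on ∫ |D|
  have hXbound : X ≤ c8 ^ p * P ^ p := by
    rw [← hNX]
    have h1 : N ^ p ≤ (c8 * P) ^ p := Real.rpow_le_rpow hN0 hNP hp0.le
    rwa [Real.mul_rpow hc80.le hPpos.le] at h1
  have hDabs : ∫ x in (0:ℝ)..τ, |D x| ≤ B3 * P ^ p := by
    have hpt : ∀ x ∈ Icc (0:ℝ) τ, |D x|
        ≤ 2 * F * (‖h x‖ * ‖e (u' x)‖) + 2 * C₂ * ‖e (u' x)‖ + 2 * K * ‖e (u' x)‖ ^ p := by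
      intro x _
      rw [hDapp x]
      have h1 : |⟪h x, j (u' x)⟫| ≤ F * (‖h x‖ * ‖e (u' x)‖) := by
        calc |⟪h x, j (u' x)⟫| ≤ ‖h x‖ * ‖j (u' x)‖ := abs_real_inner_le_norm _ _
          _ ≤ ‖h x‖ * (F * ‖e (u' x)‖) :=
              mul_le_mul_of_nonneg_left (hbound_j (u' x)) (norm_nonneg _)
          _ = F * (‖h x‖ * ‖e (u' x)‖) := by ring
      have h2 : |g (u' x) (u' x)| ≤ C₂ * ‖e (u' x)‖ + K * ‖e (u' x)‖ ^ p := by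
        rw [hG_ext (u' x) (u' x)]
        have h3 : |(G (u' x)) (e (u' x))| ≤ ‖G (u' x)‖ * ‖e (u' x)‖ := by
          have h7 := (G (u' x)).le_opNorm (e (u' x))
          rwa [Real.norm_eq_abs] at h7
        have h4 : ‖G (u' x)‖ * ‖e (u' x)‖ ≤ (C₂ + K * ‖e (u' x)‖ ^ (α + 1)) * ‖e (u' x)‖ :=
          mul_le_mul_of_nonneg_right (hG_grow (u' x)) (norm_nonneg _)
        have h5 : ‖e (u' x)‖ ^ (α + 1) * ‖e (u' x)‖ = ‖e (u' x)‖ ^ p := by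
          have h6 : ‖e (u' x)‖ ^ ((α + 1) + (1:ℝ))
              = ‖e (u' x)‖ ^ (α + 1) * ‖e (u' x)‖ ^ (1:ℝ) :=
            Real.rpow_add' (hψnn x) (by intro hc; linarith [hc])
          rw [Real.rpow_one] at h6
          rw [hpdef, show α + 2 = (α + 1) + (1:ℝ) by ring, h6]
        have h8 : (C₂ + K * ‖e (u' x)‖ ^ (α + 1)) * ‖e (u' x)‖
            = C₂ * ‖e (u' x)‖ + K * (‖e (u' x)‖ ^ (α + 1) * ‖e (u' x)‖) := by ring
        rw [h8, h5] at h4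
        linarith [h3]
      have habs : |D x| ≤ 2 * |⟪h x, j (u' x)⟫| + 2 * |g (u' x) (u' x)| := by
        rw [hDapp x]
        calc |2 * ⟪h x, j (u' x)⟫ - 2 * g (u' x) (u' x)|
            ≤ |2 * ⟪h x, j (u' x)⟫| + |2 * g (u' x) (u' x)| := abs_sub _ _
          _ = 2 * |⟪h x, j (u' x)⟫| + 2 * |g (u' x) (u' x)| := by
              rw [abs_mul, abs_mul]
              norm_num
      rw [hDapp x] at habs
      linarith
    have hup_cont : Continuous fun x =>
        2 * F * (‖h x‖ * ‖e (u' x)‖) + 2 * C₂ * ‖e (u' x)‖ + 2 * K * ‖e (u' x)‖ ^ p :=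
      ((continuous_const.mul (hhcont.norm.mul hψcont)).add
        (continuous_const.mul hψcont)).add
        (continuous_const.mul (hψcont.rpow_const fun x => Or.inr hp0.le))
    have h11 := intervalIntegral.integral_mono_on (μ := MeasureTheory.volume) hτ.le
      (hDcont.abs.intervalIntegrable 0 τ) (hup_cont.intervalIntegrable 0 τ) hpt
    have h12 : ∫ x in (0:ℝ)..τ,
        (2 * F * (‖h x‖ * ‖e (u' x)‖) + 2 * C₂ * ‖e (u' x)‖ + 2 * K * ‖e (u' x)‖ ^ p)
        = 2 * F * (∫ x in (0:ℝ)..τ, ‖h x‖ * ‖e (u' x)‖)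
          + 2 * C₂ * (∫ x in (0:ℝ)..τ, ‖e (u' x)‖) + 2 * K * X := by
      rw [intervalIntegral.integral_add
          (f := fun x => 2 * F * (‖h x‖ * ‖e (u' x)‖) + 2 * C₂ * ‖e (u' x)‖)
          (g := fun x => 2 * K * ‖e (u' x)‖ ^ p)
          (((continuous_const.mul (hhcont.norm.mul hψcont)).add
            (continuous_const.mul hψcont)).intervalIntegrable 0 τ)
          ((continuous_const.mul (hψcont.rpow_const fun x => Or.inr hp0.le)).intervalIntegrable 0 τ),
        intervalIntegral.integral_add
          (f := fun x => 2 * F * (‖h x‖ * ‖e (u' x)‖)) (g := fun x => 2 * C₂ * ‖e (u' x)‖)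
          ((continuous_const.mul (hhcont.norm.mul hψcont)).intervalIntegrable 0 τ)
          ((continuous_const.mul hψcont).intervalIntegrable 0 τ),
        intervalIntegral.integral_const_mul, intervalIntegral.integral_const_mul,
        intervalIntegral.integral_const_mul, hXdef]
    rw [h12] at h11
    have hb1 : 2 * F * (∫ x in (0:ℝ)..τ, ‖h x‖ * ‖e (u' x)‖) ≤ 2 * F * sT * c8 * P ^ p := by
      have hc1 : ∫ x in (0:ℝ)..τ, ‖h x‖ * ‖e (u' x)‖ ≤ P ^ (α + 1) * (sT * (c8 * P)) := by
        calc ∫ x in (0:ℝ)..τ, ‖h x‖ * ‖e (u' x)‖ ≤ Y * (sT * N) := hCS1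
          _ ≤ P ^ (α + 1) * (sT * (c8 * P)) := by
              apply mul_le_mul hYP _ (by positivity) (by positivity)
              exact mul_le_mul_of_nonneg_left hNP hsT0.le
      calc 2 * F * (∫ x in (0:ℝ)..τ, ‖h x‖ * ‖e (u' x)‖)
          ≤ 2 * F * (P ^ (α + 1) * (sT * (c8 * P))) :=
            mul_le_mul_of_nonneg_left hc1 (by positivity)
        _ = 2 * F * sT * c8 * (P * P ^ (α + 1)) := by ring
        _ = 2 * F * sT * c8 * P ^ p := by rw [hPmul]
    have hb2 : 2 * C₂ * (∫ x in (0:ℝ)..τ, ‖e (u' x)‖) ≤ 2 * C₂ * T * c8 * P ^ p := by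
      have hc2 : ∫ x in (0:ℝ)..τ, ‖e (u' x)‖ ≤ T * (c8 * P) := by
        calc ∫ x in (0:ℝ)..τ, ‖e (u' x)‖ ≤ T * N := hL1
          _ ≤ T * (c8 * P) := mul_le_mul_of_nonneg_left hNP hT0.le
      calc 2 * C₂ * (∫ x in (0:ℝ)..τ, ‖e (u' x)‖) ≤ 2 * C₂ * (T * (c8 * P)) :=
            mul_le_mul_of_nonneg_left hc2 (by positivity)
        _ = 2 * C₂ * T * c8 * P := by ring
        _ ≤ 2 * C₂ * T * c8 * P ^ p := mul_le_mul_of_nonneg_left hPp1 (by positivity)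
    have hb3 : 2 * K * X ≤ 2 * K * c8 ^ p * P ^ p := by
      calc 2 * K * X ≤ 2 * K * (c8 ^ p * P ^ p) :=
            mul_le_mul_of_nonneg_left hXbound (by positivity)
        _ = 2 * K * c8 ^ p * P ^ p := by ring
    have hsum : 2 * F * sT * c8 * P ^ p + 2 * C₂ * T * c8 * P ^ p
        + 2 * K * c8 ^ p * P ^ p = B3 * P ^ p := by
      rw [hB3def]; ring
    linarith
  -- minimum of the energy and conclusion
  obtain ⟨s₀, hs₀mem, hs₀min⟩ :=
    isCompact_Icc.exists_isMinOn (nonempty_Icc.2 hτ.le) hφcont.continuousOn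
  have hmean : τ * φ s₀ ≤ ∫ x in (0:ℝ)..τ, φ x := by
    have h1 := intervalIntegral.integral_mono_on (μ := MeasureTheory.volume)
      (f := fun _ => φ s₀) hτ.le
      (continuous_const.intervalIntegrable 0 τ) (hφcont.intervalIntegrable 0 τ)
      (fun x hx => hs₀min hx)
    rwa [intervalIntegral.integral_const, smul_eq_mul, sub_zero] at h1
  obtain ⟨n, hn1, hn2⟩ : ∃ n : ℤ, s₀ ≤ t0 + (n:ℝ) * τ ∧ t0 + (n:ℝ) * τ ≤ s₀ + τ := by
    refine ⟨⌈(s₀ - t0) / τ⌉, ?_, ?_⟩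
    · have h1 := Int.le_ceil ((s₀ - t0) / τ)
      have h2 := mul_le_mul_of_nonneg_right h1 hτ.le
      rw [div_mul_cancel₀ _ hτ.ne'] at h2
      linarith
    · have h1 := (Int.ceil_lt_add_one ((s₀ - t0) / τ)).le
      have h2 := mul_le_mul_of_nonneg_right h1 hτ.le
      rw [add_mul, div_mul_cancel₀ _ hτ.ne', one_mul] at h2
      linarith
  have hφt0 : φ t0 = φ (t0 + (n:ℝ) * τ) := ((hφper.int_mul n) t0).symm
  have hftc2 : φ (t0 + (n:ℝ) * τ) - φ s₀ = ∫ x in s₀..(t0 + (n:ℝ) * τ), D x :=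
    (intervalIntegral.integral_eq_sub_of_hasDerivAt (fun x _ => hφD x)
      (hDcont.intervalIntegrable _ _)).symm
  have habs2 : ∫ x in s₀..(t0 + (n:ℝ) * τ), D x ≤ ∫ x in (0:ℝ)..τ, |D x| := by
    have h1 : ∫ x in s₀..(t0 + (n:ℝ) * τ), D x ≤ ∫ x in s₀..(t0 + (n:ℝ) * τ), |D x| :=
      intervalIntegral.integral_mono_on (μ := MeasureTheory.volume) hn1
        (hDcont.intervalIntegrable _ _)
        (hDcont.abs.intervalIntegrable _ _) (fun x _ => le_abs_self _)
    have h2 := intervalIntegral.integral_add_adjacent_intervals (μ := MeasureTheory.volume)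
      (hDcont.abs.intervalIntegrable s₀ (t0 + (n:ℝ) * τ))
      (hDcont.abs.intervalIntegrable (t0 + (n:ℝ) * τ) (s₀ + τ))
    have h3 : 0 ≤ ∫ x in (t0 + (n:ℝ) * τ)..(s₀ + τ), |D x| :=
      intervalIntegral.integral_nonneg hn2 (fun x _ => abs_nonneg _)
    have h4 : ∫ x in s₀..(s₀ + τ), |D x| = ∫ x in (0:ℝ)..τ, |D x| := by
      have hDabsper : Function.Periodic (fun x => |D x|) τ := fun x => by
        simp [hDper x]
      have h5 := hDabsper.intervalIntegral_add_eq s₀ 0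
      simpa using h5
    linarith
  have hφs₀ : φ s₀ ≤ (2 * B1 + B2) * P ^ p / τ := by
    rw [le_div_iff₀ hτ]
    calc φ s₀ * τ = τ * φ s₀ := by ring
      _ ≤ ∫ x in (0:ℝ)..τ, φ x := hmean
      _ ≤ (2 * B1 + B2) * P ^ p := hIφ
  have hφbound : φ t0 ≤ B4 * P ^ p := by
    have h1 : φ t0 ≤ φ s₀ + ∫ x in (0:ℝ)..τ, |D x| := by
      rw [hφt0]
      linarith
    have h2 : B4 * P ^ p = (2 * B1 + B2) * P ^ p / τ + B3 * P ^ p := by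
      rw [hB4def]; ring
    rw [h2]
    linarith
  have hPp2p : P ^ p ≤ 2 ^ p * (1 + μ ^ p) := by
    rw [hPdef]
    exact aux_one_add_rpow hμ0 hp0.le
  have hμp : μ ^ p = Y ^ (p / (α + 1)) := by
    rw [hμdef, ← Real.rpow_mul hY0]
    congr 1
    rw [hsdef]
    ring
  have hgoal : φ t0 ≤ B4 * 2 ^ p * (1 + Y ^ (p / (α + 1))) := by
    calc φ t0 ≤ B4 * P ^ p := hφbound
      _ ≤ B4 * (2 ^ p * (1 + μ ^ p)) := mul_le_mul_of_nonneg_left hPp2p hB4pos.le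
      _ = B4 * 2 ^ p * (1 + Y ^ (p / (α + 1))) := by rw [hμp]; ring
  rw [hφapp t0] at hgoal
  exact hgoal
end

section
/- Let φ ∈ H, φ ≠ 0, and λ > 0 with A φ = λ φ, and assume g is odd (g(−v) = −g(v)). For k > 0 define u_k(t) = k cos(√λ t) φ and h_k(t) = g(−k √λ sin(√λ t) φ). Then: (i) u_k is a C² solution of ü + A u + g(u̇) = h_k on ℝ; (ii) both u_k and h_k are (π/√λ)-anti-periodic; (iii) sup_{t∈ℝ} (|u̇_k(t)|² + |u_k(t)|²) ≥ k² |φ|²; and (iv) if moreover |g(v)| ≤ C₂ + K |v|^{α+1} for all v ∈ H (with α ≥ 0, K > 0, C₂ ≥ 0), then ‖h_k‖_{L^∞(ℝ,H)} ≤ C₂ + K (k √λ |φ|)^{α+1}. In particular the exponent 2/(α+1) in the anti-periodic ultimate bound is optimal. -/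
open scoped RealInnerProductSpace
open Real

/-- Optimality of the exponent `2/(α+1)` in the anti-periodic
ultimate bound. For an eigenvector `φ` of `A` with eigenvalue `λ > 0` and
`g` odd, `u_k(t) = k cos(√λ t) φ` solves `ü + A u + g(u̇) = h_k` with
`h_k(t) = g(−k√λ sin(√λ t) φ)`; both are `(π/√λ)`-anti-periodic; the energy
supremum is at least `k² |φ|²` while, under the growth condition on `g`,
`‖h_k‖_∞ ≤ C₂ + K (k √λ |φ|)^{α+1}`. -/
theorem stmt_15
    {H : Type*} [NormedAddCommGroup H] [InnerProductSpace ℝ H] [CompleteSpace H]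
    (A : H →L[ℝ] H)
    (hA_sym : ∀ u v : H, ⟪A u, v⟫ = ⟪u, A v⟫)
    (g : H → H) (hg_cont : Continuous g)
    (hg_mono : ∀ v w : H, ⟪g v - g w, v - w⟫ ≥ 0)
    (hg_odd : ∀ v : H, g (-v) = -g v)
    (φ : H) (hφ : φ ≠ 0) (lam : ℝ) (hlam : 0 < lam)
    (heig : A φ = lam • φ)
    (α : ℝ) (hα : 0 ≤ α) (K C₂ : ℝ) (hK : 0 < K) (hC₂ : 0 ≤ C₂)
    (k : ℝ) (hk : 0 < k)
    (u u' u'' h : ℝ → H)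
    (hu_def : ∀ t : ℝ, u t = (k * Real.cos (Real.sqrt lam * t)) • φ)
    (hu'_def : ∀ t : ℝ, u' t = (-(k * Real.sqrt lam * Real.sin (Real.sqrt lam * t))) • φ)
    (hu''_def : ∀ t : ℝ, u'' t = (-(k * lam * Real.cos (Real.sqrt lam * t))) • φ)
    (hh_def : ∀ t : ℝ, h t = g ((-(k * Real.sqrt lam * Real.sin (Real.sqrt lam * t))) • φ)) :
    (∀ t : ℝ, HasDerivAt u (u' t) t ∧ HasDerivAt u' (u'' t) t ∧
        u'' t + A (u t) + g (u' t) = h t) ∧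
    (∀ t : ℝ, u (t + π / Real.sqrt lam) = -u t ∧
        h (t + π / Real.sqrt lam) = -h t) ∧
    (⨆ t : ℝ, ‖u' t‖ ^ 2 + ‖u t‖ ^ 2) ≥ k ^ 2 * ‖φ‖ ^ 2 ∧
    ((∀ v : H, ‖g v‖ ≤ C₂ + K * ‖v‖ ^ (α + 1)) →
      ∀ t : ℝ, ‖h t‖ ≤ C₂ + K * (k * Real.sqrt lam * ‖φ‖) ^ (α + 1)) := by
  have hs : (0:ℝ) < Real.sqrt lam := Real.sqrt_pos.mpr hlam
  have hsq : Real.sqrt lam * Real.sqrt lam = lam := Real.mul_self_sqrt hlam.le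
  -- derivative of scalar functions
  have hccos : ∀ t : ℝ, HasDerivAt (fun t => k * Real.cos (Real.sqrt lam * t))
      (-(k * Real.sqrt lam * Real.sin (Real.sqrt lam * t))) t := by
    intro t
    have h1 : HasDerivAt (fun t : ℝ => Real.sqrt lam * t) (Real.sqrt lam) t := by
      simpa using (hasDerivAt_id t).const_mul (Real.sqrt lam)
    have h2 := (Real.hasDerivAt_cos (Real.sqrt lam * t)).comp t h1
    have h3 := h2.const_mul k
    exact h3.congr_deriv (by ring)
  have hcsin : ∀ t : ℝ, HasDerivAt (fun t => -(k * Real.sqrt lam * Real.sin (Real.sqrt lam * t)))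
      (-(k * lam * Real.cos (Real.sqrt lam * t))) t := by
    intro t
    have h1 : HasDerivAt (fun t : ℝ => Real.sqrt lam * t) (Real.sqrt lam) t := by
      simpa using (hasDerivAt_id t).const_mul (Real.sqrt lam)
    have h2 := (Real.hasDerivAt_sin (Real.sqrt lam * t)).comp t h1
    have h3 := (h2.const_mul (k * Real.sqrt lam)).neg
    exact h3.congr_deriv (by linear_combination (-(k * Real.cos (Real.sqrt lam * t))) * hsq)
  have hu : u = fun t => (k * Real.cos (Real.sqrt lam * t)) • φ := funext hu_def
  have hu' : u' = fun t => (-(k * Real.sqrt lam * Real.sin (Real.sqrt lam * t))) • φ :=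
    funext hu'_def
  refine ⟨?_, ?_, ?_, ?_⟩
  · intro t
    refine ⟨?_, ?_, ?_⟩
    · rw [hu, hu'_def t]
      exact (hccos t).smul_const φ
    · rw [hu', hu''_def t]
      exact (hcsin t).smul_const φ
    · rw [hu''_def t, hu_def t, hu'_def t, hh_def t]
      have : A ((k * Real.cos (Real.sqrt lam * t)) • φ)
          = (k * Real.cos (Real.sqrt lam * t)) • (lam • φ) := by
        rw [map_smul, heig]
      rw [this, smul_smul]
      rw [show (-(k * lam * Real.cos (Real.sqrt lam * t))) • φ
          + (k * Real.cos (Real.sqrt lam * t) * lam) • φ = 0 by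
        rw [← add_smul]; ring_nf; simp]
      rw [zero_add]
  · intro t
    have harg : Real.sqrt lam * (t + π / Real.sqrt lam) = Real.sqrt lam * t + π := by
      field_simp
    constructor
    · rw [hu_def, hu_def, harg, Real.cos_add_pi,
        show k * -Real.cos (Real.sqrt lam * t) = -(k * Real.cos (Real.sqrt lam * t)) from by
          ring, neg_smul]
    · rw [hh_def, hh_def, harg, Real.sin_add_pi]
      rw [show (-(k * Real.sqrt lam * -Real.sin (Real.sqrt lam * t))) • φ
          = -((-(k * Real.sqrt lam * Real.sin (Real.sqrt lam * t))) • φ) by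
        rw [← neg_smul]; ring_nf]
      exact hg_odd _
  · have hb : BddAbove (Set.range fun t : ℝ => ‖u' t‖ ^ 2 + ‖u t‖ ^ 2) := by
      refine ⟨(k * Real.sqrt lam * ‖φ‖) ^ 2 + (k * ‖φ‖) ^ 2, ?_⟩
      rintro x ⟨t, rfl⟩
      have h1 : ‖u' t‖ ≤ k * Real.sqrt lam * ‖φ‖ := by
        rw [hu'_def, norm_smul]
        have : |(-(k * Real.sqrt lam * Real.sin (Real.sqrt lam * t)))|
            ≤ k * Real.sqrt lam := by
          rw [abs_neg, abs_mul, abs_of_nonneg (by positivity : (0:ℝ) ≤ k * Real.sqrt lam)]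
          simpa using mul_le_mul_of_nonneg_left (abs_sin_le_one (Real.sqrt lam * t))
            (by positivity : (0:ℝ) ≤ k * Real.sqrt lam)
        exact mul_le_mul_of_nonneg_right this (norm_nonneg φ)
      have h2 : ‖u t‖ ≤ k * ‖φ‖ := by
        rw [hu_def, norm_smul]
        have : |k * Real.cos (Real.sqrt lam * t)| ≤ k := by
          rw [abs_mul, abs_of_pos hk]
          simpa using mul_le_mul_of_nonneg_left (abs_cos_le_one (Real.sqrt lam * t)) hk.le
        exact mul_le_mul_of_nonneg_right this (norm_nonneg φ)
      have hn1 : (0:ℝ) ≤ ‖u' t‖ := norm_nonneg _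
      have hn2 : (0:ℝ) ≤ ‖u t‖ := norm_nonneg _
      dsimp only
      nlinarith
    have h0 : ‖u' 0‖ ^ 2 + ‖u 0‖ ^ 2 = k ^ 2 * ‖φ‖ ^ 2 := by
      rw [hu'_def, hu_def]
      simp [norm_smul, abs_of_pos hk, mul_pow]
    calc k ^ 2 * ‖φ‖ ^ 2 = ‖u' 0‖ ^ 2 + ‖u 0‖ ^ 2 := h0.symm
      _ ≤ ⨆ t : ℝ, ‖u' t‖ ^ 2 + ‖u t‖ ^ 2 := le_ciSup hb 0
  · intro hgrow t
    rw [hh_def]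
    refine (hgrow _).trans ?_
    gcongr
    · rw [norm_smul, Real.norm_eq_abs, abs_neg, abs_mul,
        abs_of_nonneg (by positivity : (0:ℝ) ≤ k * Real.sqrt lam)]
      have hb : k * Real.sqrt lam * |Real.sin (Real.sqrt lam * t)| ≤ k * Real.sqrt lam := by
        simpa using mul_le_mul_of_nonneg_left (abs_sin_le_one (Real.sqrt lam * t))
          (by positivity : (0:ℝ) ≤ k * Real.sqrt lam)
      exact mul_le_mul_of_nonneg_right hb (norm_nonneg φ)
end
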